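/- arXiv:2012.09824 — 11 statements merged into one kernel-verified Lean document; each statement's English description precedes it below -/
import Mathlib

section
/- For every k ≥ 2 and every tight k-tree T on n ≥ k vertices, there exists a k-graph H on n vertices which does not contain T and satisfies δ_{k−1}(H) ≥ ⌊n/2⌋ − (2^k + k − 1). -/
open Finset

attribute [local instance] Classical.propDecidable

variable {α : Type*}

/-- The degree of a vertex `v` in a hypergraph `T`: the number of edges containing `v`. -/
def vdeg [DecidableEq α] (T : Finset (Finset α)) (v : α) : ℕ :=
  (T.filter fun e => v ∈ e).card

/-- The vertex set of a hypergraph: the union of its edges. -/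
def hverts [DecidableEq α] (T : Finset (Finset α)) : Finset α := T.sup id

/-- The maximum 1-degree of a hypergraph. -/
def hmaxDeg [DecidableEq α] (T : Finset (Finset α)) : ℕ := (hverts T).sup (vdeg T)

/-- `es` is a valid ordering of the edges of a tight `k`-tree: every edge is a `k`-set, and
every edge except the first contains a vertex `v` not in any previous edge with the rest of
the edge contained in some previous edge. -/
def ValidOrdering [DecidableEq α] (k : ℕ) (es : List (Finset α)) : Prop :=
  (∀ e ∈ es, e.card = k) ∧
  ∀ i, 0 < i → i < es.length →
    ∃ v ∈ es.getD i ∅,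
      (∀ j, j < i → v ∉ es.getD j ∅) ∧
      ∃ j, j < i ∧ (es.getD i ∅) \ {v} ⊆ es.getD j ∅

/-- `T` is a tight `k`-tree: its edges admit a valid ordering. -/
def IsTightTree [DecidableEq α] (k : ℕ) (T : Finset (Finset α)) : Prop :=
  ∃ es : List (Finset α), es ≠ [] ∧ es.Nodup ∧ es.toFinset = T ∧ ValidOrdering k es

/-- `f` belongs to the shadow of the `k`-graph `H`. -/
def InShadow [DecidableEq α] (k : ℕ) (H : Finset (Finset α)) (f : Finset α) : Prop :=
  f.card = k - 1 ∧ ∃ e ∈ H, f ⊆ e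

/-- `H` contains (a copy of) `T`. -/
def Contains {β : Type*} [DecidableEq α] [DecidableEq β]
    (H : Finset (Finset α)) (T : Finset (Finset β)) : Prop :=
  ∃ φ : β → α, Function.Injective φ ∧ ∀ e ∈ T, e.image φ ∈ H

/-!
Let `H` be the `k`-graph of all `k`-sets meeting a fixed vertex set `A` in an odd number of
vertices. A copy of `T` in `H` pulls `A` back to a set of the same size meeting every edge of `T`
oddly. Consecutive edges of a valid ordering have the form `f ∪ {v}` and `f ∪ {w}`, and oddness of
both intersections forces `v ∈ A ↔ w ∈ A`; hence such a set is determined by its trace on the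
first edge, and at most `2^k` sizes occur. Choosing `|A|` among the `2^k + 1` sizes just below
`n/2` avoiding these gives a `T`-free `H`. A `(k-1)`-set `S` extends to an edge of `H` by every
vertex of `A \ S` or of `Aᶜ \ S`, according to the parity of `|S ∩ A|`, which gives the codegree.
-/

theorem List.getD_mem {β : Type*} {l : List β} (d : β) {i : ℕ} (hi : i < l.length) :
    l.getD i d ∈ l := by
  rw [l.getD_eq_getElem d hi]
  exact l.getElem_mem hi

variable {V : Type*} [DecidableEq V]

theorem card_insert_inter_of_notMem {v : V} {s : Finset V} (A : Finset V) (hv : v ∉ s) :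
    #(insert v s ∩ A) = #(s ∩ A) + if v ∈ A then 1 else 0 := by
  by_cases hvA : v ∈ A
  · rw [insert_inter_of_mem hvA, card_insert_of_notMem fun h => hv (mem_inter.1 h).1, if_pos hvA]
  · rw [insert_inter_of_notMem hvA, if_neg hvA, Nat.add_zero]

theorem odd_card_insert_inter_iff {v : V} {s : Finset V} (A : Finset V) (hv : v ∉ s) :
    Odd #(insert v s ∩ A) ↔ (v ∈ A ↔ Even #(s ∩ A)) := by
  rw [card_insert_inter_of_notMem A hv]
  by_cases hvA : v ∈ A <;> simp [hvA, Nat.odd_add_one]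

def MeetsOddly (T : Finset (Finset V)) (A : Finset V) : Prop :=
  ∀ e ∈ T, Odd #(e ∩ A)

namespace ValidOrdering

variable {k : ℕ} {es : List (Finset V)}

theorem exists_eq_insert (h : ValidOrdering k es) {i : ℕ} (hi₀ : 0 < i) (hi : i < es.length) :
    ∃ j < i, ∃ f : Finset V, ∃ v ∉ f, ∃ w ∉ f,
      es.getD i ∅ = insert v f ∧ es.getD j ∅ = insert w f := by
  obtain ⟨v, hv, -, j, hji, hsub⟩ := h.2 i hi₀ hi
  rw [sdiff_singleton_eq_erase] at hsub
  have hcard : #((es.getD i ∅).erase v) + 1 = #(es.getD j ∅) := by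
    rw [card_erase_add_one hv, h.1 _ (List.getD_mem ∅ hi), h.1 _ (List.getD_mem ∅ (hji.trans hi))]
  obtain ⟨w, hw, hwj⟩ := exists_eq_insert_iff.2 ⟨hsub, hcard⟩
  exact ⟨j, hji, _, v, notMem_erase v _, w, hw, (insert_erase hv).symm, hwj.symm⟩

theorem mem_iff_mem_of_odd (h : ValidOrdering k es) {A B : Finset V}
    (hA : ∀ e ∈ es, Odd #(e ∩ A)) (hB : ∀ e ∈ es, Odd #(e ∩ B))
    (h₀ : ∀ v ∈ es.getD 0 ∅, (v ∈ A ↔ v ∈ B)) :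
    ∀ i < es.length, ∀ v ∈ es.getD i ∅, (v ∈ A ↔ v ∈ B) := by
  intro i
  induction i using Nat.strong_induction_on with
  | _ i ih =>
    intro hi v hv
    rcases Nat.eq_zero_or_pos i with rfl | hi₀
    · exact h₀ v hv
    obtain ⟨j, hji, f, v', hv'f, w, hwf, hei, hej⟩ := h.exists_eq_insert hi₀ hi
    have hj : j < es.length := hji.trans hi
    have ih_j := ih j hji hj
    rw [hei, mem_insert] at hv
    rcases hv with rfl | hvf
    · have hodd {C : Finset V} (hC : ∀ e ∈ es, Odd #(e ∩ C)) : v ∈ C ↔ w ∈ C := by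
        have hi' := hC _ (List.getD_mem ∅ hi)
        have hj' := hC _ (List.getD_mem ∅ hj)
        rw [hei, odd_card_insert_inter_iff C hv'f] at hi'
        rw [hej, odd_card_insert_inter_iff C hwf] at hj'
        exact hi'.trans hj'.symm
      exact (hodd hA).trans ((ih_j w (hej ▸ mem_insert_self w f)).trans (hodd hB).symm)
    · exact ih_j v (hej ▸ mem_insert_of_mem hvf)

end ValidOrdering

theorem IsTightTree.nonempty {k : ℕ} {T : Finset (Finset V)} (hT : IsTightTree k T) :
    T.Nonempty := by
  obtain ⟨es, hne, -, rfl, -⟩ := hT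
  exact List.toFinset_nonempty_iff es |>.2 hne

theorem IsTightTree.card_filter_meetsOddly_le [Fintype V] {k : ℕ} {T : Finset (Finset V)}
    (hT : IsTightTree k T) (hspan : hverts T = univ) :
    #(univ.filter (MeetsOddly T)) ≤ 2 ^ k := by
  obtain ⟨es, hne, -, hesT, hvo⟩ := hT
  have hlen : 0 < es.length := List.length_pos_iff.2 hne
  have he₀ : #(es.getD 0 ∅) = k := hvo.1 _ (List.getD_mem ∅ hlen)
  rw [← he₀, ← card_powerset]
  refine card_le_card_of_injOn (· ∩ es.getD 0 ∅) (fun A _ => by simp) ?_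
  intro A hA B hB hAB
  simp only [coe_filter, mem_univ, true_and, Set.mem_ofPred_eq, MeetsOddly, ← hesT,
    List.mem_toFinset] at hA hB hAB
  ext v
  obtain ⟨e, he, hve⟩ := mem_sup.1 (hspan ▸ mem_univ v : v ∈ hverts T)
  obtain ⟨i, hi, rfl⟩ := List.mem_iff_getElem.1 (List.mem_toFinset.1 (hesT ▸ he))
  refine hvo.mem_iff_mem_of_odd hA hB (fun u hu => ?_) i hi v ?_
  · simpa only [mem_inter, hu, and_true, eq_iff_iff] using congrArg (u ∈ ·) hAB
  · rwa [List.getD_eq_getElem es ∅ hi]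

def oddCutGraph [Fintype V] (k : ℕ) (A : Finset V) : Finset (Finset V) :=
  (univ.powersetCard k).filter fun e => Odd #(e ∩ A)

section OddCutGraph

variable [Fintype V] {k : ℕ} {A : Finset V}

theorem mem_oddCutGraph {e : Finset V} : e ∈ oddCutGraph k A ↔ #e = k ∧ Odd #(e ∩ A) := by
  simp [oddCutGraph, mem_powersetCard]

theorem card_sdiff_le_card_filter_subset_oddCutGraph {S B : Finset V}
    (hB : ∀ v ∈ B, v ∉ S → Odd #(insert v S ∩ A)) :
    #(B \ S) ≤ #((oddCutGraph (#S + 1) A).filter (S ⊆ ·)) := by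
  refine card_le_card_of_injOn (insert · S) (fun v hv => ?_) (fun v hv w hw hvw => ?_)
  · obtain ⟨hvB, hvS⟩ := mem_sdiff.1 hv
    exact mem_filter.2
      ⟨mem_oddCutGraph.2 ⟨card_insert_of_notMem hvS, hB v hvB hvS⟩, subset_insert v S⟩
  · exact (insert_inj (mem_sdiff.1 (mem_coe.1 hv)).2).1 hvw

theorem min_card_sub_le_card_filter_subset_oddCutGraph (S : Finset V) :
    min #A #Aᶜ - #S ≤ #((oddCutGraph (#S + 1) A).filter (S ⊆ ·)) := by
  by_cases hS : Even #(S ∩ A)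
  · refine le_trans ?_ (card_sdiff_le_card_filter_subset_oddCutGraph (B := A) fun v hv hvS => ?_)
    · exact (Nat.sub_le_sub_right (min_le_left _ _) _).trans (le_card_sdiff S A)
    · exact (odd_card_insert_inter_iff A hvS).2 (iff_of_true hv hS)
  · refine le_trans ?_ (card_sdiff_le_card_filter_subset_oddCutGraph (B := Aᶜ) fun v hv hvS => ?_)
    · exact (Nat.sub_le_sub_right (min_le_right _ _) _).trans (le_card_sdiff S Aᶜ)
    · exact (odd_card_insert_inter_iff A hvS).2 (iff_of_false (mem_compl.1 hv) hS)

theorem Contains.exists_meetsOddly_card_eq {T : Finset (Finset V)}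
    (h : Contains (oddCutGraph k A) T) : ∃ B, MeetsOddly T B ∧ #B = #A := by
  obtain ⟨φ, hφ, hmap⟩ := h
  have hpull (e : Finset V) : (e ∩ univ.filter (φ · ∈ A)).image φ = e.image φ ∩ A := by
    rw [inter_filter, inter_univ, ← filter_mem_eq_inter, filter_image]
  refine ⟨univ.filter (φ · ∈ A), fun e he => ?_, ?_⟩
  · rw [← card_image_of_injective _ hφ, hpull]
    exact (mem_oddCutGraph.1 (hmap e he)).2
  · rw [← card_image_of_injective _ hφ, ← univ_inter (univ.filter _), hpull,
      image_univ_of_surjective (Finite.injective_iff_surjective.1 hφ), univ_inter]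

end OddCutGraph

theorem exists_mem_Icc_notMem {s : Finset ℕ} {t m : ℕ} (hs : #s ≤ t) (htm : t ≤ m) :
    ∃ a ∈ Icc (m - t) m, a ∉ s :=
  exists_mem_notMem_of_card_lt_card (by rw [Nat.card_Icc]; omega)

theorem extremal_example_general (k : ℕ) (hk : 2 ≤ k) (n : ℕ)
    (T : Finset (Finset (Fin n))) (hT : IsTightTree k T) (hTspan : (hverts T).card = n) :
    ∃ H : Finset (Finset (Fin n)),
      (∀ e ∈ H, e.card = k) ∧
      (∀ S : Finset (Fin n), S.card = k - 1 →
        n / 2 - (2 ^ k + k - 1) ≤ (H.filter fun e => S ⊆ e).card) ∧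
      ¬ Contains H T := by
  by_cases hsmall : n / 2 ≤ 2 ^ k + k - 1
  · refine ⟨∅, by simp, fun S _ => by simp [Nat.sub_eq_zero_of_le hsmall], ?_⟩
    rintro ⟨φ, -, hmap⟩
    obtain ⟨e, he⟩ := hT.nonempty
    exact notMem_empty _ (hmap e he)
  have hspan : hverts T = univ := eq_univ_of_card _ (by rw [hTspan, Fintype.card_fin])
  obtain ⟨a, ha, hbad⟩ := exists_mem_Icc_notMem (m := n / 2)
    (card_image_le.trans (hT.card_filter_meetsOddly_le hspan)) (by omega)
  rw [mem_Icc] at ha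
  obtain ⟨A, -, hA⟩ := exists_subset_card_eq (s := (univ : Finset (Fin n))) (n := a)
    (by simp only [card_univ, Fintype.card_fin]; omega)
  refine ⟨oddCutGraph k A, fun e he => (mem_oddCutGraph.1 he).1, fun S hS => ?_, fun hc => ?_⟩
  · have hAc : #Aᶜ = n - a := by rw [card_compl, Fintype.card_fin, hA]
    have hkS : #S + 1 = k := by omega
    calc n / 2 - (2 ^ k + k - 1) ≤ min #A #Aᶜ - #S := by omega
      _ ≤ _ := hkS ▸ min_card_sub_le_card_filter_subset_oddCutGraph S
  · obtain ⟨B, hB, hBA⟩ := hc.exists_meetsOddly_card_eq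
    exact hbad (mem_image.2 ⟨B, by simpa using hB, hBA.trans hA⟩)

/-- For every `k ≥ 2` and every tight `k`-tree `T` on `n ≥ k` vertices there is
a `k`-graph `H` on `n` vertices not containing `T`, with minimum codegree at least
`⌊n/2⌋ − (2^k + k − 1)`. -/
theorem extremal_example (k : ℕ) (hk : 2 ≤ k) (n : ℕ) (hn : k ≤ n)
    (T : Finset (Finset (Fin n))) (hT : IsTightTree k T) (hTspan : (hverts T).card = n) :
    ∃ H : Finset (Finset (Fin n)),
      (∀ e ∈ H, e.card = k) ∧
      (∀ S : Finset (Fin n), S.card = k - 1 →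
        n / 2 - (2 ^ k + k - 1) ≤ (H.filter fun e => S ⊆ e).card) ∧
      ¬ Contains H T :=
  extremal_example_general k hk n T hT hTspan
end

section
/- Let k, n be integers with n ≥ k ≥ 2, let A and B be disjoint sets with |A ∪ B| = n, and let H(A,B) be the k-graph on A ∪ B whose edges are all k-subsets e of A ∪ B with |e ∩ A| ≢ ⌊k/2⌋ (mod 2). Let T be a k-partite tight k-tree with unique k-partition V_1 ∪ ⋯ ∪ V_k, and let φ: V(T) → A ∪ B be an embedding of T in H(A,B). Then for each i ∈ [k], either φ(V_i) ⊆ A or φ(V_i) ⊆ B. -/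
open Finset

attribute [local instance] Classical.propDecidable

variable {α : Type*}

/-- Let `n ≥ k ≥ 2`, let `A, B` be disjoint with `|A ∪ B| = n`, and let
`H(A,B)` consist of all `k`-subsets `e` of `A ∪ B` with `|e ∩ A| ≢ ⌊k/2⌋ (mod 2)`. If `T` is a
`k`-partite tight `k`-tree with `k`-partition `V_1, …, V_k` and `φ` is an embedding of `T` in
`H(A,B)`, then each `φ(V_i)` is contained in `A` or in `B`. -/
theorem hab_embedding {β : Type*} [DecidableEq α] [DecidableEq β]
    (k n : ℕ) (hk : 2 ≤ k) (hn : k ≤ n)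
    (A B : Finset α) (hdisj : Disjoint A B) (hcard : (A ∪ B).card = n)
    (T : Finset (Finset β)) (hT : IsTightTree k T)
    (P : Fin k → Finset β)
    (hsub : ∀ i, P i ⊆ hverts T)
    (hPdisj : ∀ i j, i ≠ j → Disjoint (P i) (P j))
    (hcover : ∀ v ∈ hverts T, ∃ i, v ∈ P i)
    (hedgeP : ∀ e ∈ T, ∀ i, (e ∩ P i).card = 1)
    (φ : β → α) (hinj : Set.InjOn φ ↑(hverts T))
    (hhom : ∀ e ∈ T, e.image φ ∈
      ((A ∪ B).powersetCard k).filter fun e => (e ∩ A).card % 2 ≠ (k / 2) % 2) :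
    ∀ i, (P i).image φ ⊆ A ∨ (P i).image φ ⊆ B := by
  obtain ⟨es, hne, hnd, hesT, hval⟩ := hT
  have hmemEs : ∀ j, j < es.length → es.getD j ∅ ∈ es := by
    intro j hj
    rw [List.getD_eq_getElem _ _ hj]
    exact List.getElem_mem hj
  have hmemT : ∀ j, j < es.length → es.getD j ∅ ∈ T := by
    intro j hj
    rw [← hesT, List.mem_toFinset]
    exact hmemEs j hj
  have hlen : ∀ m (u : β), u ∈ es.getD m ∅ → m < es.length := by
    intro m u hu
    by_contra h
    rw [List.getD_eq_default _ _ (le_of_not_gt h)] at hu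
    exact absurd hu (Finset.notMem_empty u)
  have hvert : ∀ {x : β} {e : Finset β}, e ∈ T → x ∈ e → x ∈ hverts T := by
    intro x e he hx
    exact Finset.mem_sup.mpr ⟨e, he, hx⟩
  have parity : ∀ e ∈ T, ((e.image φ) ∩ A).card % 2 ≠ (k / 2) % 2 :=
    fun e he => (Finset.mem_filter.mp (hhom e he)).2
  have hsubAB : ∀ e ∈ T, e.image φ ⊆ A ∪ B := by
    intro e he
    exact (Finset.mem_powersetCard.mp (Finset.mem_filter.mp (hhom e he)).1).1
  have hcardins : ∀ (f : Finset β) (v : β), (∀ x ∈ f, x ∈ hverts T) → v ∈ hverts T → v ∉ f →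
      (((insert v f).image φ ∩ A).card = (f.image φ ∩ A).card + if φ v ∈ A then 1 else 0) := by
    intro f v hf hv hvf
    have hφv : φ v ∉ f.image φ := by
      intro h
      obtain ⟨x, hx, hxe⟩ := Finset.mem_image.mp h
      exact hvf (hinj (hf x hx) hv hxe ▸ hx)
    rw [Finset.image_insert]
    by_cases hA : φ v ∈ A
    · rw [if_pos hA, Finset.insert_inter_of_mem hA,
        Finset.card_insert_of_notMem (fun h => hφv (Finset.mem_inter.mp h).1)]
    · rw [if_neg hA, Finset.insert_inter_of_notMem hA, Nat.add_zero]
  have swap : ∀ m (i : Fin k) (u : β), 0 < m → u ∈ P i → u ∈ es.getD m ∅ →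
      ∃ u', u' ∈ P i ∧ (∃ j, j < m ∧ u' ∈ es.getD j ∅) ∧ (φ u ∈ A ↔ φ u' ∈ A) := by
    intro m i u hm hui hum
    have hmlen := hlen m u hum
    obtain ⟨v, hv, hvnew, j, hjm, hsub'⟩ := hval.2 m hm hmlen
    by_cases huv : u = v
    · subst huv
      set e := es.getD m ∅ with he_def
      set ej := es.getD j ∅ with hej_def
      have hjlen : j < es.length := lt_trans hjm hmlen
      have heT : e ∈ T := hmemT m hmlen
      have hejT : ej ∈ T := hmemT j hjlen
      have hcard_e : e.card = k := hval.1 _ (hmemEs m hmlen)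
      have hcard_ej : ej.card = k := hval.1 _ (hmemEs j hjlen)
      have hPe1 : (e ∩ P i).card = 1 := hedgeP e heT i
      have huin : u ∈ e ∩ P i := Finset.mem_inter.mpr ⟨hum, hui⟩
      obtain ⟨v', hv'eq⟩ := Finset.card_eq_one.mp (hedgeP ej hejT i)
      have hv'in : v' ∈ ej ∩ P i := by rw [hv'eq]; exact Finset.mem_singleton_self v'
      have hv'ej : v' ∈ ej := (Finset.mem_inter.mp hv'in).1
      have hv'P : v' ∈ P i := (Finset.mem_inter.mp hv'in).2
      refine ⟨v', hv'P, ⟨j, hjm, hv'ej⟩, ?_⟩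
      set f := e \ {u} with hf_def
      have huf : u ∉ f := by simp [hf_def]
      have hins_e : insert u f = e := by
        rw [hf_def, Finset.sdiff_singleton_eq_erase, Finset.insert_erase hum]
      have hv'f : v' ∉ f := by
        intro h
        have h1 : v' ∈ e ∩ P i := Finset.mem_inter.mpr ⟨Finset.sdiff_subset h, hv'P⟩
        have h2 : v' = u := Finset.card_le_one.mp (le_of_eq hPe1) _ h1 _ huin
        exact huf (h2 ▸ h)
      have hcard_f : f.card = k - 1 := by
        rw [hf_def, Finset.card_sdiff_of_subset (Finset.singleton_subset_iff.mpr hum),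
          Finset.card_singleton, hcard_e]
      have hins_ej : insert v' f = ej := by
        apply Finset.eq_of_subset_of_card_le
        · intro x hx
          rcases Finset.mem_insert.mp hx with rfl | hx
          · exact hv'ej
          · exact hsub' hx
        · rw [Finset.card_insert_of_notMem hv'f, hcard_f, hcard_ej]
          omega
      have key1 := hcardins f u (fun x hx => hvert heT (Finset.sdiff_subset hx))
        (hvert heT hum) huf
      have key2 := hcardins f v' (fun x hx => hvert hejT (hsub' hx))
        (hvert hejT hv'ej) hv'f
      rw [hins_e] at key1
      rw [hins_ej] at key2
      have p1 := parity e heT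
      have p2 := parity ej hejT
      rw [key1] at p1
      rw [key2] at p2
      constructor <;> intro h <;> by_contra h'
      · rw [if_pos h] at p1
        rw [if_neg h'] at p2
        omega
      · rw [if_neg h'] at p1
        rw [if_pos h] at p2
        omega
    · have huf : u ∈ es.getD m ∅ \ {v} :=
        Finset.mem_sdiff.mpr ⟨hum, fun h => huv (Finset.mem_singleton.mp h)⟩
      exact ⟨u, hui, ⟨j, hjm, hsub' huf⟩, Iff.rfl⟩
  have key : ∀ m (i : Fin k) (u w : β), u ∈ P i → w ∈ P i →
      (∃ j, j < m ∧ u ∈ es.getD j ∅) → (∃ j, j < m ∧ w ∈ es.getD j ∅) →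
      (φ u ∈ A ↔ φ w ∈ A) := by
    intro m
    induction m with
    | zero => rintro i u w _ _ ⟨j, hj, _⟩ _; omega
    | succ m ih =>
      rintro i u w hu hw ⟨ju, hju, huj⟩ ⟨jw, hjw, hwj⟩
      rcases Nat.eq_zero_or_pos m with hm | hm
      · subst hm
        have hju0 : ju = 0 := by omega
        have hjw0 : jw = 0 := by omega
        subst hju0; subst hjw0
        have h0len := hlen 0 u huj
        have heT := hmemT 0 h0len
        have : u = w := Finset.card_le_one.mp (le_of_eq (hedgeP _ heT i))
          _ (Finset.mem_inter.mpr ⟨huj, hu⟩) _ (Finset.mem_inter.mpr ⟨hwj, hw⟩)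
        rw [this]
      · have hu' : ∃ u', u' ∈ P i ∧ (∃ j, j < m ∧ u' ∈ es.getD j ∅) ∧
            (φ u ∈ A ↔ φ u' ∈ A) := by
          rcases Nat.lt_or_ge ju m with h | h
          · exact ⟨u, hu, ⟨ju, h, huj⟩, Iff.rfl⟩
          · have hjum : ju = m := by omega
            subst hjum
            exact swap ju i u hm hu huj
        have hw' : ∃ w', w' ∈ P i ∧ (∃ j, j < m ∧ w' ∈ es.getD j ∅) ∧
            (φ w ∈ A ↔ φ w' ∈ A) := by
          rcases Nat.lt_or_ge jw m with h | h
          · exact ⟨w, hw, ⟨jw, h, hwj⟩, Iff.rfl⟩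
          · have hjwm : jw = m := by omega
            subst hjwm
            exact swap jw i w hm hw hwj
        obtain ⟨u', hu'P, hu'mem, hu'iff⟩ := hu'
        obtain ⟨w', hw'P, hw'mem, hw'iff⟩ := hw'
        exact hu'iff.trans ((ih i u' w' hu'P hw'P hu'mem hw'mem).trans hw'iff.symm)
  intro i
  by_cases hPe : (P i).Nonempty
  · obtain ⟨u, hu⟩ := hPe
    have hpref : ∀ w ∈ P i, ∃ j, j < es.length ∧ w ∈ es.getD j ∅ := by
      intro w hw
      obtain ⟨e', he'T, hwe'⟩ := Finset.mem_sup.mp (hsub i hw)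
      rw [← hesT, List.mem_toFinset] at he'T
      obtain ⟨j, hj, hje⟩ := List.mem_iff_getElem.mp he'T
      refine ⟨j, hj, ?_⟩
      rw [List.getD_eq_getElem _ _ hj, hje]
      exact hwe'
    have hmemAll : ∀ w ∈ P i, φ w ∈ A ∪ B := by
      intro w hw
      obtain ⟨e', he'T, hwe'⟩ := Finset.mem_sup.mp (hsub i hw)
      exact hsubAB e' he'T (Finset.mem_image_of_mem φ hwe')
    by_cases hA : φ u ∈ A
    · left
      intro x hx
      obtain ⟨w, hw, rfl⟩ := Finset.mem_image.mp hx
      exact (key es.length i w u hw hu (hpref w hw) (hpref u hu)).mpr hA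
    · right
      intro x hx
      obtain ⟨w, hw, rfl⟩ := Finset.mem_image.mp hx
      have hwA : φ w ∉ A := fun h =>
        hA ((key es.length i w u hw hu (hpref w hw) (hpref u hu)).mp h)
      rcases Finset.mem_union.mp (hmemAll w hw) with h | h
      · exact absurd h hwA
      · exact h
  · left
    intro x hx
    rw [Finset.not_nonempty_iff_eq_empty.mp hPe] at hx
    simp at hx
end

section
/- Let k ≥ 2, let T be a tight k-tree, and let v be a vertex of T. Then the restricted link graph T(v) is a tight (k−1)-tree on at most Δ_1(T) + k − 1 vertices. -/
open Finset

attribute [local instance] Classical.propDecidable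

variable {α : Type*}

/-- The restricted link graph of `v` with respect to `T`: the `(k−1)`-graph whose edges are the
sets `e \ {v}` for edges `e` of `T` containing `v`. -/
def linkGraph [DecidableEq α] (T : Finset (Finset α)) (v : α) : Finset (Finset α) :=
  (T.filter fun e => v ∈ e).image fun e => e.erase v

/-!
In a valid ordering every edge after the first adds exactly one new vertex, so a tight `m`-tree
with `t` edges has at most `m + t - 1` vertices.

Keeping only the edges through `v` and deleting `v` from them turns a valid `k`-ordering of `T`
into a valid `(k - 1)`-ordering of `T(v)`: the first edge through `v` starts the new ordering;
for a later edge `e ∋ v` the new vertex `w` of `e` differs from `v`, since `v` already appeared,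
so the earlier edge containing `e \ {w}` also contains `v`. This ordering has `deg v ≤ Δ₁(T)`
edges, which gives the vertex bound.
-/

namespace List

variable {β : Type*}

theorem exists_lt_getD_iff_exists_mem_take (l : List β) (d : β) {i : ℕ} (hi : i ≤ l.length)
    (P : β → Prop) : (∃ j < i, P (l.getD j d)) ↔ ∃ x ∈ l.take i, P x := by
  constructor
  · rintro ⟨j, hj, hP⟩
    rw [getD_eq_getElem _ _ (by omega)] at hP
    exact ⟨l[j], mem_take_iff_getElem.2 ⟨j, by omega, rfl⟩, hP⟩
  · rintro ⟨x, hx, hP⟩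
    obtain ⟨j, hj, rfl⟩ := mem_take_iff_getElem.1 hx
    exact ⟨j, by omega, by rwa [getD_eq_getElem _ _ (by omega)]⟩

theorem forall_lt_getD_iff_forall_mem_take (l : List β) (d : β) {i : ℕ} (hi : i ≤ l.length)
    (P : β → Prop) : (∀ j < i, P (l.getD j d)) ↔ ∀ x ∈ l.take i, P x := by
  simpa using (exists_lt_getD_iff_exists_mem_take l d hi (¬ P ·)).not

end List

section

variable [DecidableEq α]

def IsTightExtension (es : List (Finset α)) (e : Finset α) : Prop :=
  ∃ w ∈ e, (∀ f ∈ es, w ∉ f) ∧ ∃ f ∈ es, e.erase w ⊆ f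

theorem validOrdering_iff_take {k : ℕ} {es : List (Finset α)} :
    ValidOrdering k es ↔ (∀ e ∈ es, e.card = k) ∧
      ∀ i < es.length, 0 < i → IsTightExtension (es.take i) (es.getD i ∅) := by
  refine and_congr_right fun _ => forall_congr' fun i => ?_
  constructor
  · intro h hi hpos
    obtain ⟨w, hw, hnew, hold⟩ := h hpos hi
    refine ⟨w, hw, (es.forall_lt_getD_iff_forall_mem_take ∅ hi.le (w ∉ ·)).1 hnew, ?_⟩
    simpa [sdiff_singleton_eq_erase] using
      (es.exists_lt_getD_iff_exists_mem_take ∅ hi.le (es.getD i ∅ \ {w} ⊆ ·)).1 hold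
  · intro h hpos hi
    obtain ⟨w, hw, hnew, hold⟩ := h hi hpos
    refine ⟨w, hw, (es.forall_lt_getD_iff_forall_mem_take ∅ hi.le (w ∉ ·)).2 hnew, ?_⟩
    rw [sdiff_singleton_eq_erase]
    exact (es.exists_lt_getD_iff_exists_mem_take ∅ hi.le ((es.getD i ∅).erase w ⊆ ·)).2 hold

theorem validOrdering_nil (k : ℕ) : ValidOrdering k ([] : List (Finset α)) := by
  simp [validOrdering_iff_take]

theorem validOrdering_singleton_iff {k : ℕ} {e : Finset α} : ValidOrdering k [e] ↔ e.card = k := by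
  simp +contextual [validOrdering_iff_take]

theorem validOrdering_append_singleton_iff {k : ℕ} {es : List (Finset α)} {e : Finset α}
    (hes : es ≠ []) :
    ValidOrdering k (es ++ [e]) ↔ ValidOrdering k es ∧ e.card = k ∧ IsTightExtension es e := by
  have hpos : 0 < es.length := List.length_pos_iff.2 hes
  have hprefix : ∀ i < es.length, IsTightExtension ((es ++ [e]).take i) ((es ++ [e]).getD i ∅) ↔
      IsTightExtension (es.take i) (es.getD i ∅) := fun i hi => by
    rw [List.take_append_of_le_length hi.le, List.getD_append _ _ _ _ hi]
  have hlast : IsTightExtension ((es ++ [e]).take es.length) ((es ++ [e]).getD es.length ∅) ↔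
      IsTightExtension es e := by
    rw [List.take_left' rfl, List.getD_append_right _ _ _ _ le_rfl]
    simp
  simp only [validOrdering_iff_take, List.forall_mem_append, List.forall_mem_singleton,
    List.length_append, List.length_singleton, Nat.forall_lt_succ_right]
  simp +contextual only [hprefix, hlast, hpos, forall_const]
  tauto

theorem hverts_toFinset_append_singleton (es : List (Finset α)) (e : Finset α) :
    hverts (es ++ [e]).toFinset = hverts es.toFinset ∪ e := by
  simp [hverts, Finset.union_comm]

theorem IsTightExtension.card_hverts_append_le {es : List (Finset α)} {e : Finset α}
    (h : IsTightExtension es e) :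
    (hverts (es ++ [e]).toFinset).card ≤ (hverts es.toFinset).card + 1 := by
  obtain ⟨w, -, -, f, hf, hsub⟩ := h
  have hold : e.erase w ⊆ hverts es.toFinset :=
    hsub.trans (Finset.le_sup (f := id) (List.mem_toFinset.2 hf))
  calc (hverts (es ++ [e]).toFinset).card ≤ (insert w (hverts es.toFinset)).card := by
        rw [hverts_toFinset_append_singleton]
        exact Finset.card_le_card <| Finset.union_subset (Finset.subset_insert _ _)
          ((Finset.insert_erase_subset w e).trans (Finset.insert_subset_insert w hold))
    _ ≤ (hverts es.toFinset).card + 1 := Finset.card_insert_le _ _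

theorem ValidOrdering.card_hverts_le {m : ℕ} {es : List (Finset α)} (h : ValidOrdering m es)
    (hes : es ≠ []) : (hverts es.toFinset).card ≤ m + es.length - 1 := by
  induction es using List.reverseRecOn with
  | nil => exact absurd rfl hes
  | append_singleton es e ih =>
    rcases eq_or_ne es [] with rfl | hes'
    · simp [hverts, validOrdering_singleton_iff.1 h]
    · obtain ⟨hvo, -, hext⟩ := (validOrdering_append_singleton_iff hes').1 h
      have hprev := ih hvo hes'
      have hstep := hext.card_hverts_append_le
      have hlen := List.length_pos_iff.2 hes'
      simp only [List.length_append, List.length_singleton]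
      omega

def linkList (v : α) (es : List (Finset α)) : List (Finset α) :=
  (es.filter (v ∈ ·)).map (·.erase v)

theorem mem_linkList {v : α} {es : List (Finset α)} {f : Finset α} :
    f ∈ linkList v es ↔ ∃ e ∈ es, v ∈ e ∧ e.erase v = f := by
  simp [linkList, and_assoc]

theorem linkList_append_singleton (v : α) (es : List (Finset α)) (e : Finset α) :
    linkList v (es ++ [e]) = linkList v es ++ if v ∈ e then [e.erase v] else [] := by
  split_ifs with hv <;> simp [linkList, hv]

theorem linkList_eq_nil {v : α} {es : List (Finset α)} :
    linkList v es = [] ↔ ∀ e ∈ es, v ∉ e := by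
  simp [linkList]

theorem toFinset_linkList (v : α) (es : List (Finset α)) :
    (linkList v es).toFinset = linkGraph es.toFinset v := by
  ext f
  simp [mem_linkList, linkGraph, and_assoc]

theorem nodup_linkList {es : List (Finset α)} (h : es.Nodup) (v : α) :
    (linkList v es).Nodup := by
  refine (h.filter _).map_on fun e he e' he' => Finset.erase_injOn' v ?_ ?_ <;>
    simp_all

theorem length_linkList {es : List (Finset α)} (h : es.Nodup) (v : α) :
    (linkList v es).length = vdeg es.toFinset v := by
  rw [← List.toFinset_card_of_nodup (nodup_linkList h v), toFinset_linkList, linkGraph,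
    Finset.card_image_of_injOn, vdeg]
  exact (Finset.erase_injOn' v).mono fun e he => (Finset.mem_filter.1 he).2

theorem IsTightExtension.erase {es : List (Finset α)} {e : Finset α} {v : α}
    (h : IsTightExtension es e) (hve : v ∈ e) (hvs : ∃ g ∈ es, v ∈ g) :
    IsTightExtension (linkList v es) (e.erase v) := by
  obtain ⟨w, hw, hnew, f, hf, hsub⟩ := h
  obtain ⟨g, hg, hvg⟩ := hvs
  have hwv : w ≠ v := by rintro rfl; exact hnew g hg hvg
  have hvf : v ∈ f := hsub (Finset.mem_erase.2 ⟨hwv.symm, hve⟩)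
  refine ⟨w, Finset.mem_erase.2 ⟨hwv, hw⟩, ?_, f.erase v, mem_linkList.2 ⟨f, hf, hvf, rfl⟩, ?_⟩
  · rintro _ hf' hwf'
    obtain ⟨f', hf'es, -, rfl⟩ := mem_linkList.1 hf'
    exact hnew f' hf'es (Finset.mem_of_mem_erase hwf')
  · rw [Finset.erase_right_comm]
    exact Finset.erase_subset_erase v hsub

theorem validOrdering_linkList {k : ℕ} {es : List (Finset α)} (h : ValidOrdering k es) (v : α) :
    ValidOrdering (k - 1) (linkList v es) := by
  induction es using List.reverseRecOn with
  | nil => exact validOrdering_nil _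
  | append_singleton es e ih =>
    have hcard : v ∈ e → (e.erase v).card = k - 1 := fun hve => by
      rw [Finset.card_erase_of_mem hve, h.1 e (by simp)]
    rcases eq_or_ne es [] with rfl | hes
    · by_cases hve : v ∈ e
      · simpa [linkList, hve, validOrdering_singleton_iff] using hcard hve
      · simpa [linkList, hve] using validOrdering_nil (k - 1)
    obtain ⟨hvo, -, hext⟩ := (validOrdering_append_singleton_iff hes).1 h
    rw [linkList_append_singleton]
    split_ifs with hve
    · rcases eq_or_ne (linkList v es) [] with hnil | hnil
      · rw [hnil, List.nil_append, validOrdering_singleton_iff, hcard hve]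
      · have hvs : ∃ g ∈ es, v ∈ g := by simpa [linkList_eq_nil] using hnil
        exact (validOrdering_append_singleton_iff hnil).2 ⟨ih hvo, hcard hve, hext.erase hve hvs⟩
    · simpa using ih hvo

end

theorem link_graph_is_tight_tree_general [DecidableEq α] (k : ℕ)
    (T : Finset (Finset α)) (hT : IsTightTree k T) (v : α) (hv : v ∈ hverts T) :
    IsTightTree (k - 1) (linkGraph T v) ∧
    (hverts (linkGraph T v)).card ≤ hmaxDeg T + k - 1 := by
  obtain ⟨es, -, hnd, rfl, hvo⟩ := hT
  have hne : linkList v es ≠ [] := by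
    obtain ⟨e, he, hve⟩ := Finset.mem_sup.1 hv
    exact linkList_eq_nil.not.2 fun h => h e (List.mem_toFinset.1 he) hve
  have hlink := validOrdering_linkList hvo v
  refine ⟨⟨linkList v es, hne, nodup_linkList hnd v, toFinset_linkList v es, hlink⟩, ?_⟩
  have hbound := hlink.card_hverts_le hne
  rw [toFinset_linkList, length_linkList hnd] at hbound
  have hdeg : vdeg es.toFinset v ≤ hmaxDeg es.toFinset := Finset.le_sup hv
  omega

/-- If `T` is a tight `k`-tree (`k ≥ 2`) and `v` is a vertex of `T`, then the
restricted link graph `T(v)` is a tight `(k−1)`-tree on at most `Δ₁(T) + k − 1` vertices. -/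
theorem link_graph_is_tight_tree [DecidableEq α] (k : ℕ) (hk : 2 ≤ k)
    (T : Finset (Finset α)) (hT : IsTightTree k T) (v : α) (hv : v ∈ hverts T) :
    IsTightTree (k - 1) (linkGraph T v) ∧
    (hverts (linkGraph T v)).card ≤ hmaxDeg T + k - 1 :=
  link_graph_is_tight_tree_general k T hT v hv
end

section
/- Every rooted tight k-tree (T, r) with k ≥ 2 admits a layering, i.e. there exist m and a tuple L = (L_1, …, L_m) of sets such that {L_1, …, L_m} partitions V(T), |r ∩ L_i| = 1 for all i ∈ [k−1], |L_1| = 1, for each v ∈ L_{i+1} (1 ≤ i < m) there are w ∈ L_i and an edge e of T with {v, w} ⊆ e, and for each edge e of T there is j ∈ [m] such that |e ∩ L_i| = 1 for each j ≤ i < j + k. -/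
open Finset

attribute [local instance] Classical.propDecidable

variable {α : Type*}

/-- `(L 1, …, L m)` is a layering for the rooted tight `k`-tree `(T, r)`. -/
structure IsLayering [DecidableEq α] (k : ℕ) (T : Finset (Finset α)) (r : Finset α)
    (m : ℕ) (L : ℕ → Finset α) : Prop where
  /-- every layer is nonempty -/
  nonempty : ∀ i, 1 ≤ i → i ≤ m → (L i).Nonempty
  /-- every layer consists of vertices of `T` -/
  layer_subset : ∀ i, 1 ≤ i → i ≤ m → L i ⊆ hverts T
  /-- the layers are pairwise disjoint -/
  layer_disjoint : ∀ i j, 1 ≤ i → i ≤ m → 1 ≤ j → j ≤ m → i ≠ j → Disjoint (L i) (L j)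
  /-- the layers cover `V(T)` -/
  cover : ∀ v ∈ hverts T, ∃ i, 1 ≤ i ∧ i ≤ m ∧ v ∈ L i
  /-- `|r ∩ L i| = 1` for all `i ∈ [k−1]` -/
  root_inter : ∀ i, 1 ≤ i → i ≤ k - 1 → (r ∩ L i).card = 1
  /-- `|L 1| = 1` -/
  first_card : (L 1).card = 1
  /-- every vertex of `L (i+1)` shares an edge with some vertex of `L i` -/
  link : ∀ i, 1 ≤ i → i < m → ∀ v ∈ L (i + 1), ∃ w ∈ L i, ∃ e ∈ T, v ∈ e ∧ w ∈ e
  /-- every edge meets `k` consecutive layers, each exactly once -/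
  window : ∀ e ∈ T, ∃ j, 1 ≤ j ∧ j + (k - 1) ≤ m ∧ ∀ i, j ≤ i → i < j + k → (e ∩ L i).card = 1

/-! Grow the tree from an edge containing `r` (any edge of a tight tree can serve as the first
one). Label `r` by `1, …, k - 1` and the remaining vertex of that edge by `k`. Every later edge
replaces a vertex of an earlier edge, whose labels form a window of `k` consecutive integers, by a
new vertex; giving the new vertex the successor of one of the surviving labels makes the new edge
a window again. New labels are at least `2`, so label `1` stays unique, and the layers are the
label classes. -/

inductive IsTightTreeFrom [DecidableEq α] (k : ℕ) (e : Finset α) : Finset (Finset α) → Prop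
  | single : #e = k → IsTightTreeFrom k e {e}
  | grow {T f u v} : IsTightTreeFrom k e T → f ∈ T → u ∈ f → v ∉ hverts T →
      IsTightTreeFrom k e (insert (insert v (f.erase u)) T)

section Hypergraph

variable [DecidableEq α] {k : ℕ} {T : Finset (Finset α)} {e f : Finset α} {u v : α}

lemma mem_hverts : v ∈ hverts T ↔ ∃ e ∈ T, v ∈ e := by simp [hverts]

lemma subset_hverts (he : e ∈ T) : e ⊆ hverts T := fun _ hv => mem_hverts.2 ⟨e, he, hv⟩

@[simp] lemma hverts_singleton : hverts {e} = e := by simp [hverts]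

@[simp] lemma hverts_insert : hverts (insert e T) = e ∪ hverts T := by simp [hverts]

lemma card_insert_erase (hu : u ∈ f) (hv : v ∉ f) : #(insert v (f.erase u)) = #f := by
  rw [card_insert_of_notMem fun h => hv (mem_of_mem_erase h), card_erase_add_one hu]

namespace IsTightTreeFrom

lemma root_mem (h : IsTightTreeFrom k e T) : e ∈ T := by
  induction h with
  | single => exact mem_singleton_self e
  | grow _ _ _ _ ih => exact mem_insert_of_mem ih

lemma card_eq (h : IsTightTreeFrom k e T) : ∀ f ∈ T, #f = k := by
  induction h with
  | single he => simpa using he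
  | grow _ hf hu hv ih =>
    simp only [mem_insert, forall_eq_or_imp]
    exact ⟨(card_insert_erase hu fun h => hv (subset_hverts hf h)).trans (ih _ hf), ih⟩

lemma grow_from_new_edge (h : IsTightTreeFrom k f T) (hu : u ∈ f) (hv : v ∉ hverts T) :
    IsTightTreeFrom k (insert v (f.erase u)) (insert (insert v (f.erase u)) T) := by
  induction h generalizing v with
  | single hf =>
    rw [hverts_singleton] at hv
    have hvf : v ∉ f.erase u := fun h => hv (mem_of_mem_erase h)
    have hg : IsTightTreeFrom k (insert v (f.erase u)) {insert v (f.erase u)} :=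
      .single (card_insert_erase hu hv ▸ hf)
    have hu' : u ∉ hverts {insert v (f.erase u)} := by
      simp only [hverts_singleton, mem_insert, mem_erase, ne_eq, not_true_eq_false, false_and,
        or_false]
      exact fun h => hv (h ▸ hu)
    have := hg.grow (mem_singleton_self _) (mem_insert_self v _) hu'
    rwa [erase_insert hvf, insert_erase hu, pair_comm] at this
  | grow hT hg hw hx ih =>
    rw [hverts_insert, mem_union, mem_insert, not_or, not_or] at hv
    rw [insert_comm]
    refine (ih hv.2).grow (mem_insert_of_mem hg) hw ?_
    rw [hverts_insert, mem_union, mem_insert, not_or, not_or]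
    refine ⟨⟨fun h => hv.1.1 h.symm, fun h => hx ?_⟩, hx⟩
    exact subset_hverts hT.root_mem (mem_of_mem_erase h)

lemma reroot (h : IsTightTreeFrom k e T) (hf : f ∈ T) : IsTightTreeFrom k f T := by
  induction h generalizing f with
  | single he => rw [mem_singleton.1 hf]; exact .single he
  | grow _ hg hw hx ih =>
    rcases mem_insert.1 hf with rfl | hf
    · exact (ih hg).grow_from_new_edge hw hx
    · exact (ih hf).grow hg hw hx

end IsTightTreeFrom

end Hypergraph

section Ordering

variable [DecidableEq α] {k : ℕ}

lemma ValidOrdering.isTightTreeFrom_take {es : List (Finset α)} (h : ValidOrdering k es)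
    (h0 : 0 < es.length) :
    ∀ n, 1 ≤ n → n ≤ es.length → IsTightTreeFrom k es[0] (es.take n).toFinset := by
  have hcard (i : ℕ) (hi : i < es.length) : #es[i] = k := h.1 _ (List.getElem_mem hi)
  intro n hn
  induction n, hn using Nat.le_induction with
  | base => intro _; simpa [List.take_one, List.head?_eq_getElem?, h0] using .single (hcard 0 h0)
  | succ n hn ih =>
    intro hn'
    obtain ⟨v, hv, hnew, j, hj, hsub⟩ := h.2 n (by omega) hn'
    simp only [List.getD_eq_getElem _ _ hn', List.getD_eq_getElem _ _ (show j < es.length by omega)]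
      at hv hsub
    obtain ⟨u, hu, hfu⟩ : ∃ u ∉ es[n].erase v, insert u (es[n].erase v) = es[j] := by
      rw [exists_eq_insert_iff, card_erase_add_one hv, hcard n hn', hcard j (by omega)]
      exact ⟨by simpa [erase_eq] using hsub, rfl⟩
    have hedge : insert v (es[j].erase u) = es[n] := by
      rw [← hfu, erase_insert hu, insert_erase hv]
    have hnotin : v ∉ hverts (es.take n).toFinset := by
      simp only [mem_hverts, List.mem_toFinset, List.mem_take_iff_getElem]
      rintro ⟨_, ⟨i, hi, rfl⟩, hvi⟩
      have := hnew i (by omega)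
      rw [List.getD_eq_getElem _ _ (by omega)] at this
      exact this hvi
    have hf : es[j] ∈ (es.take n).toFinset := by
      simp only [List.mem_toFinset, List.mem_take_iff_getElem]
      exact ⟨j, by omega, rfl⟩
    have := (ih (by omega)).grow hf (hfu ▸ mem_insert_self u _) hnotin
    rw [hedge] at this
    rwa [List.take_add_one, List.getElem?_eq_getElem hn', List.toFinset_append, union_comm]

lemma IsTightTree.exists_isTightTreeFrom {T : Finset (Finset α)} (h : IsTightTree k T) :
    ∃ e, IsTightTreeFrom k e T := by
  obtain ⟨es, hne, -, rfl, hes⟩ := h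
  have h0 : 0 < es.length := List.length_pos_iff.2 hne
  exact ⟨_, by simpa using hes.isTightTreeFrom_take h0 es.length h0 le_rfl⟩

end Ordering

section Labeling

variable {k M : ℕ} {T : Finset (Finset α)} {r s e f : Finset α} {ℓ : α → ℕ} {u v : α}

lemma injOn_of_image_eq_Ico (hs : #s = k) {a : ℕ} (h : s.image ℓ = Ico a (a + k)) :
    Set.InjOn ℓ s :=
  injOn_of_card_image_eq (by rw [h, Nat.card_Ico, hs]; omega)

lemma card_filter_eq_one_of_injOn (hℓ : Set.InjOn ℓ s) {i : ℕ} (hi : i ∈ s.image ℓ) :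
    #(s.filter (ℓ · = i)) = 1 := by
  obtain ⟨v, hv, rfl⟩ := mem_image.1 hi
  refine card_eq_one.2 ⟨v, ext fun w => ?_⟩
  simp only [mem_filter, mem_singleton]
  exact ⟨fun ⟨hw, h⟩ => hℓ hw hv h, by rintro rfl; exact ⟨hv, rfl⟩⟩

variable [DecidableEq α]

lemma image_update_of_notMem (hv : v ∉ s) (ℓ : α → ℕ) (t : ℕ) :
    s.image (Function.update ℓ v t) = s.image ℓ :=
  image_congr fun _ hu => Function.update_of_ne (ne_of_mem_of_not_mem hu hv) _ _

lemma image_erase_of_injOn (hℓ : Set.InjOn ℓ f) (hu : u ∈ f) :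
    (f.erase u).image ℓ = (f.image ℓ).erase (ℓ u) := by
  ext c
  simp only [mem_image, mem_erase]
  constructor
  · rintro ⟨w, ⟨hwu, hw⟩, rfl⟩
    exact ⟨fun h => hwu (hℓ hw hu h), w, hw, rfl⟩
  · rintro ⟨hc, w, hw, rfl⟩
    exact ⟨w, ⟨fun h => hc (h ▸ rfl), hw⟩, rfl⟩

lemma exists_image_eq_Ico (s : Finset α) (a : ℕ) :
    ∃ ℓ : α → ℕ, s.image ℓ = Ico a (a + #s) := by
  induction s using Finset.induction_on with
  | empty => exact ⟨fun _ => a, by simp⟩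
  | insert x s hx ih =>
    obtain ⟨ℓ, hℓ⟩ := ih
    refine ⟨Function.update ℓ x (a + #s), ?_⟩
    rw [image_insert, Function.update_self, image_update_of_notMem hx, hℓ,
      card_insert_of_notMem hx, ← add_assoc, Nat.Ico_succ_right_eq_insert_Ico (by omega)]

/-- If the lowest point `a` is removed the window moves up by one, otherwise `b` is refilled. -/
lemma exists_insert_succ_erase_Ico (hk : 2 ≤ k) {a b : ℕ} (hb : b ∈ Ico a (a + k)) :
    ∃ c ∈ (Ico a (a + k)).erase b, ∃ a',
      insert (c + 1) ((Ico a (a + k)).erase b) = Ico a' (a' + k) := by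
  rw [mem_Ico] at hb
  rcases eq_or_lt_of_le hb.1 with rfl | hab
  · refine ⟨a + k - 1, ?_, a + 1, ?_⟩
    · simp only [mem_erase, mem_Ico]; omega
    · ext x; simp only [mem_insert, mem_erase, mem_Ico]; omega
  · refine ⟨b - 1, ?_, a, ?_⟩
    · simp only [mem_erase, mem_Ico]; omega
    · ext x; simp only [mem_insert, mem_erase, mem_Ico]; omega

structure IsLayerLabeling (k : ℕ) (T : Finset (Finset α)) (r : Finset α) (ℓ : α → ℕ)
    (M : ℕ) : Prop where
  image_edge : ∀ e ∈ T, ∃ a, e.image ℓ = Ico a (a + k)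
  image_hverts : (hverts T).image ℓ = Icc 1 M
  card_filter_eq_one : #((hverts T).filter (ℓ · = 1)) = 1
  exists_pred : ∀ v ∈ hverts T, 2 ≤ ℓ v → ∃ e ∈ T, v ∈ e ∧ ∃ w ∈ e, ℓ w + 1 = ℓ v
  image_root : r.image ℓ = Ico 1 k

namespace IsLayerLabeling

lemma mem_Icc (hℓ : IsLayerLabeling k T r ℓ M) (hv : v ∈ hverts T) : ℓ v ∈ Icc 1 M :=
  hℓ.image_hverts ▸ mem_image_of_mem ℓ hv

lemma exists_single (hk : 0 < k) (he : #e = k) (hr : r ⊆ e) (hrk : #r = k - 1) :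
    ∃ ℓ M, IsLayerLabeling k {e} r ℓ M := by
  obtain ⟨u, hu, rfl⟩ : ∃ u ∉ r, insert u r = e := exists_eq_insert_iff.2 ⟨hr, by omega⟩
  obtain ⟨ℓ₀, hℓ₀⟩ := exists_image_eq_Ico r 1
  have hroot : r.image (Function.update ℓ₀ u k) = Ico 1 k := by
    rw [image_update_of_notMem hu, hℓ₀, hrk]; congr 1; omega
  have himage : (insert u r).image (Function.update ℓ₀ u k) = Ico 1 (1 + k) := by
    rw [image_insert, Function.update_self, hroot, add_comm,
      Nat.Ico_succ_right_eq_insert_Ico hk]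
  have hinj := injOn_of_image_eq_Ico he himage
  refine ⟨_, k, ⟨?_, ?_, ?_, ?_, hroot⟩⟩
  · exact fun g hg => ⟨1, mem_singleton.1 hg ▸ himage⟩
  · rw [hverts_singleton, himage]; ext; simp only [mem_Ico, Finset.mem_Icc]; omega
  · rw [hverts_singleton]
    exact card_filter_eq_one_of_injOn hinj (himage ▸ mem_Ico.2 ⟨le_rfl, by omega⟩)
  · intro v hv h2
    rw [hverts_singleton] at hv
    have hv' := himage ▸ mem_image_of_mem (Function.update ℓ₀ u k) hv
    have : Function.update ℓ₀ u k v - 1 ∈ (insert u r).image (Function.update ℓ₀ u k) := by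
      rw [himage, mem_Ico] at *; omega
    obtain ⟨w, hw, hw'⟩ := mem_image.1 this
    exact ⟨_, mem_singleton_self _, hv, w, hw, by omega⟩

lemma insert_edge (hℓ : IsLayerLabeling k T r ℓ M) (hr : r ⊆ hverts T) (hs : s ⊆ hverts T)
    (hv : v ∉ hverts T) {c a : ℕ} (hc : c ∈ s.image ℓ)
    (hwin : insert (c + 1) (s.image ℓ) = Ico a (a + k)) :
    IsLayerLabeling k (insert (insert v s) T) r (Function.update ℓ v (c + 1))
      (max M (c + 1)) := by
  have hV : hverts (insert (insert v s) T) = insert v (hverts T) := by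
    rw [hverts_insert, insert_union, union_eq_right.2 hs]
  have hℓ' : ∀ x ∈ hverts T, Function.update ℓ v (c + 1) x = ℓ x := fun x hx =>
    Function.update_of_ne (ne_of_mem_of_not_mem hx hv) _ _
  have hcM := hℓ.image_hverts ▸ image_subset_image hs hc
  rw [Finset.mem_Icc] at hcM
  refine ⟨?_, ?_, ?_, ?_, ?_⟩
  · simp only [mem_insert, forall_eq_or_imp]
    refine ⟨⟨a, ?_⟩, fun g hg => ?_⟩
    · rw [image_insert, Function.update_self, image_update_of_notMem (fun h => hv (hs h)),
        hwin]
    · rw [image_update_of_notMem (fun h => hv (subset_hverts hg h))]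
      exact hℓ.image_edge g hg
  · rw [hV, image_insert, Function.update_self, image_update_of_notMem hv, hℓ.image_hverts]
    ext; simp only [mem_insert, Finset.mem_Icc]; omega
  · rw [hV, filter_insert, if_neg (by rw [Function.update_self]; omega),
      filter_congr fun x hx => by rw [hℓ' x hx]]
    exact hℓ.card_filter_eq_one
  · intro x hx h2
    rw [hV, mem_insert] at hx
    rcases hx with rfl | hx
    · obtain ⟨w, hws, rfl⟩ := mem_image.1 hc
      exact ⟨_, mem_insert_self _ _, mem_insert_self _ _, w, mem_insert_of_mem hws, by
        rw [Function.update_self, hℓ' w (hs hws)]⟩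
    · rw [hℓ' x hx] at h2 ⊢
      obtain ⟨g, hg, hxg, y, hyg, hy⟩ := hℓ.exists_pred x hx h2
      exact ⟨g, mem_insert_of_mem hg, hxg, y, hyg, by rw [hℓ' y (subset_hverts hg hyg), hy]⟩
  · rw [image_update_of_notMem (fun h => hv (hr h))]
    exact hℓ.image_root

lemma exists_grow (hk : 2 ≤ k) (hℓ : IsLayerLabeling k T r ℓ M) (hcard : ∀ f ∈ T, #f = k)
    (hr : r ⊆ hverts T) (hf : f ∈ T) (hu : u ∈ f) (hv : v ∉ hverts T) :
    ∃ ℓ' M', IsLayerLabeling k (insert (insert v (f.erase u)) T) r ℓ' M' := by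
  obtain ⟨a, ha⟩ := hℓ.image_edge f hf
  have hs : (f.erase u).image ℓ = (Ico a (a + k)).erase (ℓ u) := by
    rw [image_erase_of_injOn (injOn_of_image_eq_Ico (hcard f hf) ha) hu, ha]
  obtain ⟨c, hc, a', hwin⟩ := exists_insert_succ_erase_Ico hk (ha ▸ mem_image_of_mem ℓ hu)
  exact ⟨_, _, hℓ.insert_edge hr ((erase_subset u f).trans (subset_hverts hf)) hv (hs ▸ hc)
    (hs ▸ hwin)⟩

end IsLayerLabeling

end Labeling

lemma IsTightTreeFrom.exists_isLayerLabeling [DecidableEq α] {k : ℕ} {e r : Finset α}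
    {T : Finset (Finset α)} (hk : 2 ≤ k) (h : IsTightTreeFrom k e T) (hr : r ⊆ e)
    (hrk : #r = k - 1) : ∃ ℓ M, IsLayerLabeling k T r ℓ M := by
  induction h with
  | single he => exact IsLayerLabeling.exists_single (by omega) he hr hrk
  | grow hT hf hu hv ih =>
    obtain ⟨ℓ, M, hℓ⟩ := ih
    exact hℓ.exists_grow hk hT.card_eq (hr.trans (subset_hverts hT.root_mem)) hf hu hv

lemma IsLayerLabeling.isLayering [DecidableEq α] {k M : ℕ} {T : Finset (Finset α)}
    {r : Finset α} {ℓ : α → ℕ} (hℓ : IsLayerLabeling k T r ℓ M) (hk : 0 < k)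
    (hcard : ∀ e ∈ T, #e = k) (hr : r ⊆ hverts T) (hrk : #r = k - 1) :
    IsLayering k T r M fun i => (hverts T).filter (ℓ · = i) := by
  have hlayer {s : Finset α} (hs : s ⊆ hverts T) (i : ℕ) :
      s ∩ (hverts T).filter (ℓ · = i) = s.filter (ℓ · = i) := by
    rw [inter_filter, inter_eq_left.2 hs]
  refine ⟨fun i h1 h2 => ?_, fun _ _ _ => filter_subset _ _, fun i j _ _ _ _ hij => ?_,
    fun v hv => ?_, fun i h1 h2 => ?_, hℓ.card_filter_eq_one, fun i h1 _ v hv => ?_,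
    fun e he => ?_⟩
  · obtain ⟨v, hv, rfl⟩ := mem_image.1 (hℓ.image_hverts ▸ Finset.mem_Icc.2 ⟨h1, h2⟩)
    exact ⟨v, mem_filter.2 ⟨hv, rfl⟩⟩
  · exact disjoint_filter.2 fun _ _ h1 h2 => hij (h1 ▸ h2)
  · have := Finset.mem_Icc.1 (hℓ.mem_Icc hv)
    exact ⟨ℓ v, this.1, this.2, mem_filter.2 ⟨hv, rfl⟩⟩
  · rw [hlayer hr]
    exact card_filter_eq_one_of_injOn (injOn_of_card_image_eq (by simp [hℓ.image_root, hrk]))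
      (hℓ.image_root ▸ mem_Ico.2 ⟨h1, by omega⟩)
  · obtain ⟨hvT, hvi⟩ := mem_filter.1 hv
    obtain ⟨e, he, hve, w, hwe, hw⟩ := hℓ.exists_pred v hvT (by omega)
    exact ⟨w, mem_filter.2 ⟨subset_hverts he hwe, by omega⟩, e, he, hve, hwe⟩
  · obtain ⟨a, ha⟩ := hℓ.image_edge e he
    have hbounds (i : ℕ) (hi : i ∈ Ico a (a + k)) : i ∈ Icc 1 M :=
      hℓ.image_hverts ▸ image_subset_image (subset_hverts he) (ha ▸ hi)
    have ha1 := Finset.mem_Icc.1 (hbounds a (mem_Ico.2 ⟨le_rfl, by omega⟩))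
    have haM := Finset.mem_Icc.1 (hbounds (a + (k - 1)) (mem_Ico.2 ⟨by omega, by omega⟩))
    refine ⟨a, ha1.1, haM.2, fun i hai hik => ?_⟩
    rw [hlayer (subset_hverts he)]
    exact card_filter_eq_one_of_injOn (injOn_of_image_eq_Ico (hcard e he) ha)
      (ha ▸ mem_Ico.2 ⟨hai, hik⟩)

/-- Every rooted tight `k`-tree (`k ≥ 2`) admits a layering. -/
theorem layering_exists [DecidableEq α] (k : ℕ) (hk : 2 ≤ k)
    (T : Finset (Finset α)) (hT : IsTightTree k T)
    (r : Finset α) (hr : InShadow k T r) :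
    ∃ (m : ℕ) (L : ℕ → Finset α), IsLayering k T r m L := by
  obtain ⟨hrk, e, he, hre⟩ := hr
  obtain ⟨e₀, hT₀⟩ := hT.exists_isTightTreeFrom
  have hTe := hT₀.reroot he
  obtain ⟨ℓ, M, hℓ⟩ := hTe.exists_isLayerLabeling hk hre hrk
  exact ⟨M, _, hℓ.isLayering (by omega) hTe.card_eq (hre.trans (subset_hverts he)) hrk⟩
end

section
/- Let (T, r, L) be a layered tight k-tree with layering L = (L_1, …, L_m). Then |L_i| ≤ Δ_1(T)^{i−1} for all i ∈ [m]. -/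
/-!
Every vertex of `L (i + 1)` lies in an edge through some vertex of `L i`, and an edge of a
tight `k`-tree meets each layer at most once (its `k` vertices are already used up by its
window of `k` consecutive layers). So `L (i + 1)` is covered by the sets `e ∩ L (i + 1)` over
the at most `Δ₁(T) · |L i|` incidences `w ∈ e` with `w ∈ L i`, each of size at most one,
and `|L (i + 1)| ≤ Δ₁(T) · |L i|`.
-/

open Finset

attribute [local instance] Classical.propDecidable

variable {α : Type*}

theorem vdeg_le_hmaxDeg [DecidableEq α] (T : Finset (Finset α)) (v : α) :
    vdeg T v ≤ hmaxDeg T := by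
  by_cases hv : v ∈ hverts T
  · exact le_sup hv
  · have : T.filter (fun e => v ∈ e) = ∅ :=
      filter_eq_empty_iff.mpr fun e he hve => hv (mem_sup.mpr ⟨e, he, hve⟩)
    simp [vdeg, this]

theorem IsTightTree.card_eq [DecidableEq α] {k : ℕ} {T : Finset (Finset α)}
    (hT : IsTightTree k T) {e : Finset α} (he : e ∈ T) : e.card = k := by
  obtain ⟨es, -, -, rfl, hcard, -⟩ := hT
  exact hcard e (List.mem_toFinset.mp he)

/-- The `k` one-element intersections with the window already exhaust the `k`-set `e`. -/
theorem card_inter_le_one_of_window [DecidableEq α] {e : Finset α} {L : ℕ → Finset α}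
    {j k s : ℕ} (hcard : e.card = k)
    (hdisj : (↑(insert s (Ico j (j + k))) : Set ℕ).PairwiseDisjoint L)
    (hwindow : ∀ i ∈ Ico j (j + k), (e ∩ L i).card = 1) : (e ∩ L s).card ≤ 1 := by
  by_cases hs : s ∈ Ico j (j + k)
  · exact (hwindow s hs).le
  have hdisj' : (↑(insert s (Ico j (j + k))) : Set ℕ).PairwiseDisjoint (fun i => e ∩ L i) :=
    hdisj.mono_on fun i _ => inter_subset_right
  have hsum : ∑ i ∈ insert s (Ico j (j + k)), (e ∩ L i).card ≤ e.card := by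
    rw [← card_biUnion hdisj']
    exact card_le_card (biUnion_subset.mpr fun i _ => inter_subset_left)
  rw [sum_insert hs, sum_congr rfl hwindow, sum_const, Nat.card_Ico, smul_eq_mul, mul_one,
    hcard] at hsum
  omega

namespace IsLayering

variable [DecidableEq α] {k : ℕ} {T : Finset (Finset α)} {r : Finset α} {m : ℕ}
  {L : ℕ → Finset α}

theorem card_inter_le_one (hL : IsLayering k T r m L) (hcard : ∀ e ∈ T, e.card = k)
    {e : Finset α} (he : e ∈ T) {s : ℕ} (hs₁ : 1 ≤ s) (hsm : s ≤ m) :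
    (e ∩ L s).card ≤ 1 := by
  obtain ⟨j, hj₁, hjm, hwindow⟩ := hL.window e he
  refine card_inter_le_one_of_window (j := j) (hcard e he) ?_ fun i hi => ?_
  · intro a ha b hb hab
    simp only [coe_insert, coe_Ico, Set.mem_insert_iff, Set.mem_Ico] at ha hb
    exact hL.layer_disjoint a b (by omega) (by omega) (by omega) (by omega) hab
  · rw [mem_Ico] at hi
    exact hwindow i hi.1 hi.2

end IsLayering

theorem card_le_hmaxDeg_mul_card [DecidableEq α] {T : Finset (Finset α)} {A B : Finset α}
    (hlink : ∀ v ∈ B, ∃ w ∈ A, ∃ e ∈ T, v ∈ e ∧ w ∈ e)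
    (hmeet : ∀ e ∈ T, (e ∩ B).card ≤ 1) : B.card ≤ hmaxDeg T * A.card := by
  have hcover : B ⊆ A.biUnion fun w => (T.filter (w ∈ ·)).biUnion (· ∩ B) := by
    intro v hv
    obtain ⟨w, hw, e, he, hve, hwe⟩ := hlink v hv
    simp only [mem_biUnion, mem_filter, mem_inter]
    exact ⟨w, hw, e, ⟨he, hwe⟩, hve, hv⟩
  have hstar : ∀ w ∈ A, ((T.filter (w ∈ ·)).biUnion (· ∩ B)).card ≤ hmaxDeg T := fun w _ =>
    calc ((T.filter (w ∈ ·)).biUnion (· ∩ B)).card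
        ≤ (T.filter (w ∈ ·)).card * 1 :=
          card_biUnion_le_card_mul _ _ _ fun e he => hmeet e (mem_filter.mp he).1
      _ = vdeg T w := mul_one _
      _ ≤ hmaxDeg T := vdeg_le_hmaxDeg T w
  calc B.card ≤ _ := card_le_card hcover
    _ ≤ A.card * hmaxDeg T := card_biUnion_le_card_mul _ _ _ hstar
    _ = hmaxDeg T * A.card := mul_comm _ _

theorem layer_size_bound_general [DecidableEq α] (k : ℕ)
    (T : Finset (Finset α)) (hT : IsTightTree k T)
    (r : Finset α)
    (m : ℕ) (L : ℕ → Finset α) (hL : IsLayering k T r m L) :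
    ∀ i, 1 ≤ i → i ≤ m → (L i).card ≤ hmaxDeg T ^ (i - 1) := by
  intro i hi
  induction i, hi using Nat.le_induction with
  | base => exact fun _ => hL.first_card.le
  | succ n hn ih =>
    intro hnm
    calc (L (n + 1)).card ≤ hmaxDeg T * (L n).card :=
          card_le_hmaxDeg_mul_card (hL.link n hn (by omega))
            fun e he => hL.card_inter_le_one (fun _ => hT.card_eq) he (by omega) hnm
      _ ≤ hmaxDeg T * hmaxDeg T ^ (n - 1) := Nat.mul_le_mul_left _ (ih (by omega))
      _ = hmaxDeg T ^ (n + 1 - 1) := by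
          rw [← pow_succ']
          congr 1
          omega

/-- In a layered tight `k`-tree `(T, r, L)` with layering `(L 1, …, L m)`, each
layer satisfies `|L i| ≤ Δ₁(T) ^ (i − 1)`. -/
theorem layer_size_bound [DecidableEq α] (k : ℕ) (hk : 2 ≤ k)
    (T : Finset (Finset α)) (hT : IsTightTree k T)
    (r : Finset α) (hr : InShadow k T r)
    (m : ℕ) (L : ℕ → Finset α) (hL : IsLayering k T r m L) :
    ∀ i, 1 ≤ i → i ≤ m → (L i).card ≤ hmaxDeg T ^ (i - 1) :=
  layer_size_bound_general k T hT r m L hL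
end

section
/- Let Δ, k ≥ 2 and let T be a tight k-tree with unique k-partition {V_1, …, V_k} of its vertex set and with Δ_1(T) ≤ Δ. Then |V_i| ≤ Δ^{k−1}(|V_j| + 1) for all i, j ∈ [k]. -/
open Finset

attribute [local instance] Classical.propDecidable

variable {α : Type*}

/-- Let `Δ, k ≥ 2` and let `T` be a tight `k`-tree with `k`-partition
`{V_1, …, V_k}` and `Δ₁(T) ≤ Δ`. Then `|V_i| ≤ Δ^(k−1) (|V_j| + 1)` for all `i, j`. -/
theorem partition_class_sizes [DecidableEq α] (k Δ : ℕ) (hk : 2 ≤ k) (hΔ : 2 ≤ Δ)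
    (T : Finset (Finset α)) (hT : IsTightTree k T)
    (P : Fin k → Finset α)
    (hsub : ∀ i, P i ⊆ hverts T)
    (hPdisj : ∀ i j, i ≠ j → Disjoint (P i) (P j))
    (hcover : ∀ v ∈ hverts T, ∃ i, v ∈ P i)
    (hedgeP : ∀ e ∈ T, ∀ i, (e ∩ P i).card = 1)
    (hdeg : ∀ v, vdeg T v ≤ Δ) :
    ∀ i j, (P i).card ≤ Δ ^ (k - 1) * ((P j).card + 1) := by
  intro i j
  -- Step 1: |P i| ≤ |T|
  have h1 : (P i).card ≤ T.card := by
    have hPi : P i ⊆ T.biUnion (fun e => e ∩ P i) := by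
      intro v hv
      obtain ⟨e, he, hve⟩ : ∃ e ∈ T, v ∈ e := by
        have := hsub i hv
        simpa [hverts, Finset.mem_sup] using this
      exact Finset.mem_biUnion.mpr ⟨e, he, Finset.mem_inter.mpr ⟨hve, hv⟩⟩
    calc (P i).card ≤ (T.biUnion (fun e => e ∩ P i)).card := Finset.card_le_card hPi
      _ ≤ ∑ e ∈ T, (e ∩ P i).card := Finset.card_biUnion_le
      _ = ∑ e ∈ T, 1 := Finset.sum_congr rfl (fun e he => hedgeP e he i)
      _ = T.card := by simp
  -- Step 2: |T| ≤ Δ * |P j|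
  have h2 : T.card ≤ Δ * (P j).card := by
    have hdc : T.card = ∑ v ∈ P j, vdeg T v := by
      calc T.card = ∑ e ∈ T, 1 := by simp
        _ = ∑ e ∈ T, (e ∩ P j).card :=
            (Finset.sum_congr rfl (fun e he => (hedgeP e he j).symm))
        _ = ∑ e ∈ T, ((P j).filter (fun v => v ∈ e)).card := by
            refine Finset.sum_congr rfl (fun e he => ?_)
            congr 1
            rw [Finset.filter_mem_eq_inter, Finset.inter_comm]
        _ = ∑ e ∈ T, ∑ v ∈ P j, (if v ∈ e then 1 else 0) := by
            refine Finset.sum_congr rfl (fun e he => ?_)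
            rw [Finset.card_filter]
        _ = ∑ v ∈ P j, ∑ e ∈ T, (if v ∈ e then 1 else 0) := Finset.sum_comm
        _ = ∑ v ∈ P j, vdeg T v := by
            refine Finset.sum_congr rfl (fun v hv => ?_)
            rw [vdeg, Finset.card_filter]
    rw [hdc]
    calc ∑ v ∈ P j, vdeg T v ≤ ∑ v ∈ P j, Δ :=
          Finset.sum_le_sum (fun v _ => hdeg v)
      _ = Δ * (P j).card := by rw [Finset.sum_const, smul_eq_mul, mul_comm]
  -- Step 3: combine
  have hΔpow : Δ ≤ Δ ^ (k - 1) := by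
    calc Δ = Δ ^ 1 := (pow_one Δ).symm
      _ ≤ Δ ^ (k - 1) := Nat.pow_le_pow_right (by omega) (by omega)
  calc (P i).card ≤ Δ * (P j).card := le_trans h1 h2
    _ ≤ Δ ^ (k - 1) * (P j).card := Nat.mul_le_mul_right _ hΔpow
    _ ≤ Δ ^ (k - 1) * ((P j).card + 1) := Nat.mul_le_mul_left _ (by omega)
end

section
/- Let T be a tight k-tree with k ≥ 2. Then for any two distinct elements f, f′ of the shadow ∂T there exists a unique (f, f′)-pseudopath in T. -/
open Finset

attribute [local instance] Classical.propDecidable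

variable {α : Type*}

/-- `es` is a valid ordering of a pseudopath: additionally, the parent of each edge `e_i`
(`i ≥ 2`) is the immediately preceding edge `e_{i−1}`, i.e. `e_{i−1}` is the earliest edge
containing `e_i` minus its new vertex. -/
def PseudopathOrdering [DecidableEq α] (k : ℕ) (es : List (Finset α)) : Prop :=
  ValidOrdering k es ∧
  ∀ i, 0 < i → i < es.length →
    ∃ v ∈ es.getD i ∅,
      (∀ j, j < i → v ∉ es.getD j ∅) ∧
      (es.getD i ∅) \ {v} ⊆ es.getD (i - 1) ∅ ∧
      ∀ j, j < i - 1 → ¬ (es.getD i ∅) \ {v} ⊆ es.getD j ∅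

/-- `P` is an `(f, f')`-pseudopath in `H`: a pseudopath all of whose edges lie in `H`, with a
valid ordering `e_1, …, e_t` such that `f ⊆ e_i` iff `i = 1` and `f' ⊆ e_j` iff `j = t`. -/
def IsPseudopathBetween [DecidableEq α] (k : ℕ) (H : Finset (Finset α))
    (f f' : Finset α) (P : Finset (Finset α)) : Prop :=
  P ⊆ H ∧
  ∃ es : List (Finset α), es ≠ [] ∧ es.Nodup ∧ es.toFinset = P ∧
    PseudopathOrdering k es ∧
    (∀ i, i < es.length → (f ⊆ es.getD i ∅ ↔ i = 0)) ∧
    (∀ j, j < es.length → (f' ⊆ es.getD j ∅ ↔ j = es.length - 1))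

/-! Induct along a valid ordering of `T`. Its last edge `e` is a leaf: its new vertex `v` lies in
no other edge, and `g = e \ {v}` lies in the shadow of the remaining tree `T₀`. If neither `f`
nor `f'` contains `v`, no `(f, f')`-pseudopath passes through `e`, so the claim is inherited from
`T₀`. If only `f'` contains `v`, the unique pseudopath is `e` alone when `f = g`, and otherwise
the `(f, g)`-pseudopath of `T₀` followed by `e`; if both contain `v`, it is `e` alone. The case
where only `f` contains `v` is the previous one reversed: the reverse of a pseudopath is again a
pseudopath, because a vertex that leaves a pseudopath never comes back, and neither does the
face shared by two consecutive edges. -/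

namespace List

theorem getD_mem_of_lt {l : List α} {d : α} {i : ℕ} (hi : i < l.length) : l.getD i d ∈ l := by
  rw [getD_eq_getElem _ _ hi]
  exact getElem_mem hi

theorem exists_getD_eq_of_mem {l : List α} (d : α) {a : α} (ha : a ∈ l) :
    ∃ i < l.length, l.getD i d = a := by
  obtain ⟨i, hi, rfl⟩ := mem_iff_getElem.1 ha
  exact ⟨i, hi, getD_eq_getElem _ _ hi⟩

theorem getD_append_singleton_length (l : List α) (a d : α) : (l ++ [a]).getD l.length d = a := by
  simp

end List

theorem Finset.eq_erase_of_subset_of_card_le [DecidableEq α] {s t : Finset α} {a : α}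
    (ha : a ∈ t) (hst : s ⊆ t) (has : a ∉ s) (hcard : t.card ≤ s.card + 1) :
    s = t.erase a :=
  eq_of_subset_of_card_le (subset_erase.2 ⟨hst, has⟩) (by rw [card_erase_of_mem ha]; omega)

/-- `v` is the new vertex of the `i`-th edge of `qs`, and the `(i-1)`-th edge is its parent. -/
structure IsPseudopathStep [DecidableEq α] (qs : List (Finset α)) (i : ℕ) (v : α) : Prop where
  mem : v ∈ qs.getD i ∅
  notMem_lt : ∀ j < i, v ∉ qs.getD j ∅
  erase_subset : (qs.getD i ∅).erase v ⊆ qs.getD (i - 1) ∅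
  not_erase_subset_lt : ∀ j < i - 1, ¬ (qs.getD i ∅).erase v ⊆ qs.getD j ∅

namespace IsPseudopathStep
variable [DecidableEq α] {qs : List (Finset α)} {i : ℕ} {v : α}

theorem append (h : IsPseudopathStep qs i v) (hi : i < qs.length) (l : List (Finset α)) :
    IsPseudopathStep (qs ++ l) i v := by
  have hget : ∀ j ≤ i, (qs ++ l).getD j ∅ = qs.getD j ∅ :=
    fun j hj => List.getD_append _ _ _ _ (by omega)
  refine ⟨?_, fun j hj => ?_, ?_, fun j hj => ?_⟩
  · rw [hget i le_rfl]; exact h.mem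
  · rw [hget j hj.le]; exact h.notMem_lt j hj
  · rw [hget i le_rfl, hget (i - 1) (by omega)]; exact h.erase_subset
  · rw [hget i le_rfl, hget j (by omega)]; exact h.not_erase_subset_lt j hj

theorem of_append {l : List (Finset α)} (h : IsPseudopathStep (qs ++ l) i v)
    (hi : i < qs.length) : IsPseudopathStep qs i v := by
  have hget : ∀ j ≤ i, (qs ++ l).getD j ∅ = qs.getD j ∅ :=
    fun j hj => List.getD_append _ _ _ _ (by omega)
  refine ⟨?_, fun j hj => ?_, ?_, fun j hj => ?_⟩
  · rw [← hget i le_rfl]; exact h.mem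
  · rw [← hget j hj.le]; exact h.notMem_lt j hj
  · rw [← hget i le_rfl, ← hget (i - 1) (by omega)]; exact h.erase_subset
  · rw [← hget i le_rfl, ← hget j (by omega)]; exact h.not_erase_subset_lt j hj

end IsPseudopathStep

namespace PseudopathOrdering
variable [DecidableEq α] {k : ℕ} {qs : List (Finset α)}

theorem card_getD (h : PseudopathOrdering k qs) {i : ℕ} (hi : i < qs.length) :
    (qs.getD i ∅).card = k :=
  h.1.1 _ (List.getD_mem_of_lt hi)

theorem exists_step (h : PseudopathOrdering k qs) {i : ℕ} (h0 : 0 < i) (hi : i < qs.length) :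
    ∃ v, IsPseudopathStep qs i v := by
  obtain ⟨v, hv, hnew, hsub, hmin⟩ := h.2 i h0 hi
  simp only [sdiff_singleton_eq_erase] at hsub hmin
  exact ⟨v, hv, hnew, hsub, hmin⟩

theorem of_steps (hcard : ∀ e ∈ qs, e.card = k)
    (h : ∀ i, 0 < i → i < qs.length → ∃ v, IsPseudopathStep qs i v) :
    PseudopathOrdering k qs := by
  refine ⟨⟨hcard, fun i h0 hi => ?_⟩, fun i h0 hi => ?_⟩ <;>
    obtain ⟨v, hv, hnew, hsub, hmin⟩ := h i h0 hi <;>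
    simp only [sdiff_singleton_eq_erase]
  · exact ⟨v, hv, hnew, i - 1, by omega, hsub⟩
  · exact ⟨v, hv, hnew, hsub, hmin⟩

theorem nodup (h : PseudopathOrdering k qs) : qs.Nodup := by
  rw [List.nodup_iff_getElem?_ne_getElem?]
  intro i j hij hj heq
  obtain ⟨v, hv⟩ := h.exists_step (by omega) hj
  rw [List.getElem?_eq_getElem (by omega), List.getElem?_eq_getElem hj, Option.some_inj,
    ← List.getD_eq_getElem _ ∅, ← List.getD_eq_getElem _ ∅] at heq
  exact hv.notMem_lt i hij (heq ▸ hv.mem)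

theorem of_append {l : List (Finset α)} (h : PseudopathOrdering k (qs ++ l)) :
    PseudopathOrdering k qs :=
  of_steps (fun e he => h.1.1 e (List.mem_append_left l he)) fun i h0 hi =>
    let ⟨v, hv⟩ := h.exists_step h0 (by simp; omega)
    ⟨v, hv.of_append hi⟩

theorem append_singleton (h : PseudopathOrdering k qs) {e : Finset α} {v : α} (he : e.card = k)
    (hv : IsPseudopathStep (qs ++ [e]) qs.length v) : PseudopathOrdering k (qs ++ [e]) := by
  refine of_steps (fun x hx => ?_) fun i h0 hi => ?_
  · rcases List.mem_append.1 hx with hx | hx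
    · exact h.1.1 x hx
    · exact List.mem_singleton.1 hx ▸ he
  · simp only [List.length_append, List.length_singleton] at hi
    rcases Nat.lt_or_ge i qs.length with hi' | hi'
    · obtain ⟨w, hw⟩ := h.exists_step h0 hi'
      exact ⟨w, hw.append hi' [e]⟩
    · exact ⟨v, (show i = qs.length by omega) ▸ hv⟩

theorem step_of_notMem_pred (h : PseudopathOrdering k qs) {i : ℕ} (h0 : 0 < i)
    (hi : i < qs.length) {v : α} (hv : v ∈ qs.getD i ∅) (hv' : v ∉ qs.getD (i - 1) ∅) :
    IsPseudopathStep qs i v := by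
  obtain ⟨w, hw⟩ := h.exists_step h0 hi
  obtain rfl : w = v := by
    by_contra hwv
    exact hv' (hw.erase_subset (mem_erase.2 ⟨Ne.symm hwv, hv⟩))
  exact hw

theorem notMem_getD_of_lt (h : PseudopathOrdering k qs) {x : α} {a b c : ℕ} (hab : a < b)
    (hbc : b ≤ c) (hc : c < qs.length) (hxa : x ∈ qs.getD a ∅) (hxb : x ∉ qs.getD b ∅) :
    x ∉ qs.getD c ∅ := by
  induction c, hbc using Nat.le_induction with
  | base => exact hxb
  | succ c hbc ih =>
    obtain ⟨w, hw⟩ := h.exists_step (by omega) hc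
    have hxw : x ≠ w := by
      rintro rfl
      exact hw.notMem_lt a (by omega) hxa
    intro hx
    exact ih (by omega) (by simpa using hw.erase_subset (mem_erase.2 ⟨hxw, hx⟩))

theorem exists_erase_eq_erase (h : PseudopathOrdering k qs) {i : ℕ} (h0 : 0 < i)
    (hi : i < qs.length) {v : α} (hv : IsPseudopathStep qs i v) :
    ∃ u ∈ qs.getD (i - 1) ∅, u ∉ qs.getD i ∅ ∧
      (qs.getD (i - 1) ∅).erase u = (qs.getD i ∅).erase v := by
  have hcard := h.card_getD hi
  have hcard' := h.card_getD (i := i - 1) (by omega)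
  have hk : 0 < k := hcard ▸ card_pos.2 ⟨v, hv.mem⟩
  obtain ⟨u, hu, hu'⟩ := exists_mem_notMem_of_card_lt_card (s := (qs.getD i ∅).erase v)
    (t := qs.getD (i - 1) ∅) (by rw [card_erase_of_mem hv.mem]; omega)
  refine ⟨u, hu, fun hui => ?_, ?_⟩
  · obtain rfl : u = v := by
      by_contra huv
      exact hu' (mem_erase.2 ⟨huv, hui⟩)
    exact hv.notMem_lt (i - 1) (by omega) hu
  · refine (eq_erase_of_subset_of_card_le hu hv.erase_subset hu' ?_).symm
    rw [card_erase_of_mem hv.mem]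
    omega

theorem not_erase_subset_of_lt (h : PseudopathOrdering k qs) {i c : ℕ} {v : α}
    (hv : IsPseudopathStep qs i v) (h0 : 0 < i) (hic : i < c) (hc : c < qs.length) :
    ¬ (qs.getD i ∅).erase v ⊆ qs.getD c ∅ := by
  intro hsub
  obtain ⟨w, hw⟩ := h.exists_step (i := i + 1) (by omega) (by omega)
  have hsub' : (qs.getD i ∅).erase v ⊆ qs.getD (i + 1) ∅ := by
    intro x hx
    by_contra hx'
    exact h.notMem_getD_of_lt (Nat.lt_succ_self i) hic hc (mem_of_mem_erase hx) hx' (hsub hx)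
  have hw' : w ∉ (qs.getD i ∅).erase v := fun hwx =>
    hw.notMem_lt i (Nat.lt_succ_self i) (mem_of_mem_erase hwx)
  have heq := eq_erase_of_subset_of_card_le hw.mem hsub' hw' (by
    rw [card_erase_of_mem hv.mem, h.card_getD (by omega), h.card_getD (by omega)]; omega)
  refine hw.not_erase_subset_lt (i - 1) (by omega) ?_
  rw [← heq]
  exact hv.erase_subset

theorem reverse (h : PseudopathOrdering k qs) : PseudopathOrdering k qs.reverse := by
  refine of_steps (fun e he => h.1.1 e (List.mem_reverse.1 he)) fun i h0 hi => ?_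
  rw [List.length_reverse] at hi
  set n := qs.length
  have hrev : ∀ j < n, qs.reverse.getD j ∅ = qs.getD (n - 1 - j) ∅ :=
    fun j hj => congrFun (List.getD_reverse j hj) ∅
  obtain ⟨v, hv⟩ := h.exists_step (i := n - i) (by omega) (by omega)
  obtain ⟨u, hu, hu', heq⟩ := h.exists_erase_eq_erase (by omega) (by omega) hv
  rw [show n - i - 1 = n - 1 - i by omega] at hu heq
  refine ⟨u, ?_, fun j hj => ?_, ?_, fun j hj => ?_⟩
  · rw [hrev i hi]; exact hu
  · rw [hrev j (by omega)]
    exact h.notMem_getD_of_lt (b := n - i) (by omega) (by omega) (by omega) hu hu'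
  · rw [hrev i hi, hrev (i - 1) (by omega), heq, show n - 1 - (i - 1) = n - i by omega]
    exact erase_subset _ _
  · rw [hrev i hi, hrev j (by omega), heq]
    exact h.not_erase_subset_of_lt hv (by omega) (by omega) (by omega)

end PseudopathOrdering

/-- A valid ordering `qs` of an `(f, f')`-pseudopath in `H`, whose edge set is `qs.toFinset`. -/
structure IsPseudopathSeq [DecidableEq α] (k : ℕ) (H : Finset (Finset α)) (f f' : Finset α)
    (qs : List (Finset α)) : Prop where
  ne_nil : qs ≠ []
  mem : ∀ e ∈ qs, e ∈ H
  ordering : PseudopathOrdering k qs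
  subset_iff_first : ∀ i < qs.length, f ⊆ qs.getD i ∅ ↔ i = 0
  subset_iff_last : ∀ j < qs.length, f' ⊆ qs.getD j ∅ ↔ j = qs.length - 1

section IsPseudopathSeq
variable [DecidableEq α] {k : ℕ} {H : Finset (Finset α)} {f f' e : Finset α}
  {qs ps : List (Finset α)}

theorem isPseudopathSeq_singleton (he : e ∈ H) (hcard : e.card = k) (hf : f ⊆ e)
    (hf' : f' ⊆ e) : IsPseudopathSeq k H f f' [e] where
  ne_nil := List.cons_ne_nil e []
  mem := by simpa using he
  ordering := PseudopathOrdering.of_steps (by simpa using hcard) fun i h0 hi => by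
    simp at hi; omega
  subset_iff_first := by simpa using hf
  subset_iff_last := by simpa using hf'

namespace IsPseudopathSeq

theorem mono {H' : Finset (Finset α)} (h : IsPseudopathSeq k H f f' qs) (hH : H ⊆ H') :
    IsPseudopathSeq k H' f f' qs :=
  { h with mem := fun x hx => hH (h.mem x hx) }

theorem of_notMem_insert (h : IsPseudopathSeq k (insert e H) f f' qs) (he : e ∉ qs) :
    IsPseudopathSeq k H f f' qs :=
  { h with
    mem := fun x hx => (mem_insert.1 (h.mem x hx)).resolve_left (ne_of_mem_of_not_mem hx he) }

theorem reverse (h : IsPseudopathSeq k H f f' qs) : IsPseudopathSeq k H f' f qs.reverse where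
  ne_nil := List.reverse_ne_nil_iff.2 h.ne_nil
  mem x hx := h.mem x (List.mem_reverse.1 hx)
  ordering := h.ordering.reverse
  subset_iff_first i hi := by
    rw [List.length_reverse] at hi
    rw [congrFun (List.getD_reverse i hi) ∅, h.subset_iff_last _ (by omega)]
    omega
  subset_iff_last j hj := by
    rw [List.length_reverse] at hj ⊢
    rw [congrFun (List.getD_reverse j hj) ∅, h.subset_iff_first _ (by omega)]
    omega

theorem eq_nil_of_append (h : IsPseudopathSeq k H f f' (ps ++ [e])) (hf : f ⊆ e) : ps = [] := by
  have hlast := h.subset_iff_first ps.length (by simp)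
  rw [List.getD_append_singleton_length] at hlast
  exact List.length_eq_zero_iff.1 (hlast.1 hf)

theorem exists_eq_append (h : IsPseudopathSeq k H f f' qs) (he : ∀ x ∈ H, f' ⊆ x → x = e) :
    ∃ ps, qs = ps ++ [e] := by
  refine ⟨qs.dropLast, ?_⟩
  have hlen : 0 < qs.length := List.length_pos_iff.2 h.ne_nil
  have hlast : qs.getLast h.ne_nil = qs.getD (qs.length - 1) ∅ := by
    rw [List.getLast_eq_getElem, List.getD_eq_getElem]
  rw [← he _ (hlast ▸ h.mem _ (List.getLast_mem _))
    (hlast ▸ (h.subset_iff_last _ (by omega)).2 rfl), ← hlast, List.dropLast_append_getLast]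

end IsPseudopathSeq

theorem existsUnique_isPseudopathSeq_singleton (he : e ∈ H) (hcard : e.card = k) (hf : f ⊆ e)
    (hf' : f' ⊆ e) (hlast : ∀ qs, IsPseudopathSeq k H f f' qs → ∃ ps, qs = ps ++ [e]) :
    ∃! qs, IsPseudopathSeq k H f f' qs := by
  refine ⟨[e], isPseudopathSeq_singleton he hcard hf hf', fun qs hqs => ?_⟩
  obtain ⟨ps, rfl⟩ := hlast qs hqs
  rw [hqs.eq_nil_of_append hf, List.nil_append]

theorem ExistsUnique.isPseudopathSeq_symm (h : ∃! qs, IsPseudopathSeq k H f f' qs) :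
    ∃! qs, IsPseudopathSeq k H f' f qs := by
  obtain ⟨qs, hqs, huniq⟩ := h
  exact ⟨qs.reverse, hqs.reverse, fun ps hps => by
    rw [← huniq _ hps.reverse, List.reverse_reverse]⟩

theorem ExistsUnique.isPseudopathBetween (h : ∃! qs, IsPseudopathSeq k H f f' qs) :
    ∃! P, IsPseudopathBetween k H f f' P := by
  obtain ⟨qs, hqs, huniq⟩ := h
  refine ⟨qs.toFinset, ⟨fun x hx => hqs.mem x (List.mem_toFinset.1 hx), qs, hqs.ne_nil,
    hqs.ordering.nodup, rfl, hqs.ordering, hqs.subset_iff_first, hqs.subset_iff_last⟩, ?_⟩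
  rintro P ⟨hPH, ps, hne, -, rfl, hord, hfirst, hlast⟩
  rw [huniq ps ⟨hne, fun x hx => hPH (List.mem_toFinset.2 hx), hord, hfirst, hlast⟩]

end IsPseudopathSeq

def HasUniquePseudopaths [DecidableEq α] (k : ℕ) (H : Finset (Finset α)) : Prop :=
  ∀ f f', InShadow k H f → InShadow k H f' → f ≠ f' → ∃! qs, IsPseudopathSeq k H f f' qs

theorem hasUniquePseudopaths_singleton [DecidableEq α] {k : ℕ} {e : Finset α}
    (he : e.card = k) : HasUniquePseudopaths k {e} := by
  have hsub : ∀ {s}, InShadow k {e} s → s ⊆ e := by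
    rintro s ⟨-, x, hx, hsx⟩
    rwa [mem_singleton.1 hx] at hsx
  intro f f' hf hf' _
  exact existsUnique_isPseudopathSeq_singleton (mem_singleton_self e) he (hsub hf) (hsub hf')
    fun qs hqs => hqs.exists_eq_append fun x hx _ => mem_singleton.1 hx

structure IsLeaf [DecidableEq α] (k : ℕ) (T₀ : Finset (Finset α)) (e : Finset α) (v : α) :
    Prop where
  card_eq : e.card = k
  mem : v ∈ e
  notMem : ∀ x ∈ T₀, v ∉ x
  exists_subset : ∃ x ∈ T₀, e.erase v ⊆ x

namespace IsLeaf
variable [DecidableEq α] {k : ℕ} {T₀ : Finset (Finset α)} {e f f' : Finset α} {v : α}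
  {qs ps : List (Finset α)}

theorem eq_of_mem_insert (hl : IsLeaf k T₀ e v) {x : Finset α} (hx : x ∈ insert e T₀)
    (hvx : v ∈ x) : x = e :=
  (mem_insert.1 hx).resolve_right fun hx₀ => hl.notMem x hx₀ hvx

theorem eq_erase_of_subset (hl : IsLeaf k T₀ e v) {s : Finset α} (hs : s ⊆ e) (hvs : v ∉ s)
    (hcard : s.card = k - 1) : s = e.erase v :=
  eq_erase_of_subset_of_card_le hl.mem hs hvs (by rw [hl.card_eq]; omega)

theorem subset_of_inShadow (hl : IsLeaf k T₀ e v) (hf : InShadow k (insert e T₀) f)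
    (hvf : v ∈ f) : f ⊆ e := by
  obtain ⟨-, x, hx, hfx⟩ := hf
  exact hl.eq_of_mem_insert hx (hfx hvf) ▸ hfx

theorem inShadow_erase (hl : IsLeaf k T₀ e v) : InShadow k T₀ (e.erase v) :=
  ⟨by rw [card_erase_of_mem hl.mem, hl.card_eq], hl.exists_subset⟩

theorem inShadow_of_notMem (hl : IsLeaf k T₀ e v) (hf : InShadow k (insert e T₀) f)
    (hvf : v ∉ f) : InShadow k T₀ f := by
  obtain ⟨hcard, x, hx, hfx⟩ := hf
  rcases mem_insert.1 hx with rfl | hx₀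
  · obtain ⟨y, hy, hxy⟩ := hl.exists_subset
    exact ⟨hcard, y, hy, (subset_erase.2 ⟨hfx, hvf⟩).trans hxy⟩
  · exact ⟨hcard, x, hx₀, hfx⟩

theorem notMem_getD (hl : IsLeaf k T₀ e v) (h : IsPseudopathSeq k (insert e T₀) f f' qs)
    {i j : ℕ} (hi : i < qs.length) (hie : qs.getD i ∅ = e) (hj : j < qs.length)
    (hji : j ≠ i) : v ∉ qs.getD j ∅ := by
  refine hl.notMem _ ((mem_insert.1 (h.mem _ (List.getD_mem_of_lt hj))).resolve_left ?_)
  intro hje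
  rw [← hie, List.getD_eq_getElem _ _ hj, List.getD_eq_getElem _ _ hi] at hje
  exact hji ((h.ordering.nodup.getElem_inj_iff).1 hje)

theorem getD_ne_of_pos (hl : IsLeaf k T₀ e v) (h : IsPseudopathSeq k (insert e T₀) f f' qs)
    (hvf' : v ∉ f') {i : ℕ} (h0 : 0 < i) (hi : i < qs.length) : qs.getD i ∅ ≠ e := by
  intro hie
  have hstep : IsPseudopathStep qs i v := h.ordering.step_of_notMem_pred h0 hi (hie ▸ hl.mem)
    (hl.notMem_getD h hi hie (by omega) (by omega))
  have hface : e.erase v ⊆ qs.getD (i - 1) ∅ := hie ▸ hstep.erase_subset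
  rcases Nat.lt_or_ge (i + 1) qs.length with hi' | hi'
  · -- the face of the next edge lies in `e.erase v ⊆ e_{i-1}`, so `e_i` is not its parent
    obtain ⟨w, hw⟩ := h.ordering.exists_step (i := i + 1) (by omega) hi'
    have hvw : v ∉ (qs.getD (i + 1) ∅).erase w :=
      fun hv => hl.notMem_getD h hi hie hi' (by omega) (mem_of_mem_erase hv)
    have hsub := hw.erase_subset
    rw [Nat.add_sub_cancel, hie] at hsub
    exact hw.not_erase_subset_lt (i - 1) (by omega)
      ((subset_erase.2 ⟨hsub, hvw⟩).trans hface)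
  · have hf'e : f' ⊆ e := hie ▸ (h.subset_iff_last i hi).2 (by omega)
    have := (h.subset_iff_last (i - 1) (by omega)).1
      ((subset_erase.2 ⟨hf'e, hvf'⟩).trans hface)
    omega

theorem notMem_of_notMem_of_notMem (hl : IsLeaf k T₀ e v)
    (h : IsPseudopathSeq k (insert e T₀) f f' qs)
    (hf : f.card = k - 1) (hf' : f'.card = k - 1) (hne : f ≠ f') (hvf : v ∉ f)
    (hvf' : v ∉ f') : e ∉ qs := by
  intro he
  obtain ⟨i, hi, hie⟩ := List.exists_getD_eq_of_mem ∅ he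
  rcases Nat.eq_zero_or_pos i with rfl | h0
  · rcases Nat.lt_or_ge 1 qs.length with hlen | hlen
    · refine hl.getD_ne_of_pos h.reverse hvf (i := qs.length - 1) (by omega) (by simpa) ?_
      rw [congrFun (List.getD_reverse _ (by omega)) ∅, Nat.sub_self, hie]
    · have hfe : f ⊆ e := hie ▸ (h.subset_iff_first 0 hi).2 rfl
      have hf'e : f' ⊆ e := hie ▸ (h.subset_iff_last 0 hi).2 (by omega)
      exact hne ((hl.eq_erase_of_subset hfe hvf hf).trans
        (hl.eq_erase_of_subset hf'e hvf' hf').symm)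
  · exact hl.getD_ne_of_pos h hvf' h0 hi hie

theorem append (hl : IsLeaf k T₀ e v) (hps : IsPseudopathSeq k T₀ f (e.erase v) ps)
    (hf : f.card = k - 1) (hfe : f ≠ e.erase v) (hf' : f' ⊆ e) (hvf' : v ∈ f') :
    IsPseudopathSeq k (insert e T₀) f f' (ps ++ [e]) := by
  have hlen : 0 < ps.length := List.length_pos_iff.2 hps.ne_nil
  have hget : ∀ i < ps.length, (ps ++ [e]).getD i ∅ = ps.getD i ∅ :=
    fun i hi => List.getD_append _ _ _ _ hi
  have hget_last := List.getD_append_singleton_length ps e ∅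
  have hv : ∀ i < ps.length, v ∉ ps.getD i ∅ :=
    fun i hi => hl.notMem _ (hps.mem _ (List.getD_mem_of_lt hi))
  have hlast_step : IsPseudopathStep (ps ++ [e]) ps.length v := by
    refine ⟨by rw [hget_last]; exact hl.mem, fun j hj => hget j hj ▸ hv j hj, ?_,
      fun j hj => ?_⟩
    · rw [hget_last, hget _ (by omega)]
      exact (hps.subset_iff_last _ (by omega)).2 rfl
    · rw [hget_last, hget j (by omega), hps.subset_iff_last j (by omega)]
      omega
  refine ⟨by simp, fun x hx => ?_, hps.ordering.append_singleton hl.card_eq hlast_step,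
    fun i hi => ?_, fun j hj => ?_⟩
  · rcases List.mem_append.1 hx with hx | hx
    · exact mem_insert_of_mem (hps.mem x hx)
    · exact List.mem_singleton.1 hx ▸ mem_insert_self e T₀
  · simp only [List.length_append, List.length_singleton] at hi
    rcases Nat.lt_or_ge i ps.length with hi' | hi'
    · rw [hget i hi']
      exact hps.subset_iff_first i hi'
    · rw [show i = ps.length by omega, hget_last]
      refine ⟨fun hfe' => absurd ?_ hfe, by omega⟩
      have hvf : v ∉ f := fun hvf => hv 0 hlen ((hps.subset_iff_first 0 hlen).2 rfl hvf)
      exact hl.eq_erase_of_subset hfe' hvf hf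
  · simp only [List.length_append, List.length_singleton, Nat.add_sub_cancel] at hj ⊢
    rcases Nat.lt_or_ge j ps.length with hj' | hj'
    · rw [hget j hj']
      exact ⟨fun hsub => absurd (hsub hvf') (hv j hj'), by omega⟩
    · rw [show j = ps.length by omega, hget_last]
      simpa using hf'

theorem of_append (hl : IsLeaf k T₀ e v) (h : IsPseudopathSeq k (insert e T₀) f f' (ps ++ [e]))
    (hps : ps ≠ []) : IsPseudopathSeq k T₀ f (e.erase v) ps := by
  have hlen : 0 < ps.length := List.length_pos_iff.2 hps
  have hget : ∀ i < ps.length, (ps ++ [e]).getD i ∅ = ps.getD i ∅ :=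
    fun i hi => List.getD_append _ _ _ _ hi
  have hget_last := List.getD_append_singleton_length ps e ∅
  have hv : ∀ j < ps.length, v ∉ ps.getD j ∅ := fun j hj =>
    hget j hj ▸ hl.notMem_getD h (by simp) hget_last (by simp; omega) (by omega)
  have hstep := h.ordering.step_of_notMem_pred (i := ps.length) hlen (by simp)
    (by rw [hget_last]; exact hl.mem) (by rw [hget _ (by omega)]; exact hv _ (by omega))
  refine ⟨hps, fun x hx => ?_, h.ordering.of_append, fun i hi => ?_, fun j hj => ?_⟩
  · obtain ⟨j, hj, rfl⟩ := List.exists_getD_eq_of_mem ∅ hx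
    exact (mem_insert.1 (h.mem _ (List.mem_append_left _ hx))).resolve_left
      fun hje => hv j hj (hje ▸ hl.mem)
  · rw [← hget i hi]
    exact h.subset_iff_first i (by simp; omega)
  · have hsub := hstep.erase_subset
    rw [hget_last, hget _ (by omega)] at hsub
    refine ⟨fun hsubj => ?_, fun hj' => hj' ▸ hsub⟩
    by_contra hj'
    exact hstep.not_erase_subset_lt j (by omega) (by rwa [hget_last, hget j hj])

theorem existsUnique_of_notMem_of_notMem (hl : IsLeaf k T₀ e v)
    (IH : HasUniquePseudopaths k T₀)
    (hf : InShadow k (insert e T₀) f) (hf' : InShadow k (insert e T₀) f') (hne : f ≠ f')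
    (hvf : v ∉ f) (hvf' : v ∉ f') : ∃! qs, IsPseudopathSeq k (insert e T₀) f f' qs := by
  obtain ⟨ps, hps, huniq⟩ :=
    IH f f' (hl.inShadow_of_notMem hf hvf) (hl.inShadow_of_notMem hf' hvf') hne
  exact ⟨ps, hps.mono (subset_insert e T₀), fun qs hqs =>
    huniq qs (hqs.of_notMem_insert
      (hl.notMem_of_notMem_of_notMem hqs hf.1 hf'.1 hne hvf hvf'))⟩

theorem existsUnique_of_notMem_of_mem (hl : IsLeaf k T₀ e v)
    (IH : HasUniquePseudopaths k T₀)
    (hf : InShadow k (insert e T₀) f) (hf' : InShadow k (insert e T₀) f')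
    (hvf : v ∉ f) (hvf' : v ∈ f') : ∃! qs, IsPseudopathSeq k (insert e T₀) f f' qs := by
  have hf'e := hl.subset_of_inShadow hf' hvf'
  have hlast : ∀ qs, IsPseudopathSeq k (insert e T₀) f f' qs → ∃ ps, qs = ps ++ [e] :=
    fun qs hqs => hqs.exists_eq_append fun x hx hf'x => hl.eq_of_mem_insert hx (hf'x hvf')
  by_cases hfe : f = e.erase v
  · exact existsUnique_isPseudopathSeq_singleton (mem_insert_self e T₀) hl.card_eq
      (hfe ▸ erase_subset v e) hf'e hlast
  obtain ⟨ps, hps, huniq⟩ :=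
    IH f (e.erase v) (hl.inShadow_of_notMem hf hvf) hl.inShadow_erase hfe
  refine ⟨ps ++ [e], hl.append hps hf.1 hfe hf'e hvf', fun qs hqs => ?_⟩
  obtain ⟨ps', rfl⟩ := hlast qs hqs
  have hps' : ps' ≠ [] := by
    rintro rfl
    exact hfe (hl.eq_erase_of_subset (by simpa using (hqs.subset_iff_first 0 (by simp)).2 rfl)
      hvf hf.1)
  rw [huniq ps' (hl.of_append hqs hps')]

theorem hasUniquePseudopaths (hl : IsLeaf k T₀ e v) (IH : HasUniquePseudopaths k T₀) :
    HasUniquePseudopaths k (insert e T₀) := by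
  have of_notMem : ∀ {f f'}, InShadow k (insert e T₀) f → InShadow k (insert e T₀) f' →
      f ≠ f' → v ∉ f → ∃! qs, IsPseudopathSeq k (insert e T₀) f f' qs := by
    intro f f' hf hf' hne hvf
    by_cases hvf' : v ∈ f'
    · exact hl.existsUnique_of_notMem_of_mem IH hf hf' hvf hvf'
    · exact hl.existsUnique_of_notMem_of_notMem IH hf hf' hne hvf hvf'
  intro f f' hf hf' hne
  by_cases hvf : v ∈ f
  · by_cases hvf' : v ∈ f'
    · exact existsUnique_isPseudopathSeq_singleton (mem_insert_self e T₀) hl.card_eq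
        (hl.subset_of_inShadow hf hvf) (hl.subset_of_inShadow hf' hvf') fun qs hqs =>
          hqs.exists_eq_append fun x hx hf'x => hl.eq_of_mem_insert hx (hf'x hvf')
    · exact (of_notMem hf' hf hne.symm hvf').isPseudopathSeq_symm
  · exact of_notMem hf hf' hne hvf

end IsLeaf

namespace ValidOrdering
variable [DecidableEq α] {k : ℕ}

theorem of_append {l l' : List (Finset α)} (h : ValidOrdering k (l ++ l')) :
    ValidOrdering k l := by
  refine ⟨fun e he => h.1 e (List.mem_append_left l' he), fun i h0 hi => ?_⟩
  have hget : ∀ j ≤ i, (l ++ l').getD j ∅ = l.getD j ∅ :=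
    fun j hj => List.getD_append _ _ _ _ (by omega)
  obtain ⟨v, hv, hnew, j, hj, hsub⟩ := h.2 i h0 (by simp; omega)
  rw [hget i le_rfl] at hv hsub
  exact ⟨v, hv, fun j' hj' => hget j' hj'.le ▸ hnew j' hj', j, hj, hget j hj.le ▸ hsub⟩

theorem exists_isLeaf {l : List (Finset α)} {e : Finset α} (hl : l ≠ [])
    (h : ValidOrdering k (l ++ [e])) : ∃ v, IsLeaf k l.toFinset e v := by
  have hget : ∀ j < l.length, (l ++ [e]).getD j ∅ = l.getD j ∅ :=
    fun j hj => List.getD_append _ _ _ _ hj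
  have hget_last := List.getD_append_singleton_length l e ∅
  obtain ⟨v, hv, hnew, j, hj, hsub⟩ := h.2 l.length (List.length_pos_iff.2 hl) (by simp)
  rw [hget_last, sdiff_singleton_eq_erase, hget j hj] at hsub
  refine ⟨v, h.1 e (by simp), hget_last ▸ hv, fun x hx => ?_,
    l.getD j ∅, List.mem_toFinset.2 (List.getD_mem_of_lt hj), hsub⟩
  obtain ⟨i, hi, rfl⟩ := List.exists_getD_eq_of_mem ∅ (List.mem_toFinset.1 hx)
  exact hget i hi ▸ hnew i hi

theorem hasUniquePseudopaths {es : List (Finset α)} (hes : es ≠ []) (h : ValidOrdering k es) :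
    HasUniquePseudopaths k es.toFinset := by
  induction es using List.reverseRecOn with
  | nil => exact absurd rfl hes
  | append_singleton l e ih =>
    rcases eq_or_ne l [] with rfl | hl
    · simpa using hasUniquePseudopaths_singleton (h.1 e (by simp))
    · obtain ⟨v, hv⟩ := h.exists_isLeaf hl
      rw [show (l ++ [e]).toFinset = insert e l.toFinset by ext; simp]
      exact hv.hasUniquePseudopaths (ih hl h.of_append)

end ValidOrdering

theorem pseudopath_unique_general [DecidableEq α] (k : ℕ)
    (T : Finset (Finset α)) (hT : IsTightTree k T)
    (f f' : Finset α) (hf : InShadow k T f) (hf' : InShadow k T f') (hne : f ≠ f') :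
    ∃! P : Finset (Finset α), IsPseudopathBetween k T f f' P := by
  obtain ⟨es, hes, -, rfl, hval⟩ := hT
  exact (hval.hasUniquePseudopaths hes f f' hf hf' hne).isPseudopathBetween

/-- In a tight `k`-tree `T` (`k ≥ 2`), any two distinct elements `f, f'` of
the shadow of `T` are connected by a unique `(f, f')`-pseudopath. -/
theorem pseudopath_unique [DecidableEq α] (k : ℕ) (hk : 2 ≤ k)
    (T : Finset (Finset α)) (hT : IsTightTree k T)
    (f f' : Finset α) (hf : InShadow k T f) (hf' : InShadow k T f') (hne : f ≠ f') :
    ∃! P : Finset (Finset α), IsPseudopathBetween k T f f' P :=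
  pseudopath_unique_general k T hT f f' hf hf' hne
end

section
/- Let P be an (f, f′)-pseudopath of uniformity k ≥ 2 with valid ordering e_1, …, e_t, and let L = (L_1, …, L_m) be a layering for (P, f). For j ∈ [t] set r(j) = min{i : L_i ∩ e_j ≠ ∅}. Then (1) r(j+1) − r(j) ∈ {0, 1} for all j ∈ [t−1], and (2) |L_i| ≤ k·Δ_1(P) for all i ∈ [m]. -/
open Finset

attribute [local instance] Classical.propDecidable

variable {α : Type*}

/-- Let `P` be an `(f, f')`-pseudopath of uniformity `k ≥ 2` with valid
ordering `e_1, …, e_t`, and let `L = (L_1, …, L_m)` be a layering for `(P, f)`. For `j ∈ [t]`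
let `r j` be the least index `i` with `L i ∩ e_j ≠ ∅`. Then (1) `r (j+1) − r j ∈ {0, 1}` for
all `j ∈ [t−1]`, and (2) `|L i| ≤ k · Δ₁(P)` for all `i ∈ [m]`. -/
theorem pseudopath_layering [DecidableEq α] (k : ℕ) (hk : 2 ≤ k)
    (es : List (Finset α)) (hne : es ≠ []) (hnd : es.Nodup)
    (f f' : Finset α) (hfcard : f.card = k - 1) (hf'card : f'.card = k - 1)
    (hpp : PseudopathOrdering k es)
    (hstart : ∀ i, i < es.length → (f ⊆ es.getD i ∅ ↔ i = 0))
    (hend : ∀ j, j < es.length → (f' ⊆ es.getD j ∅ ↔ j = es.length - 1))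
    (m : ℕ) (L : ℕ → Finset α) (hL : IsLayering k es.toFinset f m L)
    (r : ℕ → ℕ)
    (hr : ∀ j, 1 ≤ j → j ≤ es.length →
      1 ≤ r j ∧ r j ≤ m ∧ (L (r j) ∩ es.getD (j - 1) ∅).Nonempty ∧
      ∀ i, 1 ≤ i → i < r j → L i ∩ es.getD (j - 1) ∅ = ∅) :
    (∀ j, 1 ≤ j → j < es.length → r (j + 1) = r j ∨ r (j + 1) = r j + 1) ∧
    (∀ i, 1 ≤ i → i ≤ m → (L i).card ≤ k * hmaxDeg es.toFinset) := by

  set t := es.length with ht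
  have ht1 : 1 ≤ t := List.length_pos_iff.mpr hne
  have hEmemlist : ∀ j, j < t → es.getD j ∅ ∈ es := fun j hj => by
    rw [List.getD_eq_getElem es ∅ hj]; exact List.getElem_mem _
  have hEmem : ∀ j, j < t → es.getD j ∅ ∈ es.toFinset :=
    fun j hj => List.mem_toFinset.mpr (hEmemlist j hj)
  have hEcard : ∀ j, j < t → (es.getD j ∅).card = k := fun j hj => hpp.1.1 _ (hEmemlist j hj)
  have hEinj : ∀ a b, a < t → b < t → es.getD a ∅ = es.getD b ∅ → a = b := by
    intro a b ha hb h
    rw [List.getD_eq_getElem es ∅ ha, List.getD_eq_getElem es ∅ hb] at h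
    exact (List.Nodup.getElem_inj_iff hnd).mp h
  have ld := hL.layer_disjoint
  have hwin : ∀ j, 1 ≤ j → j ≤ t →
      (r j + (k-1) ≤ m ∧
       (∀ i, r j ≤ i → i < r j + k → ((es.getD (j-1) ∅) ∩ L i).card = 1) ∧
       (∀ i, 1 ≤ i → i ≤ m → (i < r j ∨ r j + k ≤ i) → (es.getD (j-1) ∅) ∩ L i = ∅) ∧
       (∀ x ∈ es.getD (j-1) ∅, ∃ i, r j ≤ i ∧ i < r j + k ∧ x ∈ L i)) := by
    intro j hj1 hjt
    obtain ⟨j₁, hj₁1, hj₁m, hj₁⟩ := hL.window (es.getD (j-1) ∅) (hEmem _ (by omega))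
    set e := es.getD (j-1) ∅ with he
    have hbiU : (Finset.Ico j₁ (j₁ + k)).biUnion (fun i => e ∩ L i) = e := by
      apply Finset.eq_of_subset_of_card_le
      · intro x hx
        obtain ⟨i, _, hxi⟩ := Finset.mem_biUnion.mp hx
        exact (Finset.mem_inter.mp hxi).1
      · have hd : ∀ i ∈ Finset.Ico j₁ (j₁+k), ∀ i' ∈ Finset.Ico j₁ (j₁+k), i ≠ i' →
            Disjoint (e ∩ L i) (e ∩ L i') := by
          intro i hi i' hi' hii'
          rw [Finset.mem_Ico] at hi hi'
          exact Finset.disjoint_of_subset_left Finset.inter_subset_right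
            (Finset.disjoint_of_subset_right Finset.inter_subset_right
              (ld i i' (by omega) (by omega) (by omega) (by omega) hii'))
        rw [Finset.card_biUnion hd]
        have : ∀ i ∈ Finset.Ico j₁ (j₁+k), (e ∩ L i).card = 1 := by
          intro i hi; rw [Finset.mem_Ico] at hi; exact hj₁ i hi.1 hi.2
        rw [Finset.sum_congr rfl this, Finset.sum_const, smul_eq_mul, mul_one, Nat.card_Ico,
          hEcard (j-1) (by omega)]
        omega
    have hout : ∀ i, 1 ≤ i → i ≤ m → (i < j₁ ∨ j₁ + k ≤ i) → e ∩ L i = ∅ := by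
      intro i h1 h2 h3
      rw [Finset.eq_empty_iff_forall_notMem]
      intro x hx
      have hxE : x ∈ e := (Finset.mem_inter.mp hx).1
      rw [← hbiU] at hxE
      obtain ⟨i', hi'A, hxi'⟩ := Finset.mem_biUnion.mp hxE
      rw [Finset.mem_Ico] at hi'A
      have hne' : i' ≠ i := by omega
      exact Finset.disjoint_left.mp
        (ld i' i (by omega) (by omega) h1 h2 hne')
        (Finset.mem_inter.mp hxi').2 (Finset.mem_inter.mp hx).2
    obtain ⟨hr1, hrm, hrne, hrmin⟩ := hr j hj1 hjt
    have hrj : r j = j₁ := by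
      have h1 : ¬ j₁ < r j := by
        intro h
        have h2 := hrmin j₁ hj₁1 h
        have hc := hj₁ j₁ le_rfl (by omega)
        rw [Finset.inter_comm] at hc
        rw [he, h2] at hc
        simp at hc
      have h2 : ¬ r j < j₁ := by
        intro h
        have h3 := hout (r j) hr1 hrm (Or.inl h)
        rw [Finset.inter_comm] at h3
        rw [← he] at hrne
        rw [h3] at hrne
        exact absurd hrne (by simp)
      omega
    rw [hrj]
    refine ⟨hj₁m, fun i h1 h2 => hj₁ i h1 h2, hout, ?_⟩
    intro x hx
    rw [← hbiU] at hx
    obtain ⟨i, hiA, hxi⟩ := Finset.mem_biUnion.mp hx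
    rw [Finset.mem_Ico] at hiA
    exact ⟨i, hiA.1, hiA.2, (Finset.mem_inter.mp hxi).2⟩
  -- consecutive window starts differ by at most 1
  have hdiff : ∀ a b (C : Finset α), 1 ≤ a → a ≤ t → 1 ≤ b → b ≤ t →
      C ⊆ es.getD (a-1) ∅ → C ⊆ es.getD (b-1) ∅ → C.card = k - 1 → r b ≤ r a + 1 := by
    intro a b C ha1 hat hb1 hbt hCa hCb hCcard
    by_contra h
    push_neg at h
    have hsub : C ⊆ (Finset.Ico (r b) (r a + k)).biUnion
        (fun i => (es.getD (a-1) ∅) ∩ L i) := by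
      intro x hx
      obtain ⟨i, hi1, hi2, hxL⟩ := (hwin a ha1 hat).2.2.2 x (hCa hx)
      have hige : r b ≤ i := by
        by_contra hlt
        push_neg at hlt
        have he2 := (hr b hb1 hbt).2.2.2 i (by have := (hr a ha1 hat).1; omega) hlt
        exact Finset.eq_empty_iff_forall_notMem.mp he2 x
          (Finset.mem_inter.mpr ⟨hxL, hCb hx⟩)
      exact Finset.mem_biUnion.mpr ⟨i, Finset.mem_Ico.mpr ⟨hige, hi2⟩,
        Finset.mem_inter.mpr ⟨hCa hx, hxL⟩⟩
    have h1 : C.card ≤ ∑ i ∈ Finset.Ico (r b) (r a + k), ((es.getD (a-1) ∅) ∩ L i).card :=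
      le_trans (Finset.card_le_card hsub) Finset.card_biUnion_le
    have h2 : ∀ i ∈ Finset.Ico (r b) (r a + k), ((es.getD (a-1) ∅) ∩ L i).card = 1 := by
      intro i hi
      rw [Finset.mem_Ico] at hi
      exact (hwin a ha1 hat).2.1 i (by omega) hi.2
    rw [Finset.sum_congr rfl h2, Finset.sum_const, smul_eq_mul, mul_one, Nat.card_Ico] at h1
    omega
  have hstep : ∀ j, 1 ≤ j → j < t → r j ≤ r (j+1) + 1 ∧ r (j+1) ≤ r j + 1 := by
    intro j hj1 hjt
    obtain ⟨v, hvE, hvnew, hCsub, -⟩ := hpp.2 j (by omega) hjt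
    have hCcard : (es.getD j ∅ \ {v}).card = k - 1 := by
      rw [Finset.card_sdiff_of_subset (Finset.singleton_subset_iff.mpr hvE), Finset.card_singleton,
        hEcard j hjt]
    have hCj : es.getD j ∅ \ {v} ⊆ es.getD ((j+1)-1) ∅ := by
      rw [show j+1-1 = j from rfl]; exact Finset.sdiff_subset
    constructor
    · exact hdiff (j+1) j _ (by omega) (by omega) hj1 (by omega) hCj hCsub hCcard
    · exact hdiff j (j+1) _ hj1 (by omega) (by omega) (by omega) hCsub hCj hCcard
  -- no decreasing steps
  have hnodec : ∀ i j, 1 ≤ j → j < t → r j = i + 1 → r (j+1) ≠ i := by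
    intro i
    induction i using Nat.strong_induction_on with
    | _ i IH =>
      intro j hj1 hjt hrj hrj1
      obtain ⟨hi1, him, hne', -⟩ := hr (j+1) (by omega) (by omega)
      rw [hrj1] at hi1 him hne'
      obtain ⟨v, hvE, hvnew, hCsub, -⟩ := hpp.2 j (by omega) hjt
      obtain ⟨x, hx⟩ := hne'
      have hxL : x ∈ L i := (Finset.mem_inter.mp hx).1
      have hxE : x ∈ es.getD j ∅ := by
        have := (Finset.mem_inter.mp hx).2
        rwa [show j+1-1 = j from rfl] at this
      have hxv : x = v := by
        by_contra hne2
        have hxE' : x ∈ es.getD (j-1) ∅ :=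
          hCsub (Finset.mem_sdiff.mpr ⟨hxE, by simp [hne2]⟩)
        have he2 := (hr j hj1 (le_of_lt hjt)).2.2.2 i hi1 (by omega)
        exact Finset.eq_empty_iff_forall_notMem.mp he2 x
          (Finset.mem_inter.mpr ⟨hxL, hxE'⟩)
      have hvL : v ∈ L i := hxv ▸ hxL
      rcases Nat.lt_or_ge i 2 with hi2 | hi2
      · -- i = 1 : contradiction with the root layer
        have hi1' : i = 1 := by omega
        subst hi1'
        obtain ⟨u, hu⟩ := Finset.card_eq_one.mp hL.first_card
        have huf : u ∈ f := by
          have hcard1 := hL.root_inter 1 le_rfl (by omega)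
          obtain ⟨w, hw⟩ := Finset.card_pos.mp (by rw [hcard1]; norm_num)
          have hwu : w = u := by
            have := (Finset.mem_inter.mp hw).2
            rw [hu] at this
            simpa using this
          exact hwu ▸ (Finset.mem_inter.mp hw).1
        have hvu : v = u := by
          have := hvL
          rw [hu] at this
          simpa using this
        have hf0 : f ⊆ es.getD 0 ∅ := (hstart 0 (by omega)).mpr rfl
        exact hvnew 0 (by omega) (hf0 (hvu ▸ huf))
      · -- i ≥ 2 : use the link condition
        obtain ⟨w, hwL, e, heT, hve, hwe⟩ :=
          hL.link (i-1) (by omega) (by omega) v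
            (by rw [show i - 1 + 1 = i from by omega]; exact hvL)
        obtain ⟨b, hb, hEb⟩ := List.mem_iff_getElem.mp (List.mem_toFinset.mp heT)
        have hEb' : es.getD b ∅ = e := by rw [List.getD_eq_getElem es ∅ hb]; exact hEb
        have hbj : j ≤ b := by
          by_contra hlt
          push_neg at hlt
          exact hvnew b hlt (hEb' ▸ hve)
        have hrb : r (b+1) ≤ i - 1 := by
          by_contra hgt
          push_neg at hgt
          have he2 := (hr (b+1) (by omega) (by omega)).2.2.2 (i-1) (by omega) hgt
          refine Finset.eq_empty_iff_forall_notMem.mp he2 w (Finset.mem_inter.mpr ⟨hwL, ?_⟩)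
          rw [show b+1-1 = b from rfl]
          exact hEb' ▸ hwe
        have claim : ∀ a, j ≤ a → a < t → i ≤ r (a+1) := by
          intro a hja
          induction a, hja using Nat.le_induction with
          | base => intro _; rw [hrj1]
          | succ a hja IH2 =>
            intro hat1
            have hat : a < t := by omega
            have h1 : i ≤ r (a+1) := IH2 hat
            by_contra h2
            push_neg at h2
            have hs := hstep (a+1) (by omega) hat1
            have hra1 : r (a+1) = i := by omega
            exact IH (i-1) (by omega) (a+1) (by omega) hat1 (by omega) (by omega)
        exact absurd (claim b hbj hb) (by omega)
  have part1 : ∀ j, 1 ≤ j → j < t → r (j+1) = r j ∨ r (j+1) = r j + 1 := by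
    intro j h1 h2
    have hs := hstep j h1 h2
    have hno : ¬ r (j+1) < r j := by
      intro hlt
      exact hnodec (r (j+1)) j h1 h2 (by omega) rfl
    omega
  have mono : ∀ a b, 1 ≤ a → a ≤ b → b ≤ t → r a ≤ r b := by
    intro a b ha hab
    induction b, hab using Nat.le_induction with
    | base => intro _; exact le_rfl
    | succ b hab IH2 =>
      intro hbt
      have h1 := part1 b (by omega) (by omega)
      have h2 := IH2 (by omega)
      omega
  -- common vertex along a run of equal window starts, s ≥ 2
  have hCV : ∀ s, 2 ≤ s → ∀ x j, 1 ≤ j → r j = s → x ∈ es.getD (j-1) ∅ → x ∈ L s →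
      ∀ j', j ≤ j' → j' ≤ t → r j' = s → x ∈ es.getD (j'-1) ∅ := by
    intro s hs x j hj1 hrj hxE hxL j' hjj'
    induction j', hjj' using Nat.le_induction with
    | base => intro _ _; exact hxE
    | succ a hja IH2 =>
      intro hat1 hra1
      have hat : a ≤ t := by omega
      have hra : r a = s := by
        have h1 := mono a (a+1) (by omega) (by omega) hat1
        have h2 := mono j a hj1 hja hat
        omega
      have hxEa := IH2 hat hra
      obtain ⟨v, hvE, hvnew, hCsub, -⟩ := hpp.2 a (by omega) (by omega)
      obtain ⟨-, -, hne', -⟩ := hr (a+1) (by omega) hat1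
      obtain ⟨y, hy⟩ := hne'
      rw [hra1] at hy
      have hyL : y ∈ L s := (Finset.mem_inter.mp hy).1
      have hyE : y ∈ es.getD a ∅ := by
        have := (Finset.mem_inter.mp hy).2
        rwa [show a+1-1 = a from rfl] at this
      by_cases hyv : y = v
      · exfalso
        have hvL : v ∈ L s := hyv ▸ hyL
        have hsm : s ≤ m := by
          have := (hr (a+1) (by omega) hat1).2.1
          omega
        obtain ⟨w, hwL, e, heT, hve, hwe⟩ :=
          hL.link (s-1) (by omega) (by omega) v
            (by rw [show s - 1 + 1 = s from by omega]; exact hvL)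
        obtain ⟨b, hb, hEb⟩ := List.mem_iff_getElem.mp (List.mem_toFinset.mp heT)
        have hEb' : es.getD b ∅ = e := by rw [List.getD_eq_getElem es ∅ hb]; exact hEb
        have hba : a ≤ b := by
          by_contra hlt
          push_neg at hlt
          exact hvnew b hlt (hEb' ▸ hve)
        have hrb : r (b+1) ≤ s - 1 := by
          by_contra hgt
          push_neg at hgt
          have he2 := (hr (b+1) (by omega) (by omega)).2.2.2 (s-1) (by omega) hgt
          refine Finset.eq_empty_iff_forall_notMem.mp he2 w (Finset.mem_inter.mpr ⟨hwL, ?_⟩)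
          rw [show b+1-1 = b from rfl]
          exact hEb' ▸ hwe
        have := mono (a+1) (b+1) (by omega) (by omega) (by omega)
        omega
      · have hyE' : y ∈ es.getD (a-1) ∅ :=
          hCsub (Finset.mem_sdiff.mpr ⟨hyE, by simp [hyv]⟩)
        have hcard1 := (hwin a (by omega) hat).2.1 s (by omega) (by omega)
        have hxy : x = y :=
          Finset.card_le_one.mp (le_of_eq hcard1) x
            (Finset.mem_inter.mpr ⟨hxEa, hxL⟩) y (Finset.mem_inter.mpr ⟨hyE', hyL⟩)
        rw [show a+1-1 = a from rfl]
        exact hxy ▸ hyE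
  -- each fiber of r has size at most the maximum degree
  have hfiber : ∀ s, ((Finset.Icc 1 t).filter (fun j => r j = s)).card ≤
      hmaxDeg es.toFinset := by
    intro s
    set F := (Finset.Icc 1 t).filter (fun j => r j = s) with hF
    rcases F.eq_empty_or_nonempty with hFe | hFne
    · rw [hFe]; simp
    · have hmemF : ∀ j ∈ F, 1 ≤ j ∧ j ≤ t ∧ r j = s := by
        intro j hj
        rw [hF, Finset.mem_filter, Finset.mem_Icc] at hj
        exact ⟨hj.1.1, hj.1.2, hj.2⟩
      obtain ⟨hj₀1, hj₀t, hrj₀⟩ := hmemF (F.min' hFne) (F.min'_mem hFne)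
      obtain ⟨-, -, hne', -⟩ := hr (F.min' hFne) hj₀1 hj₀t
      obtain ⟨x, hx⟩ := hne'
      have hxL : x ∈ L s := by rw [← hrj₀]; exact (Finset.mem_inter.mp hx).1
      have hxE0 : x ∈ es.getD (F.min' hFne - 1) ∅ := (Finset.mem_inter.mp hx).2
      have hxall : ∀ j ∈ F, x ∈ es.getD (j-1) ∅ := by
        intro j hjF
        obtain ⟨hj1, hjt, hrjs⟩ := hmemF j hjF
        rcases Nat.lt_or_ge s 2 with h2 | h2
        · have hseq : s = 1 := by
            have := (hr j hj1 hjt).1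
            omega
          obtain ⟨-, -, hne2, -⟩ := hr j hj1 hjt
          obtain ⟨y, hy⟩ := hne2
          have hyx : y = x := by
            have hy1 : y ∈ L 1 := by
              rw [← hseq, ← hrjs]
              exact (Finset.mem_inter.mp hy).1
            have hx1 : x ∈ L 1 := hseq ▸ hxL
            exact Finset.card_le_one.mp (le_of_eq hL.first_card) y hy1 x hx1
          exact hyx ▸ (Finset.mem_inter.mp hy).2
        · exact hCV s h2 x (F.min' hFne) hj₀1 hrj₀ hxE0 hxL j (F.min'_le j hjF) hjt hrjs
      have hxv : x ∈ hverts es.toFinset :=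
        Finset.mem_sup.mpr ⟨es.getD (F.min' hFne - 1) ∅, hEmem _ (by omega), hxE0⟩
      calc F.card ≤ (es.toFinset.filter (fun e => x ∈ e)).card := by
            apply Finset.card_le_card_of_injOn (fun j => es.getD (j-1) ∅)
            · intro j hj
              obtain ⟨h1, h2, -⟩ := hmemF j hj
              exact Finset.mem_filter.mpr ⟨hEmem _ (by omega), hxall j hj⟩
            · intro a haF b hbF hab
              obtain ⟨ha1, hat, -⟩ := hmemF a (Finset.mem_coe.mp haF)
              obtain ⟨hb1, hbt, -⟩ := hmemF b (Finset.mem_coe.mp hbF)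
              have := hEinj (a-1) (b-1) (by omega) (by omega) hab
              omega
        _ ≤ hmaxDeg es.toFinset := Finset.le_sup (f := vdeg es.toFinset) hxv
  refine ⟨part1, ?_⟩
  intro i hi1 him
  have hmain : (L i).card ≤
      ((Finset.Icc 1 t).filter (fun j => r j ≤ i ∧ i < r j + k)).card := by
    have hex : ∀ u ∈ L i, ∃ j, (1 ≤ j ∧ j ≤ t) ∧ u ∈ es.getD (j-1) ∅ := by
      intro u hu
      obtain ⟨e, heT, hue⟩ := Finset.mem_sup.mp (hL.layer_subset i hi1 him hu)
      obtain ⟨b, hb, hEb⟩ := List.mem_iff_getElem.mp (List.mem_toFinset.mp heT)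
      refine ⟨b+1, ⟨by omega, by omega⟩, ?_⟩
      rw [show b+1-1 = b from rfl, List.getD_eq_getElem es ∅ hb, hEb]
      exact hue
    set g : α → ℕ := fun u =>
      if h : ∃ j, (1 ≤ j ∧ j ≤ t) ∧ u ∈ es.getD (j-1) ∅ then h.choose else 0 with hg
    have hgspec : ∀ u ∈ L i, (1 ≤ g u ∧ g u ≤ t) ∧ u ∈ es.getD (g u - 1) ∅ := by
      intro u hu
      rw [hg]
      simp only
      rw [dif_pos (hex u hu)]
      exact (hex u hu).choose_spec
    have hgS : ∀ u ∈ L i, g u ∈ (Finset.Icc 1 t).filter (fun j => r j ≤ i ∧ i < r j + k) := by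
      intro u hu
      obtain ⟨⟨h1, h2⟩, h3⟩ := hgspec u hu
      have hwindow : r (g u) ≤ i ∧ i < r (g u) + k := by
        by_contra hC
        have hemp := (hwin (g u) h1 h2).2.2.1 i hi1 him (by omega)
        exact Finset.eq_empty_iff_forall_notMem.mp hemp u (Finset.mem_inter.mpr ⟨h3, hu⟩)
      exact Finset.mem_filter.mpr ⟨Finset.mem_Icc.mpr ⟨h1, h2⟩, hwindow⟩
    apply Finset.card_le_card_of_injOn g hgS
    intro u hu u' hu' heq
    have hu2 : u ∈ L i := Finset.mem_coe.mp hu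
    have hu2' : u' ∈ L i := Finset.mem_coe.mp hu'
    obtain ⟨⟨h1, h2⟩, h3⟩ := hgspec u hu2
    obtain ⟨⟨h1', h2'⟩, h3'⟩ := hgspec u' hu2'
    have hw1 := Finset.mem_filter.mp (hgS u hu2)
    have hcard1 := (hwin (g u) h1 h2).2.1 i hw1.2.1 hw1.2.2
    refine Finset.card_le_one.mp (le_of_eq hcard1) u
      (Finset.mem_inter.mpr ⟨h3, hu2⟩) u' (Finset.mem_inter.mpr ⟨?_, hu2'⟩)
    rw [heq]
    exact h3'
  calc (L i).card ≤ _ := hmain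
    _ ≤ ((Finset.Icc (i+1-k) i).biUnion
          (fun s => (Finset.Icc 1 t).filter (fun j => r j = s))).card := by
        apply Finset.card_le_card
        intro j hj
        rw [Finset.mem_filter] at hj
        exact Finset.mem_biUnion.mpr ⟨r j, Finset.mem_Icc.mpr (by omega),
          Finset.mem_filter.mpr ⟨hj.1, rfl⟩⟩
    _ ≤ ∑ s ∈ Finset.Icc (i+1-k) i, ((Finset.Icc 1 t).filter (fun j => r j = s)).card :=
        Finset.card_biUnion_le
    _ ≤ ∑ s ∈ Finset.Icc (i+1-k) i, hmaxDeg es.toFinset :=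
        Finset.sum_le_sum (fun s _ => hfiber s)
    _ = (Finset.Icc (i+1-k) i).card * hmaxDeg es.toFinset := by
        rw [Finset.sum_const, smul_eq_mul]
    _ ≤ k * hmaxDeg es.toFinset :=
        Nat.mul_le_mul_right _ (by rw [Nat.card_Icc]; omega)
end

section
/- Let (T, r, L) be a layered tight k-tree with L = (L_1, …, L_m), Δ_1(T) ≤ Δ and k ≥ 2. Let F be the set of all edges of T meeting L_1 and let S = {e \ L_1 : e ∈ F} ⊆ ∂T. Then (i) each s ∈ S is L-layered and has rank 2, (ii) |F| = |S| ≤ Δ, and (iii) E(T) is the disjoint union of F and the sets E(T_s) for s ∈ S, which are pairwise disjoint. -/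
open Finset

attribute [local instance] Classical.propDecidable

variable {α : Type*}

/-- In the valid ordering `es`, the edge with index `j` has anchor `x`: its new vertex `v`
(the vertex not appearing in any earlier edge) satisfies `e_j \ {v} = x`. -/
def AnchorIdx [DecidableEq α] (es : List (Finset α)) (x : Finset α) (j : ℕ) : Prop :=
  0 < j ∧ j < es.length ∧
  ∃ v ∈ es.getD j ∅, (∀ l, l < j → v ∉ es.getD l ∅) ∧ (es.getD j ∅) \ {v} = x

/-- In the valid ordering `es`, the edge with index `i` is the parent of the edge with
index `j`: `i` is the least index such that `e_j` minus its new vertex is contained in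
`e_i`. -/
def IsParentIdx [DecidableEq α] (es : List (Finset α)) (i j : ℕ) : Prop :=
  0 < j ∧ j < es.length ∧ i < j ∧
  ∃ v ∈ es.getD j ∅,
    (∀ l, l < j → v ∉ es.getD l ∅) ∧
    (es.getD j ∅) \ {v} ⊆ es.getD i ∅ ∧
    ∀ l, l < i → ¬ (es.getD j ∅) \ {v} ⊆ es.getD l ∅

/-- The indices of edges of the subtree induced by `x` (with respect to the valid ordering
`es`): edges whose anchor is `x`, together with all their descendants. -/
inductive InducedIdx {α : Type*} [DecidableEq α] (es : List (Finset α)) (x : Finset α) : ℕ → Prop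
  | base (j : ℕ) (h : AnchorIdx es x j) : InducedIdx es x j
  | step (i j : ℕ) (hi : InducedIdx es x i) (hij : IsParentIdx es i j) : InducedIdx es x j

/-- The subtree of `es.toFinset` induced by `x` (with respect to the valid ordering `es`). -/
noncomputable def inducedTree [DecidableEq α] (es : List (Finset α)) (x : Finset α) :
    Finset (Finset α) :=
  ((Finset.range es.length).filter fun j => InducedIdx es x j).image fun j => es.getD j ∅

section CutHelpers

variable [DecidableEq α] {k : ℕ} {es : List (Finset α)}

lemma getD_mem_of_lt {j : ℕ} (hj : j < es.length) : es.getD j ∅ ∈ es := by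
  rw [List.getD_eq_getElem es ∅ hj]
  exact List.getElem_mem hj

lemma new_unique (hvo : ValidOrdering k es) {j : ℕ} (h0 : 0 < j) (hj : j < es.length)
    {v v' : α} (hv : v ∈ es.getD j ∅) (hvn : ∀ l < j, v ∉ es.getD l ∅)
    (hv' : v' ∈ es.getD j ∅) (hv'n : ∀ l < j, v' ∉ es.getD l ∅) : v = v' := by
  obtain ⟨v₀, hv₀, hv₀n, l, hl, hsub⟩ := hvo.2 j h0 hj
  have h1 : v = v₀ := by
    by_contra hne
    exact hvn l hl (hsub (Finset.mem_sdiff.2 ⟨hv, by simp [hne]⟩))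
  have h2 : v' = v₀ := by
    by_contra hne
    exact hv'n l hl (hsub (Finset.mem_sdiff.2 ⟨hv', by simp [hne]⟩))
  rw [h1, h2]

lemma parent_unique (hvo : ValidOrdering k es) {i i' j : ℕ}
    (h : IsParentIdx es i j) (h' : IsParentIdx es i' j) : i = i' := by
  obtain ⟨h0, hj, hij, v, hv, hvn, hsub, hmin⟩ := h
  obtain ⟨-, -, hij', v', hv', hv'n, hsub', hmin'⟩ := h'
  have hvv : v = v' := new_unique hvo h0 hj hv hvn hv' hv'n
  subst hvv
  by_contra hne
  rcases lt_or_gt_of_ne hne with hlt | hlt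
  · exact hmin' i hlt hsub
  · exact hmin i' hlt hsub'

lemma induced_no_u (hvo : ValidOrdering k es) {u : α} (hu0 : u ∈ es.getD 0 ∅)
    {s : Finset α} (hus : u ∉ s) {j : ℕ} (h : InducedIdx es s j) :
    u ∉ es.getD j ∅ ∧ 0 < j ∧ j < es.length := by
  induction h with
  | base j h =>
    obtain ⟨h0, hj, v, hv, hvn, heq⟩ := h
    refine ⟨fun hu => ?_, h0, hj⟩
    have hvu : u ≠ v := by rintro rfl; exact hvn 0 h0 hu0
    exact hus (heq ▸ Finset.mem_sdiff.2 ⟨hu, by simp [hvu]⟩)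
  | step i j hi hij ih =>
    obtain ⟨h0, hj, hlt, v, hv, hvn, hsub, hmin⟩ := hij
    refine ⟨fun hu => ?_, h0, hj⟩
    have hvu : u ≠ v := by rintro rfl; exact hvn 0 h0 hu0
    exact ih.1 (hsub (Finset.mem_sdiff.2 ⟨hu, by simp [hvu]⟩))

lemma anchor_parent_u (hvo : ValidOrdering k es) {u : α} (hu0 : u ∈ es.getD 0 ∅)
    {s : Finset α} (hus : u ∉ s) (hf : insert u s ∈ es) {i j : ℕ}
    (hij : IsParentIdx es i j) (ha : AnchorIdx es s j) : u ∈ es.getD i ∅ := by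
  obtain ⟨h0, hj, v, hv, hvn, heq⟩ := ha
  obtain ⟨-, -, hlt, v', hv', hv'n, hsub, hmin⟩ := hij
  have hvv : v = v' := new_unique hvo h0 hj hv hvn hv' hv'n
  subst hvv
  rw [heq] at hsub hmin
  obtain ⟨l', hl', hgl⟩ := List.mem_iff_getElem.1 hf
  have hgl' : es.getD l' ∅ = insert u s := by
    rw [List.getD_eq_getElem es ∅ hl']; exact hgl
  have hsubl' : s ⊆ es.getD l' ∅ := by
    rw [hgl']; exact Finset.subset_insert u s
  rcases Nat.eq_zero_or_pos l' with rfl | hl0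
  · have hi0 : i = 0 := by
      by_contra h
      exact hmin 0 (Nat.pos_of_ne_zero h) hsubl'
    rw [hi0]; exact hu0
  · obtain ⟨v₀, hv₀, hv₀n, l₀, hl₀, hsub₀⟩ := hvo.2 l' hl0 hl'
    have hv₀u : v₀ ≠ u := by rintro rfl; exact hv₀n 0 hl0 hu0
    have hv₀s : v₀ ∈ s := by
      have := hgl' ▸ hv₀
      rcases Finset.mem_insert.1 this with h | h
      · exact absurd h hv₀u
      · exact h
    have h1 : ¬ i < l' := fun h => hv₀n i h (hsub hv₀s)
    have h2 : ¬ l' < i := fun h => hmin l' h hsubl'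
    have : i = l' := le_antisymm (not_lt.1 h2) (not_lt.1 h1)
    rw [this, hgl']
    exact Finset.mem_insert_self u s

lemma induced_unique (hvo : ValidOrdering k es) {u : α} (hu0 : u ∈ es.getD 0 ∅)
    {s s' : Finset α} (hus : u ∉ s) (hus' : u ∉ s')
    (hf : insert u s ∈ es) (hf' : insert u s' ∈ es) :
    ∀ j, InducedIdx es s j → InducedIdx es s' j → s = s' := by
  intro j
  induction j using Nat.strong_induction_on with
  | _ j ih =>
    intro h h'
    cases h with
    | base _ ha =>
      cases h' with
      | base _ ha' =>
        obtain ⟨h0, hj, v, hv, hvn, heq⟩ := ha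
        obtain ⟨-, -, v', hv', hv'n, heq'⟩ := ha'
        have hvv : v = v' := new_unique hvo h0 hj hv hvn hv' hv'n
        rw [← heq, ← heq', hvv]
      | step i _ hi hij =>
        exact absurd (anchor_parent_u hvo hu0 hus hf hij ha)
          (induced_no_u hvo hu0 hus' hi).1
    | step i _ hi hij =>
      cases h' with
      | base _ ha' =>
        exact absurd (anchor_parent_u hvo hu0 hus' hf' hij ha')
          (induced_no_u hvo hu0 hus hi).1
      | step i' _ hi' hij' =>
        have hii : i = i' := parent_unique hvo hij hij'
        exact ih i hij.2.2.1 hi (hii ▸ hi')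

lemma covered (hk : 1 ≤ k) (hvo : ValidOrdering k es) {u : α} (hu0 : u ∈ es.getD 0 ∅) :
    ∀ j, j < es.length → u ∉ es.getD j ∅ →
      ∃ s, insert u s ∈ es ∧ u ∉ s ∧ InducedIdx es s j := by
  intro j
  induction j using Nat.strong_induction_on with
  | _ j ih =>
    intro hj hu
    have h0 : 0 < j := Nat.pos_of_ne_zero (by rintro rfl; exact hu hu0)
    obtain ⟨v, hv, hvn, l, hl, hsub⟩ := hvo.2 j h0 hj
    have hex : ∃ l, es.getD j ∅ \ {v} ⊆ es.getD l ∅ := ⟨l, hsub⟩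
    set i := Nat.find hex with hidef
    have hi : es.getD j ∅ \ {v} ⊆ es.getD i ∅ := Nat.find_spec hex
    have hmin : ∀ l < i, ¬ es.getD j ∅ \ {v} ⊆ es.getD l ∅ := fun l hl => Nat.find_min hex hl
    have hil : i ≤ l := Nat.find_le hsub
    have hij : i < j := lt_of_le_of_lt hil hl
    have hpar : IsParentIdx es i j := ⟨h0, hj, hij, v, hv, hvn, hi, hmin⟩
    by_cases hui : u ∈ es.getD i ∅
    · refine ⟨es.getD j ∅ \ {v}, ?_, fun h => hu (Finset.mem_sdiff.1 h).1,
        InducedIdx.base j ⟨h0, hj, v, hv, hvn, rfl⟩⟩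
      have hins : insert u (es.getD j ∅ \ {v}) = es.getD i ∅ := by
        apply Finset.eq_of_subset_of_card_le
        · exact Finset.insert_subset hui hi
        · have hcj : (es.getD j ∅).card = k := hvo.1 _ (getD_mem_of_lt hj)
          have hci : (es.getD i ∅).card = k := hvo.1 _ (getD_mem_of_lt (hij.trans hj))
          have hcs : (es.getD j ∅ \ {v}).card = k - 1 := by
            rw [Finset.card_sdiff_of_subset (Finset.singleton_subset_iff.2 hv), hcj,
              Finset.card_singleton]
          rw [hci, Finset.card_insert_of_notMem (fun h => hu (Finset.mem_sdiff.1 h).1), hcs]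
          omega
      rw [hins]
      exact getD_mem_of_lt (hij.trans hj)
    · obtain ⟨s, h1, h2, h3⟩ := ih i hij (hij.trans hj) hui
      exact ⟨s, h1, h2, InducedIdx.step i j h3 hpar⟩

end CutHelpers

/-- Let `(T, r, L)` be a layered tight `k`-tree (with a valid ordering `es`
starting at the root) with `Δ₁(T) ≤ Δ` and `k ≥ 2`. Let `F` be the set of edges meeting `L 1`
and let `S = {e \ L 1 : e ∈ F}`. Then (i) each `s ∈ S` is `L`-layered of rank `2`,
(ii) `|F| = |S| ≤ Δ`, and (iii) `E(T)` is the disjoint union of `F` and the edge sets of the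
induced subtrees `T_s`, `s ∈ S`. -/

theorem cut_lemma [DecidableEq α] (k Δ : ℕ) (hk : 2 ≤ k) (hΔ : 2 ≤ Δ)
    (es : List (Finset α)) (hne : es ≠ []) (hnd : es.Nodup)
    (T : Finset (Finset α)) (hes : es.toFinset = T) (hvo : ValidOrdering k es)
    (r : Finset α) (hr : InShadow k T r) (hroot : r ⊆ es.getD 0 ∅)
    (m : ℕ) (L : ℕ → Finset α) (hL : IsLayering k T r m L)
    (hdeg : ∀ v, vdeg T v ≤ Δ)
    (F : Finset (Finset α)) (hF : F = T.filter fun e => (e ∩ L 1).Nonempty)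
    (S : Finset (Finset α)) (hS : S = F.image fun e => e \ L 1) :
    (∀ s ∈ S, ∀ i, 2 ≤ i → i ≤ k → (s ∩ L i).card = 1) ∧
    (S.card = F.card ∧ F.card ≤ Δ) ∧
    (T = F ∪ S.biUnion (fun s => inducedTree es s) ∧
      (∀ s ∈ S, Disjoint F (inducedTree es s)) ∧
      (∀ s ∈ S, ∀ s' ∈ S, s ≠ s' → Disjoint (inducedTree es s) (inducedTree es s'))) := by
  subst hes hF hS
  -- the unique vertex of `L 1`
  obtain ⟨u, hL1⟩ := Finset.card_eq_one.1 hL.first_card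
  have hur : u ∈ r := by
    have h1 : (r ∩ L 1).card = 1 := hL.root_inter 1 le_rfl (by omega)
    obtain ⟨x, hx⟩ := Finset.card_pos.1 (by omega : 0 < (r ∩ L 1).card)
    have hx' := Finset.mem_inter.1 hx
    have : x = u := by
      have := hx'.2; rw [hL1] at this; exact Finset.mem_singleton.1 this
    exact this ▸ hx'.1
  have hu0 : u ∈ es.getD 0 ∅ := hroot hur
  have huL1 : u ∈ L 1 := by rw [hL1]; exact Finset.mem_singleton_self u
  -- membership characterizations
  have hFmem : ∀ e, e ∈ (es.toFinset.filter fun e => (e ∩ L 1).Nonempty) ↔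
      e ∈ es ∧ u ∈ e := by
    intro e
    rw [Finset.mem_filter, List.mem_toFinset, hL1]
    constructor
    · rintro ⟨h1, x, hx⟩
      have hx' := Finset.mem_inter.1 hx
      have : x = u := Finset.mem_singleton.1 hx'.2
      exact ⟨h1, this ▸ hx'.1⟩
    · rintro ⟨h1, h2⟩
      exact ⟨h1, ⟨u, Finset.mem_inter.2 ⟨h2, Finset.mem_singleton_self u⟩⟩⟩
  have hSmem : ∀ s ∈ ((es.toFinset.filter fun e => (e ∩ L 1).Nonempty).image
      fun e => e \ L 1), u ∉ s ∧ insert u s ∈ es ∧ ∃ e ∈ es, u ∈ e ∧ s = e \ L 1 := by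
    intro s hs
    obtain ⟨e, he, rfl⟩ := Finset.mem_image.1 hs
    obtain ⟨he1, he2⟩ := (hFmem e).1 he
    refine ⟨fun h => (Finset.mem_sdiff.1 h).2 huL1, ?_, e, he1, he2, rfl⟩
    have : insert u (e \ L 1) = e := by
      rw [hL1]
      ext x
      simp only [Finset.mem_insert, Finset.mem_sdiff, Finset.mem_singleton]
      constructor
      · rintro (rfl | ⟨h, -⟩) <;> [exact he2; exact h]
      · intro hx
        by_cases hxu : x = u
        · exact Or.inl hxu
        · exact Or.inr ⟨hx, hxu⟩
    rw [this]; exact he1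
  -- Part (i)
  have part1 : ∀ s ∈ ((es.toFinset.filter fun e => (e ∩ L 1).Nonempty).image
      fun e => e \ L 1), ∀ i, 2 ≤ i → i ≤ k → (s ∩ L i).card = 1 := by
    intro s hs i h2i hik
    obtain ⟨hus, hins, e, hees, hue, rfl⟩ := hSmem s hs
    obtain ⟨j, hj1, hjm, hw⟩ := hL.window e (List.mem_toFinset.2 hees)
    have hcard_e : e.card = k := hvo.1 e hees
    -- e is the disjoint union of the e ∩ L i over the window
    have hdisj : ∀ a ∈ Finset.Ico j (j + k), ∀ b ∈ Finset.Ico j (j + k), a ≠ b →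
        Disjoint (e ∩ L a) (e ∩ L b) := by
      intro a ha b hb hab
      have ha' := Finset.mem_Ico.1 ha
      have hb' := Finset.mem_Ico.1 hb
      exact Finset.disjoint_of_subset_left Finset.inter_subset_right
        (Finset.disjoint_of_subset_right Finset.inter_subset_right
          (hL.layer_disjoint a b (by omega) (by omega) (by omega) (by omega) hab))
    have hU : ((Finset.Ico j (j + k)).biUnion fun i => e ∩ L i) = e := by
      apply Finset.eq_of_subset_of_card_le
      · intro x hx
        obtain ⟨a, -, hx⟩ := Finset.mem_biUnion.1 hx
        exact (Finset.mem_inter.1 hx).1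
      · rw [Finset.card_biUnion hdisj, hcard_e]
        calc k = ∑ _x ∈ Finset.Ico j (j + k), 1 := by
                  rw [Finset.sum_const, smul_eq_mul, Nat.card_Ico]
                  omega
             _ ≤ ∑ x ∈ Finset.Ico j (j + k), (e ∩ L x).card := by
                  apply Finset.sum_le_sum
                  intro x hx
                  have hx' := Finset.mem_Ico.1 hx
                  rw [hw x hx'.1 hx'.2]
    have hj_eq : j = 1 := by
      have : u ∈ ((Finset.Ico j (j + k)).biUnion fun i => e ∩ L i) := by
        rw [hU]; exact hue
      obtain ⟨a, ha, hua⟩ := Finset.mem_biUnion.1 this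
      have ha' := Finset.mem_Ico.1 ha
      have huLa : u ∈ L a := (Finset.mem_inter.1 hua).2
      by_cases ha1 : a = 1
      · omega
      · exfalso
        exact Finset.disjoint_left.1
          (hL.layer_disjoint 1 a (by omega) (by omega) (by omega) (by omega)
            (fun h => ha1 h.symm)) huL1 huLa
    subst hj_eq
    have hwi : (e ∩ L i).card = 1 := hw i (by omega) (by omega)
    have : (e \ L 1) ∩ L i = e ∩ L i := by
      rw [hL1]
      ext x
      simp only [Finset.mem_inter, Finset.mem_sdiff, Finset.mem_singleton]
      constructor
      · rintro ⟨⟨h1, -⟩, h2⟩; exact ⟨h1, h2⟩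
      · rintro ⟨h1, h2⟩
        refine ⟨⟨h1, fun hxu => ?_⟩, h2⟩
        subst hxu
        exact Finset.disjoint_left.1
          (hL.layer_disjoint 1 i (by omega) (by omega) (by omega) (by omega) (by omega))
          huL1 h2
    rw [this, hwi]
  refine ⟨part1, ⟨?_, ?_⟩, ?_, ?_, ?_⟩
  -- |S| = |F|
  · apply Finset.card_image_of_injOn
    intro e he e' he' heq
    have hue : u ∈ e := ((hFmem e).1 he).2
    have hue' : u ∈ e' := ((hFmem e').1 he').2
    have h1 : insert u (e \ L 1) = e := by
      rw [hL1]; ext x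
      simp only [Finset.mem_insert, Finset.mem_sdiff, Finset.mem_singleton]
      constructor
      · rintro (rfl | ⟨h, -⟩) <;> [exact hue; exact h]
      · intro hx
        by_cases hxu : x = u
        · exact Or.inl hxu
        · exact Or.inr ⟨hx, hxu⟩
    have h2 : insert u (e' \ L 1) = e' := by
      rw [hL1]; ext x
      simp only [Finset.mem_insert, Finset.mem_sdiff, Finset.mem_singleton]
      constructor
      · rintro (rfl | ⟨h, -⟩) <;> [exact hue'; exact h]
      · intro hx
        by_cases hxu : x = u
        · exact Or.inl hxu
        · exact Or.inr ⟨hx, hxu⟩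
    rw [← h1, ← h2]
    exact congrArg (insert u) heq
  -- |F| ≤ Δ
  · have : (es.toFinset.filter fun e => (e ∩ L 1).Nonempty) =
        es.toFinset.filter fun e => u ∈ e := by
      apply Finset.filter_congr
      intro e he
      rw [hL1]
      constructor
      · rintro ⟨x, hx⟩
        have hx' := Finset.mem_inter.1 hx
        exact (Finset.mem_singleton.1 hx'.2) ▸ hx'.1
      · intro h
        exact ⟨u, Finset.mem_inter.2 ⟨h, Finset.mem_singleton_self u⟩⟩
    rw [this]
    have := hdeg u
    unfold vdeg at this
    convert this using 2
  -- coverage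
  · ext e
    constructor
    · intro he
      have hees : e ∈ es := List.mem_toFinset.1 he
      by_cases hue : u ∈ e
      · exact Finset.mem_union_left _ ((hFmem e).2 ⟨hees, hue⟩)
      · obtain ⟨j, hj, hgj⟩ := List.mem_iff_getElem.1 hees
        have hgj' : es.getD j ∅ = e := by rw [List.getD_eq_getElem es ∅ hj]; exact hgj
        obtain ⟨s, hins, hus, hInd⟩ := covered (by omega) hvo hu0 j hj (by rw [hgj']; exact hue)
        apply Finset.mem_union_right
        apply Finset.mem_biUnion.2
        refine ⟨s, ?_, ?_⟩
        · apply Finset.mem_image.2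
          refine ⟨insert u s, (hFmem _).2 ⟨hins, Finset.mem_insert_self u s⟩, ?_⟩
          rw [hL1]
          ext x
          simp only [Finset.mem_sdiff, Finset.mem_insert, Finset.mem_singleton]
          constructor
          · rintro ⟨rfl | h, h2⟩ <;> [exact absurd rfl h2; exact h]
          · intro hx
            exact ⟨Or.inr hx, fun h => hus (h ▸ hx)⟩
        · unfold inducedTree
          apply Finset.mem_image.2
          exact ⟨j, Finset.mem_filter.2 ⟨Finset.mem_range.2 hj, hInd⟩, hgj'⟩
    · intro he
      rcases Finset.mem_union.1 he with h | h
      · exact Finset.mem_of_mem_filter e h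
      · obtain ⟨s, -, hmem⟩ := Finset.mem_biUnion.1 h
        unfold inducedTree at hmem
        obtain ⟨j, hj, rfl⟩ := Finset.mem_image.1 hmem
        have hj' := Finset.mem_range.1 (Finset.mem_filter.1 hj).1
        exact List.mem_toFinset.2 (getD_mem_of_lt hj')
  -- Disjoint F (inducedTree es s)
  · intro s hs
    obtain ⟨hus, hins, -⟩ := hSmem s hs
    rw [Finset.disjoint_left]
    intro e heF heI
    have hue : u ∈ e := ((hFmem e).1 heF).2
    unfold inducedTree at heI
    obtain ⟨j, hj, rfl⟩ := Finset.mem_image.1 heI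
    exact (induced_no_u hvo hu0 hus (Finset.mem_filter.1 hj).2).1 hue
  -- pairwise disjoint induced trees
  · intro s hs s' hs' hss
    obtain ⟨hus, hins, -⟩ := hSmem s hs
    obtain ⟨hus', hins', -⟩ := hSmem s' hs'
    rw [Finset.disjoint_left]
    intro e he he'
    unfold inducedTree at he he'
    obtain ⟨j, hj, hgj⟩ := Finset.mem_image.1 he
    obtain ⟨j', hj', hgj'⟩ := Finset.mem_image.1 he'
    have hjlen := Finset.mem_range.1 (Finset.mem_filter.1 hj).1
    have hj'len := Finset.mem_range.1 (Finset.mem_filter.1 hj').1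
    have hjj : j = j' := by
      have h1 : es[j] = es[j'] := by
        rw [← List.getD_eq_getElem es ∅ hjlen, ← List.getD_eq_getElem es ∅ hj'len, hgj, hgj']
      exact (List.Nodup.getElem_inj_iff hnd).1 h1
    subst hjj
    exact hss (induced_unique hvo hu0 hus hus' hins hins' j
      (Finset.mem_filter.1 hj).2 (Finset.mem_filter.1 hj').2)
end

section
/- For every integer k ≥ 2 and every ε > 0 there exist n_0 and θ_0 > 0 such that for all 0 < θ ≤ θ_0 and n ≥ n_0: in every k-graph H on n vertices, at most ε·C(n, k) edges of H are not θ-extensible. -/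
open Finset

attribute [local instance] Classical.propDecidable

variable {α : Type*}

/-- `Q` describes a copy of `K^(k)(2)` in `H`: `Q` is a set of `k` pairwise disjoint pairs of
vertices such that every transversal (one vertex from each pair) is an edge of `H`. -/
def IsK2Copy [DecidableEq α] (k : ℕ) (H : Finset (Finset α)) (Q : Finset (Finset α)) : Prop :=
  Q.card = k ∧ (∀ p ∈ Q, p.card = 2) ∧
  (∀ p ∈ Q, ∀ q ∈ Q, p ≠ q → Disjoint p q) ∧
  (∀ e : Finset α, e ⊆ Q.sup id → (∀ p ∈ Q, (e ∩ p).card = 1) → e ∈ H)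

/-- `d^K_H(e)`: the number of copies of `K^(k)(2)` in `H` containing the edge `e`. -/
noncomputable def extCount [Fintype α] [DecidableEq α] (k : ℕ) (H : Finset (Finset α))
    (e : Finset α) : ℕ :=
  (Finset.univ.filter fun Q : Finset (Finset α) =>
    IsK2Copy k H Q ∧ e ⊆ Q.sup id ∧ ∀ p ∈ Q, (e ∩ p).card = 1).card

/-
Let `B` be the set of edges of `H` that are not `θ`-extensible and suppose `#B > ε·C(n, k)`, so
that the ordered edges of `B` have density at least `c = ε / (2^k k!)` among the `k`-tuples of
vertices. One application of Cauchy–Schwarz per coordinate shows that for random `k`-tuples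
`x, y` all `2^k` corners (`x i` or `y i` in each coordinate) are ordered edges of `B` with
probability at least `c^(2^k)`. At most a fraction `k / n` of the pairs have some `x i = y i`;
every other such pair spans a copy of `K^(k)(2)` in `H` through the edge `{x 1, …, x k}` of `B`,
and each such (edge, copy) incidence comes from at most `k^k` pairs. Hence the sum of `d^K_H(e)`
over `e ∈ B` is at least `(c^(2^k) - k/n) n^(2k) / k^k`, whereas non-extensibility bounds it by
`#B · θ · C(n - k, k) ≤ θ n^(2k)`.
-/

open Function
open scoped BigOperators

namespace NonextensibleEdges

variable {k : ℕ}

lemma sq_expect_le_expect_sq {ι : Type*} (s : Finset ι) (hs : s.Nonempty) (f : ι → ℝ) :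
    (𝔼 i ∈ s, f i) ^ 2 ≤ 𝔼 i ∈ s, f i ^ 2 := by
  simpa [Finset.expect_const hs] using Finset.expect_mul_sq_le_sq_mul_sq s f 1

section Resampling

variable [Fintype α] [Nonempty α]

lemma expect_apply_self_eq_expect_expect (j : Fin k) {g : (Fin k → α) → α → ℝ}
    (hg : ∀ y s t, g (update y j s) t = g y t) :
    𝔼 y, g y (y j) = 𝔼 y, 𝔼 t, g y t := by
  have swap : Involutive fun p : (Fin k → α) × α => (update p.1 j p.2, p.1 j) := by
    intro p
    simp
  calc 𝔼 y, g y (y j) = 𝔼 y, 𝔼 _t : α, g y (y j) := by simp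
    _ = 𝔼 p : (Fin k → α) × α, g p.1 (p.1 j) := by
      rw [← Finset.expect_product', univ_product_univ]
    _ = 𝔼 p : (Fin k → α) × α, g p.1 p.2 :=
      Fintype.expect_equiv swap.toPerm _ _ fun p => by simp [hg]
    _ = 𝔼 y, 𝔼 t, g y t := by
      rw [← Finset.expect_product', univ_product_univ]

/-- Cauchy–Schwarz after averaging out coordinate `j` of `x`: with
`P x y = 𝔼 s, F (update x j s) y`, the left side is `(𝔼 P)^2` and the right side is `𝔼 P^2`. -/
lemma sq_expect_le_expect_mul_update (j : Fin k) {F : (Fin k → α) → (Fin k → α) → ℝ}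
    (hF : ∀ x y t, F x (update y j t) = F x y) :
    (𝔼 x, 𝔼 y, F x y) ^ 2 ≤ 𝔼 x, 𝔼 y, F x y * F (update x j (y j)) y := by
  set P := fun x y => 𝔼 s, F (update x j s) y
  have hP : ∀ x y s, P (update x j s) y = P x y := by simp [P]
  have hmean : 𝔼 x, 𝔼 y, F x y = 𝔼 y, 𝔼 x, P x y := by
    rw [Finset.expect_comm]
    refine Finset.expect_congr rfl fun y _ => ?_
    simpa using expect_apply_self_eq_expect_expect j (g := fun x s => F (update x j s) y)
      (by simp)
  have hsq : 𝔼 x, 𝔼 y, F x y * F (update x j (y j)) y = 𝔼 y, 𝔼 x, P x y ^ 2 := by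
    calc _ = 𝔼 x, 𝔼 y, F x y * P x y := by
          refine Finset.expect_congr rfl fun x _ => ?_
          rw [expect_apply_self_eq_expect_expect j (g := fun y t => F x y * F (update x j t) y)
            (by simp [hF])]
          simp only [P, Finset.mul_expect]
      _ = 𝔼 y, 𝔼 x, F x y * P x y := Finset.expect_comm ..
      _ = 𝔼 y, 𝔼 x, P x y ^ 2 := by
          refine Finset.expect_congr rfl fun y _ => ?_
          have := expect_apply_self_eq_expect_expect j
            (g := fun x s => F (update x j s) y * P x y) (by simp [hP])
          simp only [update_eq_self] at this
          rw [this]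
          simp only [P, sq, Finset.expect_mul]
  rw [hmean, hsq]
  calc (𝔼 y, 𝔼 x, P x y) ^ 2 ≤ 𝔼 y, (𝔼 x, P x y) ^ 2 := sq_expect_le_expect_sq _ univ_nonempty _
    _ ≤ 𝔼 y, 𝔼 x, P x y ^ 2 :=
      Finset.expect_le_expect fun y _ => sq_expect_le_expect_sq _ univ_nonempty _

end Resampling

def corner (x y : Fin k → α) (ω : Fin k → Bool) : Fin k → α := fun i => if ω i then y i else x i

lemma corner_update_snd {x y : Fin k → α} {ω : Fin k → Bool} {j : Fin k} (hω : ω j = false)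
    (t : α) : corner x (update y j t) ω = corner x y ω := by
  funext i
  rcases eq_or_ne i j with rfl | hij <;> simp [corner, *]

lemma corner_update_true (x y : Fin k → α) (ω : Fin k → Bool) (j : Fin k) :
    corner x y (update ω j true) = corner (update x j (y j)) y ω := by
  funext i
  rcases eq_or_ne i j with rfl | hij <;> simp [corner, *]

lemma corner_false (x y : Fin k → α) : corner x y (fun _ => false) = x := rfl

variable (k) in
def lowerCorners (j : ℕ) : Finset (Fin k → Bool) := {ω | ∀ i : Fin k, j ≤ i → ω i = false}

lemma lowerCorners_succ (j : Fin k) :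
    lowerCorners k (j + 1) =
      lowerCorners k j ∪ (lowerCorners k j).image (update · j true) := by
  ext ω
  simp only [lowerCorners, mem_union, mem_image, mem_filter, mem_univ, true_and]
  constructor
  · intro h
    cases hj : ω j
    · left
      intro i hi
      rcases eq_or_ne i j with rfl | hij
      · exact hj
      · exact h i (by omega)
    · right
      refine ⟨update ω j false, fun i hi => ?_, by simp [← hj]⟩
      rcases eq_or_ne i j with rfl | hij
      · simp
      · simpa [hij] using h i (by omega)
  · rintro (h | ⟨ω, h, rfl⟩) i hi
    · exact h i (by omega)
    · have hij : i ≠ j := by rintro rfl; omega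
      simpa [hij] using h i (by omega)

lemma prod_lowerCorners_succ (f : (Fin k → α) → ℝ) (j : Fin k) (x y : Fin k → α) :
    ∏ ω ∈ lowerCorners k (j + 1), f (corner x y ω) =
      (∏ ω ∈ lowerCorners k j, f (corner x y ω)) *
        ∏ ω ∈ lowerCorners k j, f (corner (update x j (y j)) y ω) := by
  have hj : ∀ ω ∈ lowerCorners k j, ω j = false := fun ω hω => (mem_filter.mp hω).2 j le_rfl
  have hdisj : Disjoint (lowerCorners k j) ((lowerCorners k j).image (update · j true)) := by
    simp only [disjoint_left, mem_image, not_exists, not_and]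
    intro ω hω ω' _ h
    simpa [← h] using hj ω hω
  have hinj : Set.InjOn (update · j true) (lowerCorners k j : Set (Fin k → Bool)) := by
    intro ω hω ω' hω' h
    funext i
    rcases eq_or_ne i j with rfl | hij
    · rw [hj ω hω, hj ω' hω']
    · simpa [hij] using congrFun h i
  rw [lowerCorners_succ, prod_union hdisj, prod_image hinj]
  simp only [corner_update_true]

section BoxDensity

variable [Fintype α] (f : (Fin k → α) → ℝ)

noncomputable def boxDensity (j : ℕ) : ℝ := 𝔼 x, 𝔼 y, ∏ ω ∈ lowerCorners k j, f (corner x y ω)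

lemma boxDensity_zero [Nonempty α] : boxDensity f 0 = 𝔼 z, f z := by
  have : lowerCorners k 0 = {fun _ => false} := by
    ext ω
    simp [lowerCorners, funext_iff]
  simp [boxDensity, this, corner_false]

lemma boxDensity_self : boxDensity f k = 𝔼 x, 𝔼 y, ∏ ω, f (corner x y ω) := by
  have : lowerCorners k k = univ := by
    ext ω
    simp [lowerCorners]
  simp [boxDensity, this]

lemma sq_boxDensity_le [Nonempty α] (j : Fin k) : boxDensity f j ^ 2 ≤ boxDensity f (j + 1) := by
  simp only [boxDensity, prod_lowerCorners_succ]
  refine sq_expect_le_expect_mul_update j fun x y t => prod_congr rfl fun ω hω => ?_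
  rw [corner_update_snd ((mem_filter.mp hω).2 j le_rfl)]

lemma pow_boxDensity_zero_le [Nonempty α] (hf : ∀ z, 0 ≤ f z) {j : ℕ} (hj : j ≤ k) :
    boxDensity f 0 ^ 2 ^ j ≤ boxDensity f j := by
  induction j with
  | zero => simp
  | succ j ih =>
    calc boxDensity f 0 ^ 2 ^ (j + 1) = (boxDensity f 0 ^ 2 ^ j) ^ 2 := by ring
      _ ≤ boxDensity f j ^ 2 := by
        gcongr
        · rw [boxDensity_zero]
          exact pow_nonneg (Finset.expect_nonneg fun z _ => hf z) _
        · exact ih (by omega)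
      _ ≤ boxDensity f (j + 1) := sq_boxDensity_le f ⟨j, by omega⟩

theorem expect_pow_le_expect_prod_corner [Nonempty α] (hf : ∀ z, 0 ≤ f z) :
    (𝔼 z, f z) ^ 2 ^ k ≤ 𝔼 x, 𝔼 y, ∏ ω, f (corner x y ω) := by
  simpa [boxDensity_zero, boxDensity_self] using pow_boxDensity_zero_le f hf le_rfl

end BoxDensity

section Copies

variable [DecidableEq α] {B : Finset (Finset α)}

def IsOrderedEdge (B : Finset (Finset α)) (z : Fin k → α) : Prop :=
  Injective z ∧ univ.image z ∈ B

lemma card_le_card_filter_isOrderedEdge [Fintype α] (hB : ∀ e ∈ B, #e = k) :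
    #B ≤ #{z : Fin k → α | IsOrderedEdge B z} := by
  refine card_le_card_of_surjOn (fun z => univ.image z) fun e he => ?_
  set φ := (e.equivFinOfCardEq (hB e he)).symm
  have himage : univ.image (fun i => (φ i : α)) = e := by
    ext a
    simp only [mem_image, mem_univ, true_and]
    exact ⟨by rintro ⟨i, rfl⟩; exact (φ i).2, fun ha => ⟨φ.symm ⟨a, ha⟩, by simp⟩⟩
  refine ⟨_, mem_filter.mpr ⟨mem_univ _, Subtype.val_injective.comp φ.injective, ?_⟩, himage⟩
  exact (congrArg (· ∈ B) himage).mpr he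

def IsLabelledCopy (B : Finset (Finset α)) (x y : Fin k → α) : Prop :=
  (∀ ω, IsOrderedEdge B (corner x y ω)) ∧ ∀ i, x i ≠ y i

def pairs (x y : Fin k → α) : Finset (Finset α) := univ.image fun i => {x i, y i}

lemma image_fst_subset_sup_pairs (x y : Fin k → α) : univ.image x ⊆ (pairs x y).sup id := by
  intro a ha
  obtain ⟨i, -, rfl⟩ := mem_image.mp ha
  exact mem_sup.mpr ⟨_, mem_image_of_mem _ (mem_univ i), mem_insert_self _ _⟩

lemma image_corner_eq_of_transversal {x y : Fin k → α} {e : Finset α}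
    (hsub : e ⊆ (pairs x y).sup id) (hcard : ∀ p ∈ pairs x y, #(e ∩ p) = 1) :
    univ.image (corner x y fun i => decide (y i ∈ e)) = e := by
  have hpair : ∀ i, #(e ∩ {x i, y i}) = 1 := fun i => hcard _ (mem_image_of_mem _ (mem_univ i))
  have hx : ∀ i, y i ∉ e → x i ∈ e := by
    intro i hy
    obtain ⟨a, ha⟩ := card_eq_one.mp (hpair i)
    have hae : a ∈ e ∩ {x i, y i} := ha ▸ mem_singleton_self a
    simp only [mem_inter, mem_insert, mem_singleton] at hae
    rcases hae with ⟨hae, rfl | rfl⟩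
    · exact hae
    · exact (hy hae).elim
  have hxy : ∀ i, x i ∈ e → y i ∈ e → x i = y i := fun i hx hy =>
    card_le_one.mp (hpair i).le _ (mem_inter.mpr ⟨hx, mem_insert_self _ _⟩) _
      (mem_inter.mpr ⟨hy, mem_insert_of_mem (mem_singleton_self _)⟩)
  ext a
  simp only [mem_image, mem_univ, true_and, corner]
  constructor
  · rintro ⟨i, rfl⟩
    by_cases hy : y i ∈ e <;> simp [hy, hx]
  · intro ha
    obtain ⟨p, hp, hap⟩ := mem_sup.mp (hsub ha)
    obtain ⟨i, -, rfl⟩ := mem_image.mp hp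
    refine ⟨i, ?_⟩
    simp only [id, mem_insert, mem_singleton] at hap
    by_cases hy : y i ∈ e
    · rcases hap with rfl | rfl
      · simp [hy, hxy i ha hy]
      · simp [hy]
    · rcases hap with rfl | rfl <;> simp_all

lemma _root_.IsK2Copy.mono {H Q : Finset (Finset α)} (hBH : B ⊆ H) (h : IsK2Copy k B Q) :
    IsK2Copy k H Q :=
  ⟨h.1, h.2.1, h.2.2.1, fun e hsub hcard => hBH (h.2.2.2 e hsub hcard)⟩

namespace IsLabelledCopy

variable {x y : Fin k → α}

lemma injective_fst (h : IsLabelledCopy B x y) : Injective x := (h.1 fun _ => false).1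

lemma injective_snd (h : IsLabelledCopy B x y) : Injective y := (h.1 fun _ => true).1

lemma fst_ne_snd (h : IsLabelledCopy B x y) (i i' : Fin k) : x i ≠ y i' := by
  rcases eq_or_ne i i' with rfl | hii'
  · exact h.2 i
  · intro hxy
    have hcorner := (h.1 (update (fun _ => false) i' true)).1 (a₁ := i) (a₂ := i')
    simp [corner, hii', hxy] at hcorner

lemma card_image_fst_inter (h : IsLabelledCopy B x y) {p : Finset α} (hp : p ∈ pairs x y) :
    #(univ.image x ∩ p) = 1 := by
  obtain ⟨i, -, rfl⟩ := mem_image.mp hp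
  rw [card_eq_one]
  refine ⟨x i, ?_⟩
  ext a
  simp only [mem_inter, mem_image, mem_univ, true_and, mem_insert, mem_singleton]
  constructor
  · rintro ⟨⟨i', rfl⟩, hi' | hi'⟩
    · rw [h.injective_fst hi']
    · exact (h.fst_ne_snd i' i hi').elim
  · rintro rfl
    exact ⟨⟨i, rfl⟩, Or.inl rfl⟩

lemma isK2Copy (h : IsLabelledCopy B x y) : IsK2Copy k B (pairs x y) := by
  have hpair : ∀ {i i' a}, a ∈ ({x i, y i} : Finset α) → a ∈ ({x i', y i'} : Finset α) →
      i = i' := by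
    simp only [mem_insert, mem_singleton]
    rintro i i' a (rfl | rfl) (ha | ha)
    exacts [h.injective_fst ha, (h.fst_ne_snd i i' ha).elim, (h.fst_ne_snd i' i ha.symm).elim,
      h.injective_snd ha]
  refine ⟨?_, ?_, ?_, ?_⟩
  · rw [pairs, card_image_of_injective, card_univ, Fintype.card_fin]
    intro i i' hii'
    have : x i ∈ ({x i', y i'} : Finset α) := by
      simpa using congrArg (x i ∈ ·) hii'
    exact hpair (mem_insert_self _ _) this
  · intro p hp
    obtain ⟨i, -, rfl⟩ := mem_image.mp hp
    exact card_pair (h.2 i)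
  · intro p hp q hq hpq
    obtain ⟨i, -, rfl⟩ := mem_image.mp hp
    obtain ⟨i', -, rfl⟩ := mem_image.mp hq
    exact disjoint_left.mpr fun _ ha ha' => hpq (by rw [hpair ha ha'])
  · intro e hsub hcard
    rw [← image_corner_eq_of_transversal hsub hcard]
    exact (h.1 _).2

lemma snd_eq_of_pairs_eq {y' : Fin k → α} (h : IsLabelledCopy B x y) (h' : IsLabelledCopy B x y')
    (hp : pairs x y = pairs x y') : y = y' := by
  funext i
  have hmem : ({x i, y i} : Finset α) ∈ pairs x y' := hp ▸ mem_image_of_mem _ (mem_univ i)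
  obtain ⟨i', -, hi'⟩ := mem_image.mp hmem
  have hxi : x i ∈ ({x i', y' i'} : Finset α) := hi' ▸ mem_insert_self _ _
  obtain rfl : i' = i := by
    rcases mem_insert.mp hxi with hx | hx
    · exact (h.injective_fst hx).symm
    · exact (h'.fst_ne_snd i i' (mem_singleton.mp hx)).elim
  have hyi : y i' ∈ ({x i', y' i'} : Finset α) := hi' ▸ mem_insert_of_mem (mem_singleton_self _)
  rcases mem_insert.mp hyi with hy | hy
  · exact (h.2 i' hy.symm).elim
  · exact mem_singleton.mp hy

end IsLabelledCopy

lemma prod_ite_isOrderedEdge_corner_le (x y : Fin k → α) :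
    ∏ ω, (if IsOrderedEdge B (corner x y ω) then (1 : ℝ) else 0) ≤
      (if IsLabelledCopy B x y then 1 else 0) + ∑ i, if x i = y i then 1 else 0 := by
  have hdiag : 0 ≤ ∑ i, if x i = y i then (1 : ℝ) else 0 := by positivity
  rw [Fintype.prod_boole]
  split_ifs with hall hcopy
  · linarith
  · obtain ⟨i, hi⟩ : ∃ i, x i = y i := by simpa [IsLabelledCopy, hall] using hcopy
    have := single_le_sum (f := fun i => if x i = y i then (1 : ℝ) else 0)
      (fun _ _ => by positivity) (mem_univ i)
    simp only [hi, if_true] at this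
    linarith
  all_goals positivity

end Copies

section Counting

variable [Fintype α] [DecidableEq α] {B H : Finset (Finset α)}

variable (k) in
noncomputable def labelledCopies (B : Finset (Finset α)) : Finset ((Fin k → α) × (Fin k → α)) :=
  {p | IsLabelledCopy B p.1 p.2}

lemma card_labelledCopies_filter_le (hBH : B ⊆ H) {e : Finset α} (he : #e = k) :
    #{p ∈ labelledCopies k B | univ.image p.1 = e} ≤ k ^ k * extCount k H e := by
  unfold extCount
  refine card_le_mul_card_image_of_maps_to (f := fun p => pairs p.1 p.2) ?_ _ fun Q _ => ?_
  · intro p hp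
    simp only [labelledCopies, mem_filter, mem_univ, true_and] at hp ⊢
    obtain ⟨hcopy, rfl⟩ := hp
    exact ⟨hcopy.isK2Copy.mono hBH, image_fst_subset_sup_pairs _ _,
      fun q hq => hcopy.card_image_fst_inter hq⟩
  calc _ ≤ #(Fintype.piFinset fun _ : Fin k => e) := by
        refine card_le_card_of_injOn Prod.fst (fun p hp => ?_) fun p hp p' hp' hpp' => ?_
        · simp only [labelledCopies, coe_filter, mem_filter, mem_univ, true_and,
            Set.mem_ofPred_eq] at hp
          simp [← hp.1.2]
        · simp only [labelledCopies, coe_filter, mem_filter, mem_univ, true_and,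
            Set.mem_ofPred_eq] at hp hp'
          refine Prod.ext hpp' (hp.1.1.snd_eq_of_pairs_eq ?_ ?_)
          · rw [hpp']
            exact hp'.1.1
          · rw [hp.2, hpp', hp'.2]
    _ = k ^ k := by simp [he]

lemma card_labelledCopies_le (hBH : B ⊆ H) (hB : ∀ e ∈ B, #e = k) :
    #(labelledCopies k B) ≤ k ^ k * ∑ e ∈ B, extCount k H e := by
  rw [card_eq_sum_card_fiberwise (f := fun p => univ.image p.1) (t := B), mul_sum]
  · exact sum_le_sum fun e he => card_labelledCopies_filter_le hBH (hB e he)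
  · intro p hp
    exact ((mem_filter.mp hp).2.1 fun _ => false).2

lemma expect_ite_labelledCopy :
    𝔼 x : Fin k → α, 𝔼 y : Fin k → α, (if IsLabelledCopy B x y then (1 : ℝ) else 0) =
      #(labelledCopies k B) / Fintype.card α ^ (2 * k) := by
  rw [← Finset.expect_product', univ_product_univ, Fintype.expect_eq_sum_div_card, sum_boole]
  simp [labelledCopies, two_mul, pow_add]

variable [Nonempty α]

lemma expect_expect_ite_apply_eq (i : Fin k) :
    𝔼 x : Fin k → α, 𝔼 y : Fin k → α, (if x i = y i then (1 : ℝ) else 0) = 1 / Fintype.card α := by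
  have h (x : Fin k → α) : 𝔼 y : Fin k → α, (if x i = y i then (1 : ℝ) else 0) =
      𝔼 t : α, if x i = t then (1 : ℝ) else 0 := by
    simpa using expect_apply_self_eq_expect_expect i
      (g := fun _ t => if x i = t then (1 : ℝ) else 0) fun _ _ _ => rfl
  simp [h]

lemma expect_prod_corner_le :
    𝔼 x : Fin k → α, 𝔼 y : Fin k → α,
        ∏ ω, (if IsOrderedEdge B (corner x y ω) then (1 : ℝ) else 0) ≤
      #(labelledCopies k B) / Fintype.card α ^ (2 * k) + k / Fintype.card α := by
  calc _ ≤ 𝔼 x : Fin k → α, 𝔼 y : Fin k → α, ((if IsLabelledCopy B x y then (1 : ℝ) else 0) +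
        ∑ i, if x i = y i then 1 else 0) :=
      expect_le_expect fun x _ => expect_le_expect fun y _ => prod_ite_isOrderedEdge_corner_le x y
    _ = _ := by
      simp only [expect_add_distrib, expect_sum_comm, expect_ite_labelledCopy,
        expect_expect_ite_apply_eq, sum_const, card_univ, Fintype.card_fin, nsmul_eq_mul]
      ring

lemma card_div_pow_le_expect_isOrderedEdge (hB : ∀ e ∈ B, #e = k) :
    (#B : ℝ) / Fintype.card α ^ k ≤
      𝔼 z : Fin k → α, if IsOrderedEdge B z then (1 : ℝ) else 0 := by
  rw [Fintype.expect_eq_sum_div_card, sum_boole, Fintype.card_fun, Fintype.card_fin]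
  push_cast
  gcongr
  exact_mod_cast card_le_card_filter_isOrderedEdge hB

theorem density_pow_sub_le_sum_extCount (hBH : B ⊆ H) (hB : ∀ e ∈ B, #e = k) :
    ((#B : ℝ) / Fintype.card α ^ k) ^ 2 ^ k - k / Fintype.card α ≤
      k ^ k * (∑ e ∈ B, (extCount k H e : ℝ)) / Fintype.card α ^ (2 * k) := by
  have hdensity :=
    pow_le_pow_left₀ (by positivity) (card_div_pow_le_expect_isOrderedEdge hB) (2 ^ k)
  have hbox := expect_pow_le_expect_prod_corner
    (fun z : Fin k → α => if IsOrderedEdge B z then (1 : ℝ) else 0) fun z => by positivity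
  have hdiag := expect_prod_corner_le (k := k) (B := B)
  have hcopies : (#(labelledCopies k B) : ℝ) ≤ k ^ k * ∑ e ∈ B, (extCount k H e : ℝ) := by
    exact_mod_cast card_labelledCopies_le hBH hB
  calc _ ≤ (#(labelledCopies k B) : ℝ) / Fintype.card α ^ (2 * k) := by linarith
    _ ≤ _ := by gcongr

end Counting

lemma card_le_pow_of_forall_card_eq [Fintype α] {B : Finset (Finset α)} (hB : ∀ e ∈ B, #e = k) :
    #B ≤ Fintype.card α ^ k := by
  have : B ⊆ powersetCard k univ := fun e he => mem_powersetCard.mpr ⟨subset_univ e, hB e he⟩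
  exact (card_le_card this).trans (by simp [Nat.choose_le_pow])

lemma sum_extCount_nonextensible_le {n : ℕ} {H : Finset (Finset (Fin n))}
    (hH : ∀ e ∈ H, #e = k) {θ θ₀ : ℝ} (hθ : θ ≤ θ₀) (hθ₀ : 0 ≤ θ₀) :
    ∑ e ∈ H.filter (fun e => ¬ θ * (((n - k).choose k : ℕ) : ℝ) ≤ (extCount k H e : ℝ)),
      (extCount k H e : ℝ) ≤ θ₀ * n ^ (2 * k) := by
  set B := H.filter fun e => ¬ θ * (((n - k).choose k : ℕ) : ℝ) ≤ (extCount k H e : ℝ)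
  have hBn : (#B : ℝ) ≤ n ^ k := by
    have := card_le_pow_of_forall_card_eq (B := B) fun e he => hH e (mem_filter.mp he).1
    rw [Fintype.card_fin] at this
    exact_mod_cast this
  have hCn : (((n - k).choose k : ℕ) : ℝ) ≤ n ^ k := by
    exact_mod_cast (Nat.choose_le_pow _ _).trans (Nat.pow_le_pow_left (Nat.sub_le n k) k)
  calc _ ≤ #B * (θ * (((n - k).choose k : ℕ) : ℝ)) := by
        rw [← nsmul_eq_mul, ← sum_const]
        gcongr with e he
        exact (not_le.mp (mem_filter.mp he).2).le
    _ ≤ #B * (θ₀ * (((n - k).choose k : ℕ) : ℝ)) := by gcongr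
    _ ≤ n ^ k * (θ₀ * n ^ k) := by gcongr
    _ = θ₀ * n ^ (2 * k) := by ring

lemma pow_div_le_choose {n : ℕ} (h : 2 * k ≤ n) :
    (n : ℝ) ^ k / (2 ^ k * k.factorial) ≤ n.choose k := by
  calc (n : ℝ) ^ k / (2 ^ k * k.factorial) = (n / 2 : ℝ) ^ k / k.factorial := by
        rw [div_pow, div_div]
    _ ≤ ((n + 1 - k : ℕ) : ℝ) ^ k / k.factorial := by
        have hkn : (2 * k : ℝ) ≤ n := by exact_mod_cast h
        gcongr
        rw [Nat.cast_sub (by omega)]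
        push_cast
        linarith
    _ ≤ n.choose k := by exact_mod_cast Nat.pow_le_choose k n

end NonextensibleEdges

open NonextensibleEdges

theorem few_nonextensible_edges_general (k : ℕ) (ε : ℝ) (hε : 0 < ε) :
    ∃ (n₀ : ℕ) (θ₀ : ℝ), 0 < θ₀ ∧
      ∀ θ : ℝ, 0 < θ → θ ≤ θ₀ → ∀ n : ℕ, n₀ ≤ n →
      ∀ H : Finset (Finset (Fin n)), (∀ e ∈ H, e.card = k) →
      ((H.filter fun e =>
          ¬ θ * (((n - k).choose k : ℕ) : ℝ) ≤ (extCount k H e : ℝ)).card : ℝ)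
        ≤ ε * (n.choose k : ℝ) := by
  set δ : ℝ := (ε / (2 ^ k * k.factorial)) ^ 2 ^ k
  have hδ : 0 < δ := by positivity
  have hkk : (0 : ℝ) < k ^ k := by exact_mod_cast Nat.pow_self_pos
  refine ⟨⌈2 * k / δ⌉₊ + 2 * k + 1, δ / (4 * k ^ k), by positivity,
    fun θ _ hθ n hn H hH => ?_⟩
  set B := H.filter fun e => ¬ θ * (((n - k).choose k : ℕ) : ℝ) ≤ (extCount k H e : ℝ)
  by_contra! hB
  have : Nonempty (Fin n) := ⟨⟨0, by omega⟩⟩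
  have hn0 : (0 : ℝ) < n := by exact_mod_cast (by omega : 0 < n)
  have hcount := density_pow_sub_le_sum_extCount (B := B) (filter_subset _ H)
    fun e he => hH e (mem_filter.mp he).1
  rw [Fintype.card_fin] at hcount
  have hdensity : δ ≤ ((#B : ℝ) / n ^ k) ^ 2 ^ k := by
    refine pow_le_pow_left₀ (by positivity) ?_ _
    rw [le_div_iff₀ (pow_pos hn0 k)]
    calc ε / (2 ^ k * k.factorial) * n ^ k = ε * (n ^ k / (2 ^ k * k.factorial)) := by ring
      _ ≤ ε * n.choose k := by gcongr; exact pow_div_le_choose (by omega)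
      _ ≤ #B := hB.le
  have hext : k ^ k * (∑ e ∈ B, (extCount k H e : ℝ)) / n ^ (2 * k) ≤ δ / 4 := by
    rw [div_le_iff₀ (by positivity)]
    calc _ ≤ k ^ k * (δ / (4 * k ^ k) * n ^ (2 * k)) := by
          gcongr
          exact sum_extCount_nonextensible_le hH hθ (by positivity)
      _ = δ / 4 * n ^ (2 * k) := by field_simp
  have hkn : (k : ℝ) / n ≤ δ / 2 := by
    have hlarge : (2 * k / δ : ℝ) ≤ n :=
      (Nat.le_ceil _).trans (by exact_mod_cast (by omega : ⌈(2 * k / δ : ℝ)⌉₊ ≤ n))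
    rw [div_le_iff₀ hδ] at hlarge
    rw [div_le_iff₀ hn0]
    linarith
  linarith

/-- For every `k ≥ 2` and `ε > 0` there exist `n₀` and `θ₀ > 0` such that
for all `0 < θ ≤ θ₀` and `n ≥ n₀`: in every `k`-graph `H` on `n` vertices, at most
`ε·C(n, k)` edges of `H` are not `θ`-extensible. -/
theorem few_nonextensible_edges (k : ℕ) (hk : 2 ≤ k) (ε : ℝ) (hε : 0 < ε) :
    ∃ (n₀ : ℕ) (θ₀ : ℝ), 0 < θ₀ ∧
      ∀ θ : ℝ, 0 < θ → θ ≤ θ₀ → ∀ n : ℕ, n₀ ≤ n →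
      ∀ H : Finset (Finset (Fin n)), (∀ e ∈ H, e.card = k) →
      ((H.filter fun e =>
          ¬ θ * (((n - k).choose k : ℕ) : ℝ) ≤ (extCount k H e : ℝ)).card : ℝ)
        ≤ ε * (n.choose k : ℝ) :=
  few_nonextensible_edges_general k ε hε
end

section
/- Let k, m ≥ 2 be integers, let d ∈ (0, 1), and let H be a k-partite k-graph with all k partition classes of size at most m. If H has at least d·m^k edges, then H has a non-empty subgraph H′ such that every (k−1)-set f in the shadow ∂H′ has degree at least dm/k in H′. -/
open Finset

attribute [local instance] Classical.propDecidable

variable {α : Type*}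

open Function
open scoped FinsetFamily

/-! A `(k-1)`-set in the shadow of a `k`-partite `k`-graph misses exactly one class and meets
every other class in a single vertex, so the shadow has at most `k m^(k-1)` members. Now
repeatedly delete all edges through a shadow set of degree below `c = dm/k`: each round removes
fewer than `c` edges and removes that set from the shadow for good, so fewer than
`c · k m^(k-1) = d m^k ≤ |H|` edges are ever deleted and the process stops at a nonempty
subgraph. -/

section Transversal

variable {ι : Type*} [DecidableEq α]

lemma card_le_prod_card_of_inter_card_eq_one (s : Finset ι) (V : ι → Finset α)
    (𝒯 : Finset (Finset α)) (hsub : ∀ t ∈ 𝒯, t ⊆ s.biUnion V)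
    (hone : ∀ t ∈ 𝒯, ∀ j ∈ s, #(t ∩ V j) = 1) :
    #𝒯 ≤ ∏ j ∈ s, #(V j) := by
  calc #𝒯 ≤ #(s.pi fun j => (V j).powersetCard 1) := by
        refine card_le_card_of_injOn (fun t j _ => t ∩ V j) (fun t ht => ?_) ?_
        · simpa [mem_pi, mem_powersetCard] using hone t ht
        · intro t ht t' ht' h
          have hrec : ∀ u ∈ 𝒯, u = s.biUnion fun j => u ∩ V j := fun u hu => by
            rw [← inter_biUnion, inter_eq_left.mpr (hsub u hu)]
          rw [hrec t ht, hrec t' ht']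
          exact biUnion_congr rfl fun j hj => congrFun (congrFun h j) hj
    _ = ∏ j ∈ s, #(V j) := by simp [card_pi, card_powersetCard]

end Transversal

section Partite

variable {ι : Type*} [Fintype ι] [DecidableEq α] (V : ι → Finset α)

lemma subset_biUnion_of_card_inter_eq_one (hV : Pairwise (Disjoint on V)) {e : Finset α}
    (he : #e = Fintype.card ι) (hpart : ∀ i, #(e ∩ V i) = 1) :
    e ⊆ univ.biUnion V := by
  refine inter_eq_left.mp (eq_of_subset_of_card_le inter_subset_left ?_)
  rw [inter_biUnion, card_biUnion fun i _ j _ hij => (hV hij).mono inter_subset_right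
    inter_subset_right]
  simp [hpart, he]

lemma erase_eq_sdiff_of_card_inter_eq_one {e W : Finset α} {a : α} (ha : a ∈ e ∩ W)
    (h : #(e ∩ W) = 1) : e.erase a = e \ W := by
  obtain ⟨b, hb⟩ := card_eq_one.mp h
  rw [hb, mem_singleton] at ha
  rw [← sdiff_inter_self_left, hb, ha, sdiff_singleton_eq_erase]

variable {H : Finset (Finset α)}

lemma shadow_subset_biUnion_image_sdiff (hcover : ∀ e ∈ H, e ⊆ univ.biUnion V)
    (hpart : ∀ e ∈ H, ∀ i, #(e ∩ V i) = 1) :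
    ∂ H ⊆ univ.biUnion fun i => H.image (· \ V i) := by
  intro t ht
  obtain ⟨e, he, a, ha, rfl⟩ := mem_shadow_iff.mp ht
  obtain ⟨i, -, hai⟩ := mem_biUnion.mp (hcover e he ha)
  rw [erase_eq_sdiff_of_card_inter_eq_one (mem_inter.mpr ⟨ha, hai⟩) (hpart e he i)]
  exact mem_biUnion.mpr ⟨i, mem_univ i, mem_image_of_mem _ he⟩

lemma card_image_sdiff_le_prod (hV : Pairwise (Disjoint on V))
    (hcover : ∀ e ∈ H, e ⊆ univ.biUnion V) (hpart : ∀ e ∈ H, ∀ i, #(e ∩ V i) = 1)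
    (i : ι) : #(H.image (· \ V i)) ≤ ∏ j ∈ univ.erase i, #(V j) := by
  refine card_le_prod_card_of_inter_card_eq_one _ V _ ?_ ?_ <;>
    simp only [mem_image, forall_exists_index, and_imp, forall_apply_eq_imp_iff₂]
  · intro e he x hx
    obtain ⟨hxe, hxi⟩ := mem_sdiff.mp hx
    obtain ⟨j, -, hxj⟩ := mem_biUnion.mp (hcover e he hxe)
    exact mem_biUnion.mpr ⟨j, mem_erase.mpr ⟨fun hji => hxi (hji ▸ hxj), mem_univ j⟩, hxj⟩
  · intro e he j hj
    rw [sdiff_inter_right_comm, sdiff_eq_self_of_disjoint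
      ((hV (ne_of_mem_erase hj)).mono_left inter_subset_right), hpart e he j]

lemma card_shadow_le (hV : Pairwise (Disjoint on V)) {m : ℕ} (hVsize : ∀ i, #(V i) ≤ m)
    (hcover : ∀ e ∈ H, e ⊆ univ.biUnion V) (hpart : ∀ e ∈ H, ∀ i, #(e ∩ V i) = 1) :
    #(∂ H) ≤ Fintype.card ι * m ^ (Fintype.card ι - 1) := by
  calc #(∂ H) ≤ #(univ.biUnion fun i => H.image (· \ V i)) :=
        card_le_card (shadow_subset_biUnion_image_sdiff V hcover hpart)
    _ ≤ ∑ i, ∏ j ∈ univ.erase i, #(V j) :=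
        card_biUnion_le.trans (sum_le_sum fun i _ => card_image_sdiff_le_prod V hV hcover hpart i)
    _ ≤ ∑ i : ι, m ^ (Fintype.card ι - 1) := by
        gcongr with i
        have := prod_le_pow_card (univ.erase i) _ _ fun j _ => hVsize j
        rwa [card_erase_of_mem (mem_univ i), card_univ] at this
    _ = Fintype.card ι * m ^ (Fintype.card ι - 1) := by simp

end Partite

lemma ssubset_shadow_filter_not_superset [DecidableEq α] {H : Finset (Finset α)} {t : Finset α}
    (ht : t ∈ ∂ H) : ∂ {e ∈ H | ¬t ⊆ e} ⊂ ∂ H := by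
  refine Finset.ssubset_iff_subset_ne.mpr ⟨shadow_mono (filter_subset _ _), fun h => ?_⟩
  obtain ⟨e, he, hte⟩ := exists_subset_of_mem_shadow (h ▸ ht)
  exact (mem_filter.mp he).2 hte

theorem exists_nonempty_subset_forall_mem_shadow_le_card_filter [DecidableEq α] {c : ℝ}
    (hc : 0 ≤ c) (H : Finset (Finset α)) (hne : H.Nonempty) (hH : c * #(∂ H) ≤ #H) :
    ∃ H' ⊆ H, H'.Nonempty ∧ ∀ t ∈ ∂ H', c ≤ #{e ∈ H' | t ⊆ e} := by
  induction H using strongInduction with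
  | H H ih =>
    by_cases hgood : ∀ t ∈ ∂ H, c ≤ #{e ∈ H | t ⊆ e}
    · exact ⟨H, Subset.refl H, hne, hgood⟩
    push Not at hgood
    obtain ⟨t, ht, hdeg⟩ := hgood
    set G := {e ∈ H | ¬t ⊆ e}
    have hGH : G ⊂ H := by
      obtain ⟨e, he, hte⟩ := exists_subset_of_mem_shadow ht
      exact filter_ssubset.mpr ⟨e, he, not_not.mpr hte⟩
    have hsplit : (#{e ∈ H | t ⊆ e} : ℝ) + #G = #H := by
      exact_mod_cast card_filter_add_card_filter_not _
    have hshadow : (#(∂ G) : ℝ) + 1 ≤ #(∂ H) := by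
      exact_mod_cast card_lt_card (ssubset_shadow_filter_not_superset ht)
    have hG : c * #(∂ G) < #G := by
      linarith [mul_le_mul_of_nonneg_left hshadow hc]
    have hGne : G.Nonempty := card_pos.mp <| by
      exact_mod_cast (by positivity : 0 ≤ c * #(∂ G)).trans_lt hG
    obtain ⟨H', hH'G, hH'⟩ := ih G hGH hGne hG.le
    exact ⟨H', hH'G.trans hGH.subset, hH'⟩

theorem cleaning_lemma_general [DecidableEq α] (k m : ℕ) (hk : 2 ≤ k) (hm : 2 ≤ m)
    (d : ℝ) (hd0 : 0 < d)
    (H : Finset (Finset α)) (hH : ∀ e ∈ H, e.card = k)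
    (V : Fin k → Finset α)
    (hVsize : ∀ i, (V i).card ≤ m)
    (hVdisj : ∀ i j, i ≠ j → Disjoint (V i) (V j))
    (hpart : ∀ e ∈ H, ∀ i, (e ∩ V i).card = 1)
    (hcount : d * (m : ℝ) ^ k ≤ (H.card : ℝ)) :
    ∃ H' : Finset (Finset α), H' ⊆ H ∧ H'.Nonempty ∧
      ∀ f : Finset α, f.card = k - 1 → (∃ e ∈ H', f ⊆ e) →
        d * (m : ℝ) / (k : ℝ) ≤ ((H'.filter fun e => f ⊆ e).card : ℝ) := by
  have hm0 : (0 : ℝ) < m := by positivity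
  have hk0 : (k : ℝ) ≠ 0 := by positivity
  have hcover : ∀ e ∈ H, e ⊆ univ.biUnion V := fun e he =>
    subset_biUnion_of_card_inter_eq_one V hVdisj (by simp [hH e he]) (hpart e he)
  have hshadow : (#(∂ H) : ℝ) ≤ k * m ^ (k - 1) := by
    exact_mod_cast (card_shadow_le V hVdisj hVsize hcover hpart).trans_eq (by simp)
  have hne : H.Nonempty := card_pos.mp <| by
    exact_mod_cast (by positivity : 0 < d * (m : ℝ) ^ k).trans_le hcount
  have hbound : d * m / k * #(∂ H) ≤ #H := calc
    d * m / k * #(∂ H) ≤ d * m / k * (k * m ^ (k - 1)) := by gcongr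
    _ = d * m ^ k := by rw [← pow_sub_one_mul (by omega : k ≠ 0)]; field_simp
    _ ≤ #H := hcount
  obtain ⟨H', hH'H, hH'ne, hdeg⟩ :=
    exists_nonempty_subset_forall_mem_shadow_le_card_filter (by positivity) H hne hbound
  refine ⟨H', hH'H, hH'ne, fun f hf ⟨e, he, hfe⟩ => hdeg f ?_⟩
  exact mem_shadow_iff_exists_mem_card_add_one.mpr
    ⟨e, he, hfe, by rw [hH e (hH'H he), hf]; omega⟩

/-- **Cleaning Lemma.** Let `k, m ≥ 2`, `d ∈ (0,1)`, and let `H` be a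
`k`-partite `k`-graph with all partition classes of size at most `m`. If `H` has at least
`d·m^k` edges, then `H` has a nonempty subgraph `H'` in which every `(k−1)`-set of the shadow
has degree at least `dm/k`. -/
theorem cleaning_lemma [DecidableEq α] (k m : ℕ) (hk : 2 ≤ k) (hm : 2 ≤ m)
    (d : ℝ) (hd0 : 0 < d) (hd1 : d < 1)
    (H : Finset (Finset α)) (hH : ∀ e ∈ H, e.card = k)
    (V : Fin k → Finset α)
    (hVsize : ∀ i, (V i).card ≤ m)
    (hVdisj : ∀ i j, i ≠ j → Disjoint (V i) (V j))
    (hpart : ∀ e ∈ H, ∀ i, (e ∩ V i).card = 1)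
    (hcount : d * (m : ℝ) ^ k ≤ (H.card : ℝ)) :
    ∃ H' : Finset (Finset α), H' ⊆ H ∧ H'.Nonempty ∧
      ∀ f : Finset α, f.card = k - 1 → (∃ e ∈ H', f ⊆ e) →
        d * (m : ℝ) / (k : ℝ) ≤ ((H'.filter fun e => f ⊆ e).card : ℝ) :=
  cleaning_lemma_general k m hk hm d hd0 H hH V hVsize hVdisj hpart hcount
end
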